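/- arXiv:cs/0610111 — 5 statements merged into one kernel-verified Lean document; each statement's English description precedes it below -/
import Mathlib

section
/- Let G = (V, E) be a finite simple graph with maximum vertex degree d*. Assign each edge (i,j) a nonnegative weight w_{ij}. Then there exists a matching M ⊆ E such that the total weight of M is at least 1/(d*+1) times the total weight of all edges: ∑_{(i,j)∈M} w_{ij} ≥ (1/(d*+1)) ∑_{(i,j)∈E} w_{ij}. -/
set_option linter.unusedSectionVars false
open scoped Classical

section VizingDev
variable {V : Type*} [Fintype V] [DecidableEq V]

structure EC (E : Finset (V × V)) (n : ℕ) where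
  c : V → V → Option ℕ
  symm : ∀ u v, c u v = c v u
  dom : ∀ u v i, c u v = some i → ((u, v) ∈ E ∨ (v, u) ∈ E)
  bnd : ∀ u v i, c u v = some i → i < n
  prop : ∀ u v w i, c u v = some i → c u w = some i → v = w

def Missing (c : V → V → Option ℕ) (v : V) (i : ℕ) : Prop := ∀ w, c v w ≠ some i

variable {E : Finset (V × V)} {n : ℕ}

noncomputable def upd (c : V → V → Option ℕ) (x y : V) (o : Option ℕ) : V → V → Option ℕ :=
  fun u v => if (u = x ∧ v = y) ∨ (u = y ∧ v = x) then o else c u v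

lemma upd_self (c : V → V → Option ℕ) (x y : V) (o : Option ℕ) :
    upd c x y o x y = o := by simp [upd]

lemma upd_self' (c : V → V → Option ℕ) (x y : V) (o : Option ℕ) :
    upd c x y o y x = o := by simp [upd]

lemma upd_other (c : V → V → Option ℕ) (x y : V) (o : Option ℕ) {u v : V}
    (h : ¬((u = x ∧ v = y) ∨ (u = y ∧ v = x))) : upd c x y o u v = c u v := by
  simp [upd, h]

variable {E : Finset (V × V)} {n : ℕ}

/-- Erase the color of an edge. -/
noncomputable def EC.erase (C : EC E n) (x y : V) : EC E n where
  c := upd C.c x y none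
  symm := by
    intro u v; unfold upd
    by_cases h : (u = x ∧ v = y) ∨ (u = y ∧ v = x)
    · rcases h with ⟨rfl, rfl⟩ | ⟨rfl, rfl⟩ <;> simp
    · have h' : ¬((v = x ∧ u = y) ∨ (v = y ∧ u = x)) := by tauto
      simp only [if_neg h, if_neg h']; exact C.symm u v
  dom := by
    intro u v i h
    unfold upd at h
    split at h
    · exact absurd h (by simp)
    · exact C.dom u v i h
  bnd := by
    intro u v i h
    unfold upd at h
    split at h
    · exact absurd h (by simp)
    · exact C.bnd u v i h
  prop := by
    intro u v w i hv hw
    unfold upd at hv hw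
    split at hv
    · exact absurd hv (by simp)
    · split at hw
      · exact absurd hw (by simp)
      · exact C.prop u v w i hv hw

lemma EC.erase_c (C : EC E n) (x y : V) : (C.erase x y).c = upd C.c x y none := rfl

/-- After erasing a colored edge at `x`, its color is missing at `x`. -/
lemma missing_after_erase (C : EC E n) {x y : V} {i : ℕ} (h : C.c x y = some i) :
    Missing (C.erase x y).c x i := by
  intro v hv
  rw [EC.erase_c] at hv
  by_cases hc : (x = x ∧ v = y) ∨ (x = y ∧ v = x)
  · rw [upd, if_pos hc] at hv; exact absurd hv (by simp)
  · rw [upd_other _ _ _ _ hc] at hv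
    exact hc (Or.inl ⟨rfl, C.prop x v y i hv h⟩)

/-- Erasing preserves missing colors. -/
lemma missing_erase_mono (C : EC E n) (x y : V) {v : V} {i : ℕ}
    (h : Missing C.c v i) : Missing (C.erase x y).c v i := by
  intro u hu
  rw [EC.erase_c] at hu
  by_cases hc : (v = x ∧ u = y) ∨ (v = y ∧ u = x)
  · rw [upd, if_pos hc] at hu; exact absurd hu (by simp)
  · rw [upd_other _ _ _ _ hc] at hu; exact h u hu

/-- Color an edge whose color is missing at both endpoints. -/
noncomputable def EC.paint (C : EC E n) (x y : V) (i : ℕ) (hxy : x ≠ y)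
    (hE : (x, y) ∈ E ∨ (y, x) ∈ E) (hi : i < n)
    (hmx : Missing C.c x i) (hmy : Missing C.c y i) : EC E n where
  c := upd C.c x y (some i)
  symm := by
    intro u v; unfold upd
    by_cases h : (u = x ∧ v = y) ∨ (u = y ∧ v = x)
    · rcases h with ⟨rfl, rfl⟩ | ⟨rfl, rfl⟩ <;> simp
    · have h' : ¬((v = x ∧ u = y) ∨ (v = y ∧ u = x)) := by tauto
      simp only [if_neg h, if_neg h']; exact C.symm u v
  dom := by
    intro u v j h
    unfold upd at h
    split at h
    · rename_i hc
      rcases hc with ⟨rfl, rfl⟩ | ⟨rfl, rfl⟩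
      · exact hE
      · tauto
    · exact C.dom u v j h
  bnd := by
    intro u v j h
    unfold upd at h
    split at h
    · simp only [Option.some.injEq] at h; omega
    · exact C.bnd u v j h
  prop := by
    intro u v w j hv hw
    unfold upd at hv hw
    by_cases h1 : (u = x ∧ v = y) ∨ (u = y ∧ v = x) <;>
      by_cases h2 : (u = x ∧ w = y) ∨ (u = y ∧ w = x)
    · rw [if_pos h1] at hv; rw [if_pos h2] at hw
      rcases h1 with ⟨rfl, rfl⟩ | ⟨rfl, rfl⟩ <;> rcases h2 with ⟨h2a, rfl⟩ | ⟨h2a, rfl⟩ <;> tauto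
    · rw [if_pos h1] at hv; rw [if_neg h2] at hw
      simp only [Option.some.injEq] at hv; subst hv
      rcases h1 with ⟨rfl, rfl⟩ | ⟨rfl, rfl⟩
      · exact absurd hw (hmx w)
      · exact absurd hw (hmy w)
    · rw [if_neg h1] at hv; rw [if_pos h2] at hw
      simp only [Option.some.injEq] at hw; subst hw
      rcases h2 with ⟨rfl, rfl⟩ | ⟨rfl, rfl⟩
      · exact absurd hv (hmx v)
      · exact absurd hv (hmy v)
    · rw [if_neg h1] at hv; rw [if_neg h2] at hw
      exact C.prop u v w j hv hw

lemma EC.paint_c (C : EC E n) (x y : V) (i : ℕ) (hxy hE hi hmx hmy) :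
    (C.paint x y i hxy hE hi hmx hmy).c = upd C.c x y (some i) := rfl



lemma exists_missing (C : EC E n) (hs : ∀ e ∈ E, e.1 ≠ e.2) (v : V)
    (h : (E.filter (fun e => e.1 = v ∨ e.2 = v)).card < n) :
    ∃ i, i < n ∧ Missing C.c v i := by
  by_contra hcon
  push_neg at hcon
  have hex : ∀ i, i < n → ∃ w, C.c v w = some i := by
    intro i hi
    have := hcon i hi
    by_contra h'
    push_neg at h'
    exact this (fun u hu => h' u hu)
  set f : ℕ → V := fun i => if hh : ∃ w, C.c v w = some i then hh.choose else v with hfdef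
  have hf : ∀ i ∈ Finset.range n, C.c v (f i) = some i := by
    intro i hi
    rcases hex i (Finset.mem_range.mp hi) with ⟨w, hw⟩
    have hh : ∃ w, C.c v w = some i := ⟨w, hw⟩
    simp only [hfdef, dif_pos hh]
    exact hh.choose_spec
  have hfv : ∀ i ∈ Finset.range n, f i ≠ v := by
    intro i hi heq
    rcases C.dom v (f i) i (hf i hi) with hE | hE
    · exact hs _ hE (by simp [heq])
    · exact hs _ hE (by simp [heq])
  set g : ℕ → V × V := fun i => if (v, f i) ∈ E then (v, f i) else (f i, v) with hgdef
  have hmaps : ∀ i ∈ Finset.range n, g i ∈ E.filter (fun e => e.1 = v ∨ e.2 = v) := by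
    intro i hi
    simp only [hgdef, Finset.mem_filter]
    by_cases hE : (v, f i) ∈ E
    · simp [hE]
    · rcases C.dom v (f i) i (hf i hi) with hE' | hE'
      · exact absurd hE' hE
      · simp [hE, hE']
  have hinj : Set.InjOn g (Finset.range n) := by
    intro i hi j hj hij
    simp only [hgdef] at hij
    have hfij : f i = f j := by
      split at hij <;> split at hij <;>
        simp only [Prod.mk.injEq] at hij
      · exact hij.2
      · exact absurd hij.2 (hfv i hi)
      · exact absurd hij.1 (hfv i hi)
      · exact hij.1
    have h2 : C.c v (f i) = some j := by rw [hfij]; exact hf j hj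
    have h1 := hf i hi
    rw [h1] at h2
    simpa using h2
  have := Finset.card_le_card_of_injOn g hmaps hinj
  simp only [Finset.card_range] at this
  omega

/-! ### Walks (Kempe chains) -/

noncomputable def partner (c : V → V → Option ℕ) (γ : ℕ) (v : V) : Option V :=
  if h : ∃ w, c v w = some γ then some h.choose else none

lemma partner_eq_some {c : V → V → Option ℕ}
    (hprop : ∀ u v w i, c u v = some i → c u w = some i → v = w)
    {γ : ℕ} {v w : V} : partner c γ v = some w ↔ c v w = some γ := by
  constructor
  · intro h
    unfold partner at h
    split at h
    · rename_i hh
      simp only [Option.some.injEq] at h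
      rw [← h]; exact hh.choose_spec
    · exact absurd h (by simp)
  · intro h
    have hh : ∃ u, c v u = some γ := ⟨w, h⟩
    unfold partner
    rw [dif_pos hh]
    simp only [Option.some.injEq]
    exact hprop v _ w γ hh.choose_spec h

lemma partner_eq_none {c : V → V → Option ℕ} {γ : ℕ} {v : V}
    (h : Missing c v γ) : partner c γ v = none := by
  unfold partner
  rw [dif_neg]
  rintro ⟨w, hw⟩
  exact h w hw

def sched (α β k : ℕ) : ℕ := if k % 2 = 0 then α else β

noncomputable def walk (c : V → V → Option ℕ) (α β : ℕ) (s : V) : ℕ → Option V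
  | 0 => some s
  | (k+1) => (walk c α β s k).bind (fun v => partner c (sched α β k) v)

lemma walk_zero (c : V → V → Option ℕ) (α β : ℕ) (s : V) : walk c α β s 0 = some s := rfl

lemma walk_succ (c : V → V → Option ℕ) (α β : ℕ) (s : V) (k : ℕ) :
    walk c α β s (k+1) = (walk c α β s k).bind (fun v => partner c (sched α β k) v) := rfl

lemma walk_none_mono {c : V → V → Option ℕ} {α β : ℕ} {s : V} {k l : ℕ}
    (hkl : k ≤ l) (h : walk c α β s k = none) : walk c α β s l = none := by
  induction l with
  | zero =>
    have : k = 0 := Nat.le_zero.mp hkl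
    rw [← this]; exact h
  | succ m ih =>
    rcases Nat.lt_or_ge k (m+1) with hlt | hge
    · rw [walk_succ, ih (by omega)]; rfl
    · have : k = m + 1 := by omega
      rw [← this]; exact h

lemma walk_some_down {c : V → V → Option ℕ} {α β : ℕ} {s : V} {k l : ℕ}
    (hkl : k ≤ l) {v : V} (h : walk c α β s l = some v) : ∃ u, walk c α β s k = some u := by
  cases hw : walk c α β s k with
  | some u => exact ⟨u, rfl⟩
  | none => rw [walk_none_mono hkl hw] at h; exact absurd h (by simp)

lemma walk_edge {c : V → V → Option ℕ}
    {α β : ℕ} {s : V} {k : ℕ} {v w : V}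
    (hv : walk c α β s k = some v) (hw : walk c α β s (k+1) = some w)
    (hprop : ∀ u v w i, c u v = some i → c u w = some i → v = w) :
    c v w = some (sched α β k) := by
  rw [walk_succ, hv] at hw
  simp only [Option.bind_some] at hw
  exact (partner_eq_some hprop).mp hw

lemma walk_back {c : V → V → Option ℕ}
    (hprop : ∀ u v w i, c u v = some i → c u w = some i → v = w)
    (hsymm : ∀ u v, c u v = c v u)
    {α β : ℕ} {s : V} {k : ℕ} {w : V}
    (hw : walk c α β s (k+1) = some w) :
    ∃ v, walk c α β s k = some v ∧ c w v = some (sched α β k) ∧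
      partner c (sched α β k) w = some v := by
  rcases walk_some_down (Nat.le_succ k) hw with ⟨v, hv⟩
  have hedge := walk_edge hv hw hprop
  have hedge' : c w v = some (sched α β k) := by rw [hsymm]; exact hedge
  exact ⟨v, hv, hedge', (partner_eq_some hprop).mpr hedge'⟩

/-- Backward coincidence of two chains with aligned parity. -/
lemma walk_bwd {c : V → V → Option ℕ}
    (hprop : ∀ u v w i, c u v = some i → c u w = some i → v = w)
    (hsymm : ∀ u v, c u v = c v u)
    {α β : ℕ} {s₁ s₂ : V} {a b : ℕ} (hab : a % 2 = b % 2)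
    (h : walk c α β s₁ a = walk c α β s₂ b)
    (hsome : ∃ v, walk c α β s₁ a = some v) :
    ∀ t, t ≤ a → t ≤ b → walk c α β s₁ (a - t) = walk c α β s₂ (b - t) := by
  intro t
  induction t with
  | zero => intro _ _; exact h
  | succ r ih =>
    intro hra hrb
    have hr := ih (by omega) (by omega)
    rcases hsome with ⟨v0, hv0⟩
    have hsome1 : ∃ v, walk c α β s₁ (a - r) = some v := walk_some_down (by omega) hv0
    rcases hsome1 with ⟨v, hv⟩
    have hv' : walk c α β s₂ (b - r) = some v := by rw [← hr]; exact hv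
    have ha1 : a - r = (a - (r+1)) + 1 := by omega
    have hb1 : b - r = (b - (r+1)) + 1 := by omega
    rw [ha1] at hv
    rw [hb1] at hv'
    rcases walk_back hprop hsymm hv with ⟨u, hu, _, hpu⟩
    rcases walk_back hprop hsymm hv' with ⟨u', hu', _, hpu'⟩
    have hsched : sched α β (a - (r+1)) = sched α β (b - (r+1)) := by
      unfold sched
      have : (a - (r+1)) % 2 = (b - (r+1)) % 2 := by omega
      rw [this]
    rw [hsched] at hpu
    rw [hpu'] at hpu
    simp only [Option.some.injEq] at hpu
    rw [hu, hu', hpu]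

/-- If a chain reaches a vertex missing `β` at an even position, that position is 0. -/
lemma walk_start {c : V → V → Option ℕ}
    (hprop : ∀ u v w i, c u v = some i → c u w = some i → v = w)
    (hsymm : ∀ u v, c u v = c v u)
    {α β : ℕ} {s t : V} {p : ℕ}
    (hm : Missing c t β) (h : walk c α β s p = some t) (hev : p % 2 = 0) : p = 0 := by
  by_contra hp
  have hp1 : p = (p - 1) + 1 := by omega
  rw [hp1] at h
  rcases walk_back hprop hsymm h with ⟨v, _, hedge, _⟩
  have : sched α β (p-1) = β := by unfold sched; rw [if_neg]; omega
  rw [this] at hedge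
  exact hm v hedge

/-- Reversal: if a chain from `s₂` reaches `s₁` at an odd position `p`, the chain
from `s₁` is its reverse. -/
lemma walk_rev {c : V → V → Option ℕ}
    (hprop : ∀ u v w i, c u v = some i → c u w = some i → v = w)
    (hsymm : ∀ u v, c u v = c v u)
    {α β : ℕ} {s₁ s₂ : V} {p : ℕ} (hp : p % 2 = 1)
    (h : walk c α β s₂ p = some s₁) :
    ∀ t, t ≤ p → walk c α β s₁ t = walk c α β s₂ (p - t) := by
  intro t
  induction t with
  | zero => intro _; exact h.symm
  | succ r ih =>
    intro hrp
    have hr := ih (by omega)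
    rcases walk_some_down (Nat.sub_le p r) h with ⟨v, hv⟩
    have hv1 : walk c α β s₁ r = some v := by rw [hr]; exact hv
    have hpr : p - r = (p - (r+1)) + 1 := by omega
    rw [hpr] at hv
    rcases walk_back hprop hsymm hv with ⟨u, hu, _, hpu⟩
    have hsched : sched α β (p - (r+1)) = sched α β r := by
      unfold sched
      have : (p - (r+1)) % 2 = r % 2 := by omega
      rw [this]
    rw [walk_succ, hv1]
    simp only [Option.bind_some]
    rw [← hsched, hpu, hu]

/-- Where a chain can hit a vertex `x` missing `α`. -/
lemma walk_hits {c : V → V → Option ℕ}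
    (hprop : ∀ u v w i, c u v = some i → c u w = some i → v = w)
    (hsymm : ∀ u v, c u v = c v u)
    {α β : ℕ} {s x : V} {k : ℕ}
    (hms : Missing c s β) (hmx : Missing c x α) (hxs : x ≠ s)
    (h : walk c α β s k = some x) :
    k % 2 = 0 ∧ 1 ≤ k ∧ ∃ u, walk c α β s (k-1) = some u ∧ c x u = some β := by
  have hk0 : k ≠ 0 := by
    intro h0
    rw [h0, walk_zero] at h
    simp only [Option.some.injEq] at h
    exact hxs h.symm
  have hk1 : k = (k - 1) + 1 := by omega
  rw [hk1] at h
  rcases walk_back hprop hsymm h with ⟨u, hu, hedge, _⟩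
  by_cases hpar : (k-1) % 2 = 0
  · exfalso
    have hα : c x u = some α := by unfold sched at hedge; rwa [if_pos hpar] at hedge
    exact hmx u hα
  · have hsched : sched α β (k-1) = β := by unfold sched; rw [if_neg hpar]
    rw [hsched] at hedge
    refine ⟨by omega, by omega, u, ?_, hedge⟩
    exact hu

/-! ### Kempe chain flips -/

def onChain (c : V → V → Option ℕ) (α β : ℕ) (s : V) (v : V) : Prop :=
  ∃ k, walk c α β s k = some v

def chainEdge (c : V → V → Option ℕ) (α β : ℕ) (s : V) (u v : V) : Prop :=
  ∃ k, (walk c α β s k = some u ∧ walk c α β s (k+1) = some v) ∨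
       (walk c α β s k = some v ∧ walk c α β s (k+1) = some u)

lemma chainEdge_symm {c : V → V → Option ℕ} {α β : ℕ} {s u v : V}
    (h : chainEdge c α β s u v) : chainEdge c α β s v u := by
  rcases h with ⟨k, h | h⟩
  exacts [⟨k, Or.inr h⟩, ⟨k, Or.inl h⟩]

lemma chainEdge_onChain {c : V → V → Option ℕ} {α β : ℕ} {s u v : V}
    (h : chainEdge c α β s u v) : onChain c α β s u ∧ onChain c α β s v := by
  rcases h with ⟨k, ⟨h1, h2⟩ | ⟨h1, h2⟩⟩
  exacts [⟨⟨k, h1⟩, ⟨k+1, h2⟩⟩, ⟨⟨k+1, h2⟩, ⟨k, h1⟩⟩]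

lemma chainEdge_color {c : V → V → Option ℕ}
    (hprop : ∀ u v w i, c u v = some i → c u w = some i → v = w)
    (hsymm : ∀ u v, c u v = c v u)
    {α β : ℕ} {s u v : V}
    (h : chainEdge c α β s u v) : c u v = some α ∨ c u v = some β := by
  rcases h with ⟨k, ⟨h1, h2⟩ | ⟨h1, h2⟩⟩
  · have := walk_edge h1 h2 hprop
    unfold sched at this
    split at this
    exacts [Or.inl this, Or.inr this]
  · have := walk_edge h1 h2 hprop
    rw [hsymm] at this
    unfold sched at this
    split at this
    exacts [Or.inl this, Or.inr this]

/-- Key: every α/β-colored edge at a chain vertex is a chain edge. -/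
lemma chainEdge_of_onChain {c : V → V → Option ℕ}
    (hprop : ∀ u v w i, c u v = some i → c u w = some i → v = w)
    (hsymm : ∀ u v, c u v = c v u)
    {α β : ℕ} {s u v : V} (hms : Missing c s β) (hαβ : α ≠ β)
    (hu : onChain c α β s u)
    (hcol : c u v = some α ∨ c u v = some β) : chainEdge c α β s u v := by
  rcases hu with ⟨k, hk⟩
  -- the color of uv
  rcases hcol with hcol | hcol
  · -- color α
    by_cases hpar : k % 2 = 0
    · -- α = sched k : forward edge
      have hs : sched α β k = α := by unfold sched; rw [if_pos hpar]
      have : walk c α β s (k+1) = some v := by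
        rw [walk_succ, hk]
        simp only [Option.bind_some]
        rw [hs]
        exact (partner_eq_some hprop).mpr hcol
      exact ⟨k, Or.inl ⟨hk, this⟩⟩
    · -- α = sched (k-1) : backward edge
      have hk0 : k ≠ 0 := by intro h0; rw [h0] at hpar; exact hpar rfl
      have hk1 : k = (k-1) + 1 := by omega
      rw [hk1] at hk
      rcases walk_back hprop hsymm hk with ⟨w, hw, hedge, _⟩
      have hs : sched α β (k-1) = α := by unfold sched; rw [if_pos (by omega)]
      rw [hs] at hedge
      have : w = v := hprop u w v α hedge hcol
      subst this
      exact ⟨k-1, Or.inr ⟨hw, hk⟩⟩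
  · -- color β
    by_cases hpar : k % 2 = 0
    · -- β = sched (k-1) if k ≥ 1; k = 0 contradicts Missing s β
      rcases Nat.eq_zero_or_pos k with hk0 | hk0
      · rw [hk0, walk_zero] at hk
        simp only [Option.some.injEq] at hk
        subst hk
        exact absurd hcol (hms v)
      · have hk1 : k = (k-1) + 1 := by omega
        rw [hk1] at hk
        rcases walk_back hprop hsymm hk with ⟨w, hw, hedge, _⟩
        have hs : sched α β (k-1) = β := by unfold sched; rw [if_neg (by omega)]
        rw [hs] at hedge
        have : w = v := hprop u w v β hedge hcol
        subst this
        exact ⟨k-1, Or.inr ⟨hw, hk⟩⟩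
    · -- β = sched k : forward edge
      have hs : sched α β k = β := by unfold sched; rw [if_neg hpar]
      have : walk c α β s (k+1) = some v := by
        rw [walk_succ, hk]
        simp only [Option.bind_some]
        rw [hs]
        exact (partner_eq_some hprop).mpr hcol
      exact ⟨k, Or.inl ⟨hk, this⟩⟩

noncomputable def flipc (c : V → V → Option ℕ) (α β : ℕ) (s : V) : V → V → Option ℕ :=
  fun u v => if chainEdge c α β s u v then
    (if c u v = some α then some β else some α) else c u v

variable {E : Finset (V × V)} {n : ℕ}

/-- The flipped coloring as an `EC`. -/
noncomputable def EC.flip (C : EC E n) (α β : ℕ) (s : V)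
    (hms : Missing C.c s β) (hαβ : α ≠ β) (hα : α < n) (hβ : β < n) : EC E n where
  c := flipc C.c α β s
  symm := by
    intro u v
    unfold flipc
    by_cases h : chainEdge C.c α β s u v
    · rw [if_pos h, if_pos (chainEdge_symm h), C.symm u v]
    · rw [if_neg h, if_neg (fun h' => h (chainEdge_symm h')), C.symm u v]
  dom := by
    intro u v i h
    unfold flipc at h
    split at h
    · rename_i hce
      rcases chainEdge_color C.prop C.symm hce with hc | hc
      · exact C.dom u v α hc
      · exact C.dom u v β hc
    · exact C.dom u v i h
  bnd := by
    intro u v i h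
    unfold flipc at h
    split at h
    · split at h <;> (simp only [Option.some.injEq] at h; omega)
    · exact C.bnd u v i h
  prop := by
    intro u v w i hv hw
    unfold flipc at hv hw
    by_cases h1 : chainEdge C.c α β s u v <;> by_cases h2 : chainEdge C.c α β s u w
    · -- both chain edges
      rw [if_pos h1] at hv; rw [if_pos h2] at hw
      rcases chainEdge_color C.prop C.symm h1 with hc1 | hc1 <;>
        rcases chainEdge_color C.prop C.symm h2 with hc2 | hc2
      · exact C.prop u v w α hc1 hc2
      · rw [if_pos hc1] at hv
        rw [if_neg (by rw [hc2]; simp only [Option.some.injEq]; exact fun h => hαβ h.symm)] at hw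
        simp only [Option.some.injEq] at hv hw
        exact absurd (hv.trans hw.symm) hαβ.symm
      · rw [if_pos hc2] at hw
        rw [if_neg (by rw [hc1]; simp only [Option.some.injEq]; exact fun h => hαβ h.symm)] at hv
        simp only [Option.some.injEq] at hv hw
        exact absurd (hv.trans hw.symm) hαβ
      · rw [if_neg (by rw [hc1]; simp only [Option.some.injEq]; exact fun h => hαβ h.symm)] at hv
        rw [if_neg (by rw [hc2]; simp only [Option.some.injEq]; exact fun h => hαβ h.symm)] at hw
        exact C.prop u v w β hc1 hc2
    · -- uv chain, uw not : contradiction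
      exfalso
      rw [if_pos h1] at hv; rw [if_neg h2] at hw
      have hu : onChain C.c α β s u := (chainEdge_onChain h1).1
      have hi : i = α ∨ i = β := by
        split at hv <;> (simp only [Option.some.injEq] at hv; omega)
      apply h2
      apply chainEdge_of_onChain C.prop C.symm hms hαβ hu
      rcases hi with rfl | rfl
      exacts [Or.inl hw, Or.inr hw]
    · -- uw chain, uv not : contradiction
      exfalso
      rw [if_neg h1] at hv; rw [if_pos h2] at hw
      have hu : onChain C.c α β s u := (chainEdge_onChain h2).1
      have hi : i = α ∨ i = β := by
        split at hw <;> (simp only [Option.some.injEq] at hw; omega)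
      apply h1
      apply chainEdge_of_onChain C.prop C.symm hms hαβ hu
      rcases hi with rfl | rfl
      exacts [Or.inl hv, Or.inr hv]
    · rw [if_neg h1] at hv; rw [if_neg h2] at hw
      exact C.prop u v w i hv hw

lemma EC.flip_c (C : EC E n) (α β : ℕ) (s : V) (hms hαβ hα hβ) :
    (C.flip α β s hms hαβ hα hβ).c = flipc C.c α β s := rfl

/-- Flip does not change edges at vertices off the chain. -/
lemma flipc_off_chain {C : EC E n} {α β : ℕ} {s : V} {v : V}
    (hv : ¬ onChain C.c α β s v) (w : V) : flipc C.c α β s v w = C.c v w := by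
  unfold flipc
  rw [if_neg]
  intro hce
  exact hv (chainEdge_onChain hce).1

/-- Flip preserves isSome. -/
lemma flipc_isSome {C : EC E n} {α β : ℕ} {s : V} (u w : V) :
    (flipc C.c α β s u w).isSome = (C.c u w).isSome := by
  unfold flipc
  split
  · rename_i hce
    rcases chainEdge_color C.prop C.symm hce with hc | hc <;> rw [hc] <;> split <;> simp
  · rfl

/-- Flip preserves missing colors other than α, β. -/
lemma flipc_missing_other {C : EC E n} {α β : ℕ} {s : V} {v : V} {j : ℕ}
    (hj : j ≠ α ∧ j ≠ β) (h : Missing C.c v j) : Missing (flipc C.c α β s) v j := by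
  intro w hw
  unfold flipc at hw
  split at hw
  · split at hw <;> (simp only [Option.some.injEq] at hw; omega)
  · exact h w hw

/-- After the flip, α is missing at the start of the chain. -/
lemma flipc_missing_start {C : EC E n} {α β : ℕ} {s : V}
    (hms : Missing C.c s β) (hαβ : α ≠ β) : Missing (flipc C.c α β s) s α := by
  intro w hw
  unfold flipc at hw
  by_cases hce : chainEdge C.c α β s s w
  · rw [if_pos hce] at hw
    rcases chainEdge_color C.prop C.symm hce with hc | hc
    · rw [if_pos hc] at hw
      simp only [Option.some.injEq] at hw
      exact hαβ hw.symm
    · exact hms w hc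
  · rw [if_neg hce] at hw
    exact hce (chainEdge_of_onChain C.prop C.symm hms hαβ ⟨0, walk_zero _ _ _ _⟩ (Or.inl hw))

/-! ### Fan rotation -/

lemma rotate (C : EC E n) (x : V) (y : ℕ → V) (i : ℕ → ℕ) (m : ℕ)
    (hinj : ∀ s ≤ m, ∀ t ≤ m, y s = y t → s = t)
    (hyx : ∀ s ≤ m, y s ≠ x)
    (hcol : ∀ s, 1 ≤ s → s ≤ m → C.c x (y s) = some (i s))
    (hfan : ∀ s < m, Missing C.c (y s) (i (s+1)))
    (h0 : C.c x (y 0) = none)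
    (hE0 : (x, y 0) ∈ E ∨ (y 0, x) ∈ E) :
    ∃ C' : EC E n,
      (∀ s < m, C'.c x (y s) = some (i (s+1))) ∧
      C'.c x (y m) = none ∧
      (∀ u v, (∀ s ≤ m, ¬((u = x ∧ v = y s) ∨ (u = y s ∧ v = x))) → C'.c u v = C.c u v) := by
  induction m with
  | zero => exact ⟨C, by omega, h0, fun u v _ => rfl⟩
  | succ m ih =>
    obtain ⟨C₁, r1, r2, r3⟩ := ih
      (fun s hs t ht h => hinj s (by omega) t (by omega) h)
      (fun s hs => hyx s (by omega))
      (fun s h1 h2 => hcol s h1 (by omega))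
      (fun s hs => hfan s (by omega))
    -- the edge (x, y (m+1)) is untouched so far
    have huntouched : C₁.c x (y (m+1)) = C.c x (y (m+1)) := by
      apply r3
      intro s hs hc
      rcases hc with ⟨-, hc⟩ | ⟨hc, -⟩
      · exact absurd (hinj (m+1) le_rfl s (by omega) hc) (by omega)
      · exact hyx s (by omega) hc.symm
    have hcol1 : C₁.c x (y (m+1)) = some (i (m+1)) := by
      rw [huntouched]; exact hcol (m+1) (by omega) le_rfl
    set C₂ := C₁.erase x (y (m+1)) with hC₂
    -- i (m+1) is missing at x in C₂
    have hmx : Missing C₂.c x (i (m+1)) := missing_after_erase C₁ hcol1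
    -- i (m+1) is missing at (y m) in C₂
    have hmy : Missing C₂.c (y m) (i (m+1)) := by
      intro v hv
      rw [hC₂, EC.erase_c] at hv
      by_cases hc : (y m = x ∧ v = y (m+1)) ∨ (y m = y (m+1) ∧ v = x)
      · rw [upd, if_pos hc] at hv; exact absurd hv (by simp)
      · rw [upd_other _ _ _ _ hc] at hv
        by_cases hvx : v = x
        · subst hvx
          rw [C₁.symm, r2] at hv
          exact absurd hv (by simp)
        · have : C₁.c (y m) v = C.c (y m) v := by
            apply r3
            intro s hs hc'
            rcases hc' with ⟨hc', -⟩ | ⟨-, hc'⟩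
            · exact hyx m (by omega) hc'
            · exact hvx hc'
          rw [this] at hv
          exact hfan m (by omega) v hv
    have hxym : x ≠ y m := fun h => hyx m (by omega) h.symm
    have hEym : (x, y m) ∈ E ∨ (y m, x) ∈ E := by
      rcases Nat.eq_zero_or_pos m with rfl | hm
      · exact hE0
      · exact C.dom x (y m) (i m) (hcol m (by omega) (by omega))
    have hibnd : i (m+1) < n := C.bnd x (y (m+1)) _ (hcol (m+1) (by omega) le_rfl)
    set C₃ := C₂.paint x (y m) (i (m+1)) hxym hEym hibnd hmx hmy with hC₃
    refine ⟨C₃, ?_, ?_, ?_⟩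
    · intro s hs
      rcases Nat.lt_or_ge s m with hsm | hsm
      · -- untouched by erase and paint
        have h2 : C₂.c x (y s) = C₁.c x (y s) := by
          rw [hC₂, EC.erase_c]
          apply upd_other
          rintro (⟨-, hc⟩ | ⟨hc, -⟩)
          · exact absurd (hinj s (by omega) (m+1) le_rfl hc) (by omega)
          · exact hyx (m+1) (by omega) hc.symm
        have h3 : C₃.c x (y s) = C₂.c x (y s) := by
          rw [hC₃, EC.paint_c]
          apply upd_other
          rintro (⟨-, hc⟩ | ⟨hc, -⟩)
          · exact absurd (hinj s (by omega) m (by omega) hc) (by omega)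
          · exact hyx m (by omega) hc.symm
        rw [h3, h2]
        exact r1 s hsm
      · -- s = m : painted
        have hsm' : s = m := by omega
        subst hsm'
        rw [hC₃, EC.paint_c, upd_self]
    · -- hole at y (m+1)
      have h3 : C₃.c x (y (m+1)) = C₂.c x (y (m+1)) := by
        rw [hC₃, EC.paint_c]
        apply upd_other
        rintro (⟨-, hc⟩ | ⟨hc, -⟩)
        · exact absurd (hinj (m+1) le_rfl m (by omega) hc) (by omega)
        · exact hyx m (by omega) hc.symm
      rw [h3, hC₂, EC.erase_c, upd_self]
    · -- untouched edges
      intro u v huv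
      have h3 : C₃.c u v = C₂.c u v := by
        rw [hC₃, EC.paint_c]
        exact upd_other _ _ _ _ (huv m (by omega))
      have h2 : C₂.c u v = C₁.c u v := by
        rw [hC₂, EC.erase_c]
        exact upd_other _ _ _ _ (huv (m+1) le_rfl)
      rw [h3, h2]
      exact r3 u v (fun s hs => huv s (by omega))

/-- Corollary: rotation preserves missing colors at `x`. -/
lemma rotate_missing_x {C C' : EC E n} {x : V} {y : ℕ → V} {i : ℕ → ℕ} {m : ℕ}
    (hinj : ∀ s ≤ m, ∀ t ≤ m, y s = y t → s = t)
    (hyx : ∀ s ≤ m, y s ≠ x)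
    (hcol : ∀ s, 1 ≤ s → s ≤ m → C.c x (y s) = some (i s))
    (r1 : ∀ s < m, C'.c x (y s) = some (i (s+1)))
    (r2 : C'.c x (y m) = none)
    (r3 : ∀ u v, (∀ s ≤ m, ¬((u = x ∧ v = y s) ∨ (u = y s ∧ v = x))) → C'.c u v = C.c u v)
    {j : ℕ} (hj : Missing C.c x j) : Missing C'.c x j := by
  intro v hv
  by_cases hcv : ∃ s ≤ m, v = y s
  · rcases hcv with ⟨s, hs, rfl⟩
    rcases Nat.lt_or_ge s m with hsm | hsm
    · rw [r1 s hsm] at hv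
      simp only [Option.some.injEq] at hv
      exact hj (y (s+1)) (by rw [hcol (s+1) (by omega) (by omega), hv])
    · have : s = m := by omega
      subst this
      rw [r2] at hv
      exact absurd hv (by simp)
  · push_neg at hcv
    rw [r3 x v (by
      intro s hs
      rintro (⟨-, hc⟩ | ⟨hc, -⟩)
      · exact hcv s hs hc
      · exact hyx s hs hc.symm)] at hv
    exact hj v hv

/-- Corollary: rotation preserves missing colors at the last fan vertex. -/
lemma rotate_missing_ym {C C' : EC E n} {x : V} {y : ℕ → V} {i : ℕ → ℕ} {m : ℕ}
    (hyx : ∀ s ≤ m, y s ≠ x)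
    (r2 : C'.c x (y m) = none)
    (r3 : ∀ u v, (∀ s ≤ m, ¬((u = x ∧ v = y s) ∨ (u = y s ∧ v = x))) → C'.c u v = C.c u v)
    {j : ℕ} (hj : Missing C.c (y m) j) : Missing C'.c (y m) j := by
  intro v hv
  by_cases hvx : v = x
  · subst hvx
    rw [C'.symm, r2] at hv
    exact absurd hv (by simp)
  · rw [r3 (y m) v (by
      intro s hs
      rintro (⟨hc, -⟩ | ⟨-, hc⟩)
      · exact hyx m le_rfl hc
      · exact hvx hc)] at hv
    exact hj v hv

/-! ### Maximal fans -/

def IsFan (c : V → V → Option ℕ) (x : V) (y : ℕ → V) (i : ℕ → ℕ) (m : ℕ) : Prop :=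
  (∀ s ≤ m, ∀ t ≤ m, y s = y t → s = t) ∧
  (∀ s, 1 ≤ s → s ≤ m → c x (y s) = some (i s)) ∧
  (∀ s < m, Missing c (y s) (i (s+1)))

lemma exists_maxfan (C : EC E n) (x y₀ : V) :
    ∃ m y i, y 0 = y₀ ∧ IsFan C.c x y i m ∧
      ∀ z j, C.c x z = some j → Missing C.c (y m) j → ∃ s, s ≤ m ∧ y s = z := by
  by_contra hcon
  push_neg at hcon
  have grow : ∀ m, ∃ y i, y 0 = y₀ ∧ IsFan C.c x y i m := by
    intro m
    induction m with
    | zero =>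
      exact ⟨fun _ => y₀, fun _ => 0, rfl,
        fun s hs t ht _ => by omega, fun s h1 h2 => by omega, fun s hs => by omega⟩
    | succ m ih =>
      obtain ⟨y, i, hy0, hfan⟩ := ih
      obtain ⟨z, j, hzcol, hzmiss, hznew⟩ := hcon m y i hy0 hfan
      set y' : ℕ → V := fun t => if t = m+1 then z else y t with hy'
      set i' : ℕ → ℕ := fun t => if t = m+1 then j else i t with hi'
      have hy'eq : ∀ t, t ≤ m → y' t = y t := by
        intro t ht; simp only [hy']; rw [if_neg (by omega)]
      have hi'eq : ∀ t, t ≤ m → i' t = i t := by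
        intro t ht; simp only [hi']; rw [if_neg (by omega)]
      have hy'top : y' (m+1) = z := by simp [hy']
      have hi'top : i' (m+1) = j := by simp [hi']
      refine ⟨y', i', by rw [hy'eq 0 (by omega)]; exact hy0, ?_, ?_, ?_⟩
      · intro s hs t ht heq
        by_cases hs1 : s = m+1 <;> by_cases ht1 : t = m+1
        · omega
        · rw [hs1, hy'top, hy'eq t (by omega)] at heq
          exact absurd heq.symm (hznew t (by omega))
        · rw [ht1, hy'top, hy'eq s (by omega)] at heq
          exact absurd heq (hznew s (by omega))
        · rw [hy'eq s (by omega), hy'eq t (by omega)] at heq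
          exact hfan.1 s (by omega) t (by omega) heq
      · intro s h1 h2
        by_cases hs1 : s = m+1
        · rw [hs1, hy'top, hi'top]; exact hzcol
        · rw [hy'eq s (by omega), hi'eq s (by omega)]; exact hfan.2.1 s h1 (by omega)
      · intro s hs
        by_cases hs1 : s = m
        · rw [hy'eq s (by omega), hs1, hi'top]
          exact hzmiss
        · rw [hy'eq s (by omega), hi'eq (s+1) (by omega)]
          exact hfan.2.2 s (by omega)
  obtain ⟨y, i, hy0, hfan⟩ := grow (Fintype.card V)
  have hinj : Set.InjOn y (Finset.range (Fintype.card V + 1)) := by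
    intro s hs t ht heq
    exact hfan.1 s (by simpa using Nat.lt_succ_iff.mp (Finset.mem_range.mp hs))
      t (by simpa using Nat.lt_succ_iff.mp (Finset.mem_range.mp ht)) heq
  have := Finset.card_le_card_of_injOn y (fun a _ => Finset.mem_univ (y a)) hinj
  simp only [Finset.card_range, Finset.card_univ] at this
  omega

/-! ### Rotate and paint, tracking coverage -/

lemma finish (C : EC E n) (x : V) (y : ℕ → V) (i : ℕ → ℕ) (m : ℕ)
    (hinj : ∀ s ≤ m, ∀ t ≤ m, y s = y t → s = t)
    (hyx : ∀ s ≤ m, y s ≠ x)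
    (hcol : ∀ s, 1 ≤ s → s ≤ m → C.c x (y s) = some (i s))
    (hfan : ∀ s < m, Missing C.c (y s) (i (s+1)))
    (h0 : C.c x (y 0) = none)
    (hE0 : (x, y 0) ∈ E ∨ (y 0, x) ∈ E)
    (δ : ℕ) (hδ : δ < n)
    (hmx : Missing C.c x δ) (hmy : Missing C.c (y m) δ) :
    ∃ C' : EC E n, (C'.c x (y 0)).isSome ∧
      ∀ u v, (C.c u v).isSome → (C'.c u v).isSome := by
  obtain ⟨C₁, r1, r2, r3⟩ := rotate C x y i m hinj hyx hcol hfan h0 hE0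
  have hxym : x ≠ y m := fun h => hyx m le_rfl h.symm
  have hEym : (x, y m) ∈ E ∨ (y m, x) ∈ E := by
    rcases Nat.eq_zero_or_pos m with rfl | hm
    · exact hE0
    · exact C.dom x (y m) (i m) (hcol m (by omega) le_rfl)
  set C₂ := C₁.paint x (y m) δ hxym hEym hδ
    (rotate_missing_x hinj hyx hcol r1 r2 r3 hmx)
    (rotate_missing_ym (i := i) hyx r2 r3 hmy) with hC₂
  have hc2 : C₂.c = upd C₁.c x (y m) (some δ) := rfl
  have hfanpair : ∀ s ≤ m, (C₂.c x (y s)).isSome := by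
    intro s hs
    rcases Nat.lt_or_ge s m with hsm | hsm
    · have : C₂.c x (y s) = C₁.c x (y s) := by
        rw [hc2]
        apply upd_other
        rintro (⟨-, hc⟩ | ⟨hc, -⟩)
        · exact absurd (hinj s (by omega) m le_rfl hc) (by omega)
        · exact hyx m le_rfl hc.symm
      rw [this, r1 s hsm]; rfl
    · have hsm' : s = m := by omega
      subst hsm'
      rw [hc2, upd_self]; rfl
  refine ⟨C₂, hfanpair 0 (by omega), ?_⟩
  intro u v hsome
  by_cases hp : ∃ s ≤ m, (u = x ∧ v = y s) ∨ (u = y s ∧ v = x)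
  · rcases hp with ⟨s, hs, ⟨rfl, rfl⟩ | ⟨rfl, rfl⟩⟩
    · exact hfanpair s hs
    · rw [C₂.symm]; exact hfanpair s hs
  · push_neg at hp
    have hp' : ∀ s ≤ m, ¬((u = x ∧ v = y s) ∨ (u = y s ∧ v = x)) := by
      intro s hs
      rcases hp s hs with ⟨h1, h2⟩
      rintro (⟨a, b⟩ | ⟨a, b⟩)
      exacts [h1 a b, h2 a b]
    have h2 : C₂.c u v = C₁.c u v := by
      rw [hc2]
      exact upd_other C₁.c x (y m) (some δ) (hp' m le_rfl)
    have h1 : C₁.c u v = C.c u v := r3 u v hp'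
    rw [h2, h1]
    exact hsome

/-! ### The Vizing extension step -/

lemma extend_coloring (hs : ∀ e ∈ E, e.1 ≠ e.2) (dstar : ℕ)
    (hdeg : ∀ v : V, (E.filter (fun e => e.1 = v ∨ e.2 = v)).card ≤ dstar)
    (C : EC E (dstar+1)) (x y₀ : V) (hE0 : (x, y₀) ∈ E) (h0 : C.c x y₀ = none) :
    ∃ C' : EC E (dstar+1), (C'.c x y₀).isSome ∧
      ∀ u v, (C.c u v).isSome → (C'.c u v).isSome := by
  have hdeg' : ∀ v : V, (E.filter (fun e => e.1 = v ∨ e.2 = v)).card < dstar + 1 := by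
    intro v; have := hdeg v; omega
  obtain ⟨m, y, i, hy0, hfan, hmax⟩ := exists_maxfan C x y₀
  have hinj := hfan.1
  have hcol := hfan.2.1
  have hmiss := hfan.2.2
  have h0' : C.c x (y 0) = none := by rw [hy0]; exact h0
  have hE0' : (x, y 0) ∈ E ∨ (y 0, x) ∈ E := by rw [hy0]; exact Or.inl hE0
  have hyx : ∀ s ≤ m, y s ≠ x := by
    intro s hsm heq
    rcases Nat.eq_zero_or_pos s with rfl | hs1
    · rw [hy0] at heq; exact hs (x, y₀) hE0 (by rw [heq])
    · rcases C.dom x (y s) (i s) (hcol s hs1 hsm) with hE | hE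
      · exact hs _ hE heq.symm
      · exact hs _ hE heq
  obtain ⟨β, hβn, hβmiss⟩ := exists_missing C hs (y m) (hdeg' (y m))
  by_cases hβx : Missing C.c x β
  · -- Easy case: β is missing at x too; rotate the whole fan and paint with β.
    obtain ⟨C', hC'1, hC'2⟩ :=
      finish C x y i m hinj hyx hcol hmiss h0' hE0' β hβn hβx hβmiss
    exact ⟨C', by rw [← hy0]; exact hC'1, hC'2⟩
  · obtain ⟨α, hαn, hαmiss⟩ := exists_missing C hs x (hdeg' x)
    have hαβ : α ≠ β := fun h => hβx (h ▸ hαmiss)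
    obtain ⟨z, hzcol⟩ : ∃ z, C.c x z = some β := by
      by_contra hcon
      push_neg at hcon
      exact hβx (fun w => hcon w)
    obtain ⟨j, hjm, hyj⟩ := hmax z β hzcol hβmiss
    rw [← hyj] at hzcol
    have hj1 : 1 ≤ j := by
      rcases Nat.eq_zero_or_pos j with rfl | h
      · rw [h0'] at hzcol; exact absurd hzcol (by simp)
      · exact h
    have hjltm : j < m := by
      rcases Nat.lt_or_ge j m with h | h
      · exact h
      · exfalso
        have : j = m := by omega
        subst this
        exact hβmiss x (by rw [C.symm]; exact hzcol)
    obtain ⟨j', rfl⟩ : ∃ j', j = j' + 1 := ⟨j - 1, by omega⟩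
    have hijβ : i (j'+1) = β := by
      have := hcol (j'+1) (by omega) (by omega)
      rw [this] at hzcol
      simpa using hzcol
    have hmissyj' : Missing C.c (y j') β := by
      have := hmiss j' (by omega)
      rwa [hijβ] at this
    -- fan colors other than at position j'+1 avoid α and β
    have hfanother : ∀ s, 1 ≤ s → s ≤ m → s ≠ j' + 1 → i s ≠ α ∧ i s ≠ β := by
      intro s h1 h2 h3
      constructor
      · intro hiα
        exact hαmiss (y s) (by rw [hcol s h1 h2, hiα])
      · intro hiβ
        have h4 : C.c x (y s) = some β := by rw [hcol s h1 h2, hiβ]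
        have := C.prop x (y s) (y (j'+1)) β h4 hzcol
        exact h3 (hinj s h2 (j'+1) (by omega) this)
    by_cases hxP1 : onChain C.c α β (y j') x
    · -- Case B: flip the chain from (y m)
      obtain ⟨n₁, hn₁⟩ := hxP1
      have hxyj' : x ≠ y j' := fun h => hyx j' (by omega) h.symm
      obtain ⟨hn₁par, hn₁pos, u, hu, hxu⟩ :=
        walk_hits C.prop C.symm hmissyj' hαmiss hxyj' hn₁
      -- x is not on the chain from (y m)
      have hxP2 : ¬ onChain C.c α β (y m) x := by
        rintro ⟨n₂, hn₂⟩
        have hxym' : x ≠ y m := fun h => hyx m le_rfl h.symm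
        obtain ⟨hn₂par, hn₂pos, u₂, hu₂, hxu₂⟩ :=
          walk_hits C.prop C.symm hβmiss hαmiss hxym' hn₂
        rcases le_total n₁ n₂ with hle | hle
        · have hbwd := walk_bwd C.prop C.symm (by omega)
            (by rw [hn₁, hn₂] : walk C.c α β (y j') n₁ = walk C.c α β (y m) n₂)
            ⟨x, hn₁⟩ n₁ le_rfl hle
          have : walk C.c α β (y m) (n₂ - n₁) = some (y j') := by
            rw [← hbwd]
            simp [walk_zero]
          have hz := walk_start C.prop C.symm hmissyj' this (by omega)
          rw [hz, walk_zero] at this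
          simp only [Option.some.injEq] at this
          exact absurd (hinj m le_rfl j' (by omega) this) (by omega)
        · have hbwd := walk_bwd C.prop C.symm (by omega)
            (by rw [hn₁, hn₂] : walk C.c α β (y m) n₂ = walk C.c α β (y j') n₁)
            ⟨x, hn₂⟩ n₂ le_rfl hle
          have : walk C.c α β (y j') (n₁ - n₂) = some (y m) := by
            rw [← hbwd]
            simp [walk_zero]
          have hz := walk_start C.prop C.symm hβmiss this (by omega)
          rw [hz, walk_zero] at this
          simp only [Option.some.injEq] at this
          exact absurd (hinj j' (by omega) m le_rfl this) (by omega)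
      -- (y j') is not on the chain from (y m)
      have hyP2 : ¬ onChain C.c α β (y m) (y j') := by
        rintro ⟨p, hp⟩
        rcases Nat.eq_zero_or_pos p with rfl | hppos
        · rw [walk_zero] at hp
          simp only [Option.some.injEq] at hp
          exact absurd (hinj m le_rfl j' (by omega) hp) (by omega)
        · have hp1 : p = (p - 1) + 1 := by omega
          rw [hp1] at hp
          rcases walk_back C.prop C.symm hp with ⟨u', hu', hedge, _⟩
          have hpodd : p % 2 = 1 := by
            by_contra hpe
            have : sched α β (p-1) = β := by unfold sched; rw [if_neg (by omega)]
            rw [this] at hedge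
            exact hmissyj' u' hedge
          rw [← hp1] at hp
          have hrev := walk_rev C.prop C.symm hpodd hp
          rcases Nat.lt_or_ge p n₁ with hlt | hge
          · -- then the chain from y j' dies at y m before reaching x
            have hym : walk C.c α β (y j') p = some (y m) := by
              rw [hrev p le_rfl]
              simp [walk_zero]
            have : walk C.c α β (y j') (p+1) = none := by
              rw [walk_succ, hym]
              simp only [Option.bind_some]
              have : sched α β p = β := by unfold sched; rw [if_neg (by omega)]
              rw [this]
              exact partner_eq_none hβmiss
            have := walk_none_mono (by omega : p + 1 ≤ n₁) this
            rw [this] at hn₁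
            exact absurd hn₁ (by simp)
          · -- x is on the chain from y m
            apply hxP2
            refine ⟨p - n₁, ?_⟩
            rw [← hrev n₁ (by omega)]
            exact hn₁
      -- flip the chain from (y m) and finish
      set Cb := C.flip α β (y m) hβmiss hαβ hαn hβn with hCb
      have hcb : Cb.c = flipc C.c α β (y m) := rfl
      have hxoff : ∀ w, Cb.c x w = C.c x w := by
        intro w; rw [hcb]; exact flipc_off_chain hxP2 w
      have hyj'off : ∀ w, Cb.c (y j') w = C.c (y j') w := by
        intro w; rw [hcb]; exact flipc_off_chain hyP2 w
      obtain ⟨C', hC'1, hC'2⟩ := finish Cb x y i m hinj hyx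
        (fun s h1 h2 => by rw [hxoff]; exact hcol s h1 h2)
        (by
          intro s hsm
          by_cases hsj : s = j'
          · subst hsj
            intro w hw
            rw [hyj'off] at hw
            rw [hijβ] at hw
            exact hmissyj' w hw
          · have hio := hfanother (s+1) (by omega) (by omega) (by omega)
            rw [hcb]
            exact flipc_missing_other hio (hmiss s hsm))
        (by rw [hxoff]; exact h0') hE0' α hαn
        (fun w hw => hαmiss w (by rw [← hxoff]; exact hw))
        (by rw [hcb]; exact flipc_missing_start hβmiss hαβ)
      refine ⟨C', by rw [← hy0]; exact hC'1, ?_⟩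
      intro u v hsome
      apply hC'2
      rw [hcb, flipc_isSome]
      exact hsome
    · -- Case A: flip the chain from (y j')
      set Cb := C.flip α β (y j') hmissyj' hαβ hαn hβn with hCb
      have hcb : Cb.c = flipc C.c α β (y j') := rfl
      have hxoff : ∀ w, Cb.c x w = C.c x w := by
        intro w; rw [hcb]; exact flipc_off_chain hxP1 w
      obtain ⟨C', hC'1, hC'2⟩ := finish Cb x y i j'
        (fun s hs t ht h => hinj s (by omega) t (by omega) h)
        (fun s hs => hyx s (by omega))
        (fun s h1 h2 => by rw [hxoff]; exact hcol s h1 (by omega))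
        (by
          intro s hsm
          have hio := hfanother (s+1) (by omega) (by omega) (by omega)
          rw [hcb]
          exact flipc_missing_other hio (hmiss s (by omega)))
        (by rw [hxoff]; exact h0') hE0' α hαn
        (fun w hw => hαmiss w (by rw [← hxoff]; exact hw))
        (by rw [hcb]; exact flipc_missing_start hmissyj' hαβ)
      refine ⟨C', by rw [← hy0]; exact hC'1, ?_⟩
      intro u v hsome
      apply hC'2
      rw [hcb, flipc_isSome]
      exact hsome

/-- Vizing's theorem (covering form): all edges can be properly colored with
`dstar + 1` colors. -/
lemma exists_full_coloring (hs : ∀ e ∈ E, e.1 ≠ e.2) (dstar : ℕ)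
    (hdeg : ∀ v : V, (E.filter (fun e => e.1 = v ∨ e.2 = v)).card ≤ dstar) :
    ∃ C : EC E (dstar+1), ∀ e ∈ E, (C.c e.1 e.2).isSome := by
  suffices h : ∀ (k : ℕ) (S : Finset (V × V)), S.card ≤ k → S ⊆ E →
      ∃ C : EC E (dstar+1), ∀ e ∈ S, (C.c e.1 e.2).isSome by
    exact h E.card E le_rfl (by rfl)
  intro k
  induction k with
  | zero =>
    intro S hcard _
    have : S = ∅ := Finset.card_eq_zero.mp (by omega)
    subst this
    refine ⟨⟨fun _ _ => none, fun _ _ => rfl, by simp, by simp, by simp⟩, by simp⟩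
  | succ k ih =>
    intro S hcard hSE
    rcases S.eq_empty_or_nonempty with rfl | ⟨e, he⟩
    · refine ⟨⟨fun _ _ => none, fun _ _ => rfl, by simp, by simp, by simp⟩, by simp⟩
    · have hcard' : (S.erase e).card ≤ k := by
        have := Finset.card_erase_of_mem he
        omega
      obtain ⟨C, hC⟩ := ih (S.erase e) hcard' (fun f hf => hSE (Finset.mem_of_mem_erase hf))
      have heE : e ∈ E := hSE he
      by_cases hsome : (C.c e.1 e.2).isSome
      · refine ⟨C, ?_⟩
        intro f hf
        by_cases hfe : f = e
        · subst hfe; exact hsome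
        · exact hC f (Finset.mem_erase.mpr ⟨hfe, hf⟩)
      · have hnone : C.c e.1 e.2 = none := by
          cases h' : C.c e.1 e.2
          · rfl
          · rw [h'] at hsome; exact absurd rfl hsome
        obtain ⟨C', hC'1, hC'2⟩ := extend_coloring hs dstar hdeg C e.1 e.2
          (by rwa [Prod.mk.eta]) hnone
        refine ⟨C', ?_⟩
        intro f hf
        by_cases hfe : f = e
        · subst hfe; exact hC'1
        · exact hC'2 f.1 f.2 (hC f (Finset.mem_erase.mpr ⟨hfe, hf⟩))

end VizingDev

/-- In a finite simple graph (edges given as a set of ordered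
pairs, each edge listed once) with maximum degree `dstar` and nonnegative edge
weights, there is a matching carrying at least a `1/(dstar+1)` fraction of the
total edge weight. -/
theorem exists_matching_weight_ge {V : Type*} [Fintype V] [DecidableEq V]
    (E : Finset (V × V))
    (hsimple : ∀ e ∈ E, e.1 ≠ e.2)
    (hnodup : ∀ e ∈ E, (e.2, e.1) ∉ E)
    (w : V × V → ℝ) (hw : ∀ e ∈ E, 0 ≤ w e)
    (dstar : ℕ)
    (hdeg : ∀ v : V, (E.filter (fun e => e.1 = v ∨ e.2 = v)).card ≤ dstar) :
    ∃ M ⊆ E,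
      (∀ e ∈ M, ∀ f ∈ M, e ≠ f →
        e.1 ≠ f.1 ∧ e.1 ≠ f.2 ∧ e.2 ≠ f.1 ∧ e.2 ≠ f.2) ∧
      (1 / ((dstar : ℝ) + 1)) * ∑ e ∈ E, w e ≤ ∑ e ∈ M, w e := by
  classical
  obtain ⟨C, hC⟩ := exists_full_coloring hsimple dstar hdeg
  set col : V × V → ℕ := fun e => (C.c e.1 e.2).getD 0 with hcoldef
  have hcol : ∀ e ∈ E, C.c e.1 e.2 = some (col e) := by
    intro e he
    have := hC e he
    cases h : C.c e.1 e.2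
    · rw [h] at this; simp at this
    · simp [hcoldef, h]
  have hcollt : ∀ e ∈ E, col e ∈ Finset.range (dstar + 1) := by
    intro e he
    exact Finset.mem_range.mpr (C.bnd e.1 e.2 (col e) (hcol e he))
  have hsum : ∑ i ∈ Finset.range (dstar+1), ∑ e ∈ E.filter (fun e => col e = i), w e
      = ∑ e ∈ E, w e := Finset.sum_fiberwise_of_maps_to hcollt w
  -- pigeonhole
  have hpigeon : ∃ i ∈ Finset.range (dstar+1),
      (1 / ((dstar : ℝ) + 1)) * ∑ e ∈ E, w e ≤ ∑ e ∈ E.filter (fun e => col e = i), w e := by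
    by_contra hcon
    push_neg at hcon
    have hlt := Finset.sum_lt_sum_of_nonempty (by simp : (Finset.range (dstar+1)).Nonempty)
      hcon
    rw [hsum] at hlt
    have hcard : ∑ _i ∈ Finset.range (dstar+1), (1 / ((dstar : ℝ) + 1)) * ∑ e ∈ E, w e
        = ∑ e ∈ E, w e := by
      rw [Finset.sum_const, Finset.card_range, nsmul_eq_mul]
      have hne : ((dstar : ℝ) + 1) ≠ 0 := by positivity
      push_cast
      field_simp
    rw [hcard] at hlt
    exact lt_irrefl _ hlt
  obtain ⟨i, hi, hle2⟩ := hpigeon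
  refine ⟨E.filter (fun e => col e = i), Finset.filter_subset _ _, ?_, hle2⟩
  intro e he f hf hef
  rw [Finset.mem_filter] at he hf
  obtain ⟨heE, hei⟩ := he
  obtain ⟨hfE, hfi⟩ := hf
  have he' : C.c e.1 e.2 = some i := by rw [hcol e heE, hei]
  have hf' : C.c f.1 f.2 = some i := by rw [hcol f hfE, hfi]
  have he'' : C.c e.2 e.1 = some i := by rw [C.symm]; exact he'
  have hf'' : C.c f.2 f.1 = some i := by rw [C.symm]; exact hf'
  refine ⟨?_, ?_, ?_, ?_⟩
  · intro h
    rw [← h] at hf'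
    have := C.prop e.1 e.2 f.2 i he' hf'
    exact hef (Prod.ext h this)
  · intro h
    rw [← h] at hf''
    have h21 : e.2 = f.1 := C.prop e.1 e.2 f.1 i he' hf''
    apply hnodup e heE
    have : f = (e.2, e.1) := Prod.ext h21.symm h.symm
    rwa [← this]
  · intro h
    rw [← h] at hf'
    have h12 : e.1 = f.2 := C.prop e.2 e.1 f.2 i he'' hf'
    apply hnodup e heE
    have : f = (e.2, e.1) := Prod.ext h.symm h12.symm
    rwa [← this]
  · intro h
    rw [← h] at hf''
    have := C.prop e.2 e.1 f.1 i he'' hf''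
    exact hef (Prod.ext this h)
end

section
/- Consider a pairwise MRF on a finite graph G = (V, E) with nonnegative node potentials φ_v : Σ → ℝ≥0 and nonnegative edge potentials ψ_{uv} : Σ² → ℝ≥0, and partition function Z = ∑_{x ∈ Σ^V} exp(∑_v φ_v(x_v) + ∑_{(u,v)∈E} ψ_{uv}(x_u, x_v)). If G has maximum vertex degree d*, then log Z ≥ (1/(d*+1)) ∑_{(i,j)∈E} (ψ_{ij}^U − ψ_{ij}^L), where ψ_{ij}^U = max over Σ² of ψ_{ij} and ψ_{ij}^L = min over Σ² of ψ_{ij}. -/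
open scoped BigOperators

/-- Total energy of an assignment `x` for a pairwise MRF with node potentials `φ`
and edge potentials `ψ`, over the edge set `E` (ordered pairs, each edge once). -/
noncomputable def mrfEnergy {V S : Type*} [Fintype V]
    (E : Finset (V × V)) (φ : V → S → ℝ) (ψ : V × V → S → S → ℝ) (x : V → S) : ℝ :=
  ∑ v, φ v (x v) + ∑ e ∈ E, ψ e (x e.1) (x e.2)

/-- Partition function of the pairwise MRF. -/
noncomputable def mrfZ {V S : Type*} [Fintype V] [DecidableEq V] [Fintype S]
    (E : Finset (V × V)) (φ : V → S → ℝ) (ψ : V × V → S → S → ℝ) : ℝ :=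
  ∑ x : V → S, Real.exp (mrfEnergy E φ ψ x)

/-- `ψ_e^U`, the maximum of the edge potential over `Σ²`. -/
noncomputable def psiU {V S : Type*} [Fintype S] [Nonempty S]
    (ψ : V × V → S → S → ℝ) (e : V × V) : ℝ := ⨆ p : S × S, ψ e p.1 p.2

/-- `ψ_e^L`, the minimum of the edge potential over `Σ²`. -/
noncomputable def psiL {V S : Type*} [Fintype S] [Nonempty S]
    (ψ : V × V → S → S → ℝ) (e : V × V) : ℝ := ⨅ p : S × S, ψ e p.1 p.2

/-- Energy of an assignment restricted to a vertex set `A` (node potentials of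
vertices in `A`, and edge potentials of the edges of `E'` inside `A`). -/
noncomputable def compEnergy {V S : Type*} [Fintype V] [DecidableEq V]
    (E' : Finset (V × V)) (φ : V → S → ℝ) (ψ : V × V → S → S → ℝ)
    (A : Finset V) (x : V → S) : ℝ :=
  ∑ v ∈ A, φ v (x v) + ∑ e ∈ E'.filter (fun e => e.1 ∈ A), ψ e (x e.1) (x e.2)

/-- Partition function of the MRF restricted to the vertex set `A`
(assignments are normalized to take the fixed value `σ0` outside of `A`). -/
noncomputable def compZ {V S : Type*} [Fintype V] [DecidableEq V] [Fintype S] [DecidableEq S]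
    (E' : Finset (V × V)) (φ : V → S → ℝ) (ψ : V × V → S → S → ℝ)
    (A : Finset V) (σ0 : S) : ℝ :=
  ∑ x ∈ Finset.univ.filter (fun x : V → S => ∀ v, v ∉ A → x v = σ0),
    Real.exp (compEnergy E' φ ψ A x)



section Vizing
variable {V : Type*} [Fintype V] [DecidableEq V] {k : ℕ}

/-- color `γ` is free (missing) at vertex `v`. -/
def vzFree (F : Finset (Sym2 V)) (C : Sym2 V → Option (Fin k)) (γ : Fin k) (v : V) : Prop :=
  ∀ e ∈ F, v ∈ e → C e ≠ some γ

structure VzGood (F : Finset (Sym2 V)) (C : Sym2 V → Option (Fin k)) : Prop where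
  dom : ∀ e, C e ≠ none → e ∈ F
  proper : ∀ e ∈ F, ∀ f ∈ F, e ≠ f → ∀ v : V, v ∈ e → v ∈ f →
      ∀ γ : Fin k, C e = some γ → C f = some γ → False

/-- fan chain condition starting after vertex `y`. -/
def vzFan (F : Finset (Sym2 V)) (C : Sym2 V → Option (Fin k)) (x : V) : V → List V → Prop
  | _, [] => True
  | y, z :: l => (∃ γ : Fin k, C s(x, z) = some γ ∧ vzFree F C γ y) ∧ vzFan F C x z l

structure VzIsFan (F : Finset (Sym2 V)) (C : Sym2 V → Option (Fin k)) (x y₀ : V)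
    (l : List V) : Prop where
  mem : ∀ y ∈ y₀ :: l, s(x, y) ∈ F
  nodup : (y₀ :: l).Nodup
  head_unc : C s(x, y₀) = none
  chain : vzFan F C x y₀ l

lemma vzRotate (F : Finset (Sym2 V)) (hND : ∀ e ∈ F, ¬ e.IsDiag) (x : V) :
    ∀ (l : List V) (C : Sym2 V → Option (Fin k)) (y₀ : V),
    VzGood F C → VzIsFan F C x y₀ l →
    (∀ e ∈ F, e ≠ s(x, y₀) → C e ≠ none) →
    ∀ γ : Fin k, vzFree F C γ x →
    vzFree F C γ ((y₀ :: l).getLast (List.cons_ne_nil _ _)) →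
    ∃ C' : Sym2 V → Option (Fin k), VzGood F C' ∧ ∀ e ∈ F, C' e ≠ none := by
  intro l
  induction l with
  | nil =>
    intro C y₀ hG hF hT γ hγx hγl
    simp only [List.getLast_singleton] at hγl
    refine ⟨Function.update C s(x, y₀) (some γ), ⟨?_, ?_⟩, ?_⟩
    · intro e he
      rcases eq_or_ne e s(x, y₀) with rfl | hne
      · exact hF.mem y₀ (by simp)
      · rw [Function.update_of_ne hne] at he; exact hG.dom e he
    · intro e heF f hfF hef v hve hvf γ' hCe hCf
      rcases eq_or_ne e s(x, y₀) with rfl | hne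
      · rw [Function.update_self] at hCe
        rw [Function.update_of_ne (by exact fun h => hef h.symm)] at hCf
        obtain rfl : γ' = γ := by injection hCe.symm
        rcases Sym2.mem_iff.mp hve with rfl | rfl
        · exact hγx f hfF hvf hCf
        · exact hγl f hfF hvf hCf
      · rw [Function.update_of_ne hne] at hCe
        rcases eq_or_ne f s(x, y₀) with rfl | hnf
        · rw [Function.update_self] at hCf
          obtain rfl : γ' = γ := by injection hCf.symm
          rcases Sym2.mem_iff.mp hvf with rfl | rfl
          · exact hγx e heF hve hCe
          · exact hγl e heF hve hCe
        · rw [Function.update_of_ne hnf] at hCf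
          exact hG.proper e heF f hfF hef v hve hvf γ' hCe hCf
    · intro e heF
      rcases eq_or_ne e s(x, y₀) with rfl | hne
      · rw [Function.update_self]; simp
      · rw [Function.update_of_ne hne]; exact hT e heF hne
  | cons z l' ih =>
    intro C y₀ hG hF hT γ hγx hγl
    have hzF : s(x, z) ∈ F := hF.mem z (by simp)
    have hy₀F : s(x, y₀) ∈ F := hF.mem y₀ (by simp)
    have hzx : z ≠ x := fun h => hND _ hzF (by rw [h]; exact Sym2.mk_isDiag_iff.mpr rfl)
    have hy₀x : y₀ ≠ x := fun h => hND _ hy₀F (by rw [h]; exact Sym2.mk_isDiag_iff.mpr rfl)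
    have hy₀z : y₀ ≠ z := by
      have := hF.nodup; rw [List.nodup_cons] at this; exact fun h => this.1 (h ▸ by simp)
    have hexy : s(x, y₀) ≠ s(x, z) := fun h => hy₀z (Sym2.congr_right.mp h)
    obtain ⟨⟨c₁, hc₁, hc₁free⟩, hchain'⟩ := hF.chain
    set C₁ : Sym2 V → Option (Fin k) :=
      Function.update (Function.update C s(x, y₀) (some c₁)) s(x, z) none with hC₁
    have hC₁z : C₁ s(x, z) = none := by rw [hC₁]; simp
    have hC₁y₀ : C₁ s(x, y₀) = some c₁ := by
      rw [hC₁, Function.update_of_ne hexy, Function.update_self]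
    have hC₁other : ∀ e, e ≠ s(x, y₀) → e ≠ s(x, z) → C₁ e = C e := by
      intro e h1 h2; rw [hC₁, Function.update_of_ne h2, Function.update_of_ne h1]
    -- memberships of tail vertices
    have htail_ne : ∀ w ∈ z :: l', w ≠ x ∧ w ≠ y₀ := by
      intro w hw
      constructor
      · have : s(x, w) ∈ F := hF.mem w (by simp [hw])
        exact fun h => hND _ this (by rw [h]; exact Sym2.mk_isDiag_iff.mpr rfl)
      · have := hF.nodup; rw [List.nodup_cons] at this
        exact fun h => this.1 (h ▸ hw)
    -- Good C₁
    have hG₁ : VzGood F C₁ := by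
      constructor
      · intro e he
        rcases eq_or_ne e s(x, y₀) with rfl | h1; · exact hy₀F
        rcases eq_or_ne e s(x, z) with rfl | h2; · exact hzF
        rw [hC₁other e h1 h2] at he; exact hG.dom e he
      · intro e heF f hfF hef v hve hvf γ' hCe hCf
        have key : ∀ g ∈ F, g ≠ s(x, y₀) → C₁ g = some γ' → C g = some γ' := by
          intro g hgF hg1 hg
          rcases eq_or_ne g s(x, z) with rfl | h2
          · rw [hC₁z] at hg; exact absurd hg (by simp)
          · rwa [hC₁other g hg1 h2] at hg
        rcases eq_or_ne e s(x, y₀) with rfl | he1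
        · rw [hC₁y₀] at hCe
          obtain rfl : γ' = c₁ := by injection hCe.symm
          have hCf' := key f hfF (fun h => hef h.symm) hCf
          rcases Sym2.mem_iff.mp hve with h | h
          · have hfz : f ≠ s(x, z) := by
              intro hh; rw [hh, hC₁z] at hCf; exact absurd hCf (by simp)
            exact hG.proper f hfF s(x, z) hzF hfz v hvf (by rw [h]; simp) γ' hCf' hc₁
          · rw [h] at hvf; exact hc₁free f hfF hvf hCf'
        rcases eq_or_ne f s(x, y₀) with rfl | hf1
        · rw [hC₁y₀] at hCf
          obtain rfl : γ' = c₁ := by injection hCf.symm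
          have hCe' := key e heF he1 hCe
          rcases Sym2.mem_iff.mp hvf with h | h
          · have hez : e ≠ s(x, z) := by
              intro hh; rw [hh, hC₁z] at hCe; exact absurd hCe (by simp)
            exact hG.proper e heF s(x, z) hzF hez v hve (by rw [h]; simp) γ' hCe' hc₁
          · rw [h] at hve; exact hc₁free e heF hve hCe'
        · exact hG.proper e heF f hfF hef v hve hvf γ'
            (key e heF he1 hCe) (key f hfF hf1 hCf)
    -- fan for C₁
    have hF₁ : VzIsFan F C₁ x z l' := by
      constructor
      · intro y hy; exact hF.mem y (List.mem_cons_of_mem _ hy)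
      · have := hF.nodup; rw [List.nodup_cons] at this; exact this.2
      · exact hC₁z
      · -- vzFan F C₁ x z l'  from  vzFan F C x z l'
        have transfer : ∀ (y : V) (m : List V), (∀ w ∈ m, w ≠ x ∧ w ≠ y₀ ∧ w ≠ z) →
            (y ≠ x ∧ y ≠ y₀) → vzFan F C x y m → vzFan F C₁ x y m := by
          intro y m
          induction m generalizing y with
          | nil => intro _ _ _; trivial
          | cons w m' ihm =>
            intro hm hy hfan
            obtain ⟨⟨γ₁, hγ₁, hγ₁free⟩, hrest⟩ := hfan
            obtain ⟨hwx, hwy₀, hwz⟩ := hm w (by simp)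
            refine ⟨⟨γ₁, ?_, ?_⟩, ?_⟩
            · rw [hC₁other s(x, w) (fun h => hwy₀ (Sym2.congr_right.mp h))
                (fun h => hwz ((Sym2.congr_right.mp h)))]
              exact hγ₁
            · -- vzFree F C₁ γ₁ y
              intro f hfF hyf hCf
              rcases eq_or_ne f s(x, z) with rfl | h2
              · rw [hC₁z] at hCf; exact absurd hCf (by simp)
              rcases eq_or_ne f s(x, y₀) with rfl | h1
              · -- y ∈ s(x,y₀) impossible since y ≠ x, y ≠ y₀
                rcases Sym2.mem_iff.mp hyf with h | h
                · exact hy.1 h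
                · exact hy.2 h
              · rw [hC₁other f h1 h2] at hCf
                exact hγ₁free f hfF hyf hCf
            · exact ihm w (fun w' hw' => hm w' (List.mem_cons_of_mem _ hw')) ⟨hwx, hwy₀⟩ hrest
        apply transfer z l' ?_ ⟨hzx, hy₀z.symm⟩ hchain'
        intro w hw
        obtain ⟨h1, h2⟩ := htail_ne w (by simp [hw])
        refine ⟨h1, h2, ?_⟩
        have := hF.nodup
        rw [List.nodup_cons, List.nodup_cons] at this
        exact fun h => this.2.1 (h ▸ hw)
    -- almost totality for C₁
    have hT₁ : ∀ e ∈ F, e ≠ s(x, z) → C₁ e ≠ none := by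
      intro e heF hne
      rcases eq_or_ne e s(x, y₀) with rfl | h1
      · rw [hC₁y₀]; simp
      · rw [hC₁other e h1 hne]; exact hT e heF h1
    -- freeness of γ at x and at last for C₁
    have hγx₁ : vzFree F C₁ γ x := by
      intro f hfF hxf hCf
      rcases eq_or_ne f s(x, z) with rfl | h2
      · rw [hC₁z] at hCf; exact absurd hCf (by simp)
      rcases eq_or_ne f s(x, y₀) with rfl | h1
      · rw [hC₁y₀] at hCf
        obtain rfl : c₁ = γ := by injection hCf
        exact hγx s(x, z) hzF (by simp) hc₁
      · rw [hC₁other f h1 h2] at hCf; exact hγx f hfF hxf hCf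
    have hlast_mem : (z :: l').getLast (List.cons_ne_nil _ _) ∈ z :: l' := List.getLast_mem _
    have hγl₁ : vzFree F C₁ γ ((z :: l').getLast (List.cons_ne_nil _ _)) := by
      obtain ⟨hLx, hLy₀⟩ := htail_ne _ hlast_mem
      have hlast_eq : (y₀ :: z :: l').getLast (List.cons_ne_nil _ _)
          = (z :: l').getLast (List.cons_ne_nil _ _) := List.getLast_cons (List.cons_ne_nil _ _)
      rw [hlast_eq] at hγl
      intro f hfF hLf hCf
      rcases eq_or_ne f s(x, z) with rfl | h2
      · rw [hC₁z] at hCf; exact absurd hCf (by simp)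
      rcases eq_or_ne f s(x, y₀) with rfl | h1
      · rcases Sym2.mem_iff.mp hLf with h | h
        · exact hLx h
        · exact hLy₀ h
      · rw [hC₁other f h1 h2] at hCf; exact hγl f hfF hLf hCf
    exact ih C₁ z hG₁ hF₁ hT₁ γ hγx₁ hγl₁



lemma vzExistsFree (F : Finset (Sym2 V)) (C : Sym2 V → Option (Fin k)) (v : V)
    (h : (F.filter (fun e => v ∈ e)).card < k) : ∃ γ : Fin k, vzFree F C γ v := by
  by_contra h'
  push_neg at h'
  have hsub : (Finset.univ : Finset (Fin k)).image (fun γ => (some γ : Option (Fin k)))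
      ⊆ (F.filter (fun e => v ∈ e)).image C := by
    intro o ho
    simp only [Finset.mem_image, Finset.mem_univ, true_and] at ho
    obtain ⟨γ, rfl⟩ := ho
    have := h' γ
    rw [vzFree] at this
    push_neg at this
    obtain ⟨e, heF, hve, hCe⟩ := this
    exact Finset.mem_image.mpr ⟨e, Finset.mem_filter.mpr ⟨heF, hve⟩, hCe⟩
  have h1 : k ≤ ((F.filter (fun e => v ∈ e)).image C).card := by
    calc k = ((Finset.univ : Finset (Fin k)).image
        (fun γ => (some γ : Option (Fin k)))).card := by
          rw [Finset.card_image_of_injective _ (Option.some_injective _), Finset.card_univ,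
            Fintype.card_fin]
      _ ≤ _ := Finset.card_le_card hsub
  have h2 := Finset.card_image_le (s := F.filter (fun e => v ∈ e)) (f := C)
  omega

lemma vzFan_append (F : Finset (Sym2 V)) (C : Sym2 V → Option (Fin k)) (x z : V) (γ : Fin k)
    (hz : C s(x, z) = some γ) :
    ∀ (l : List V) (y : V), vzFan F C x y l →
      vzFree F C γ ((y :: l).getLast (List.cons_ne_nil _ _)) →
      vzFan F C x y (l ++ [z]) := by
  intro l
  induction l with
  | nil =>
    intro y _ hfree
    simp only [List.getLast_singleton] at hfree
    exact ⟨⟨γ, hz, hfree⟩, trivial⟩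
  | cons w l' ihl =>
    intro y hfan hfree
    obtain ⟨hlink, hrest⟩ := hfan
    refine ⟨hlink, ihl w hrest ?_⟩
    rwa [List.getLast_cons (List.cons_ne_nil _ _)] at hfree

/-- maximality of a fan -/
def vzMaximal (F : Finset (Sym2 V)) (C : Sym2 V → Option (Fin k)) (x y₀ : V) (l : List V) : Prop :=
  ∀ z, z ∉ (y₀ :: l) → s(x, z) ∈ F → ∀ γ : Fin k, C s(x, z) = some γ →
    ¬ vzFree F C γ ((y₀ :: l).getLast (List.cons_ne_nil _ _))

lemma vzMaxFan (F : Finset (Sym2 V)) (C : Sym2 V → Option (Fin k)) (x y₀ : V) :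
    ∀ (n : ℕ) (l : List V), (Finset.univ \ (y₀ :: l).toFinset).card ≤ n →
    VzIsFan F C x y₀ l →
    ∃ l', VzIsFan F C x y₀ l' ∧ vzMaximal F C x y₀ l' := by
  intro n
  induction n with
  | zero =>
    intro l hcard hfan
    refine ⟨l, hfan, ?_⟩
    intro z hz _ _ _ _
    apply hz
    by_cases h : z ∈ (y₀ :: l).toFinset
    · exact List.mem_toFinset.mp h
    · have hmem : z ∈ Finset.univ \ (y₀ :: l).toFinset :=
        Finset.mem_sdiff.mpr ⟨Finset.mem_univ z, h⟩
      rw [Finset.card_eq_zero.mp (Nat.le_zero.mp hcard)] at hmem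
      exact absurd hmem (Finset.notMem_empty z)
  | succ n ihn =>
    intro l hcard hfan
    by_cases hext : ∃ z, z ∉ (y₀ :: l) ∧ s(x, z) ∈ F ∧ ∃ γ : Fin k, C s(x, z) = some γ ∧
        vzFree F C γ ((y₀ :: l).getLast (List.cons_ne_nil _ _))
    · obtain ⟨z, hznotin, hzF, γ, hCz, hfree⟩ := hext
      have hfan' : VzIsFan F C x y₀ (l ++ [z]) := by
        constructor
        · intro y hy
          rcases List.mem_cons.mp hy with rfl | hy'
          · exact hfan.mem y (by simp)
          rcases List.mem_append.mp hy' with h | h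
          · exact hfan.mem y (List.mem_cons_of_mem _ h)
          · simp only [List.mem_singleton] at h
            exact h ▸ hzF
        · have : (y₀ :: (l ++ [z])) = (y₀ :: l) ++ [z] := by simp
          rw [this, List.nodup_append]
          refine ⟨hfan.nodup, List.nodup_singleton z, ?_⟩
          intro a ha b hb h
          simp only [List.mem_singleton] at hb
          subst hb; subst h
          exact hznotin ha
        · exact hfan.head_unc
        · exact vzFan_append F C x z γ hCz l y₀ hfan.chain hfree
      have hz_new : z ∈ Finset.univ \ (y₀ :: l).toFinset :=
        Finset.mem_sdiff.mpr ⟨Finset.mem_univ z, fun h => hznotin (List.mem_toFinset.mp h)⟩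
      have hcard' : (Finset.univ \ (y₀ :: (l ++ [z])).toFinset).card ≤ n := by
        have hsub : Finset.univ \ (y₀ :: (l ++ [z])).toFinset
            ⊆ (Finset.univ \ (y₀ :: l).toFinset).erase z := by
          intro a ha
          rw [Finset.mem_sdiff] at ha
          rw [Finset.mem_erase, Finset.mem_sdiff]
          have haz : a ≠ z := fun h => ha.2 (by simp [h])
          refine ⟨haz, ha.1, fun h => ha.2 ?_⟩
          rw [List.mem_toFinset] at h ⊢
          rcases List.mem_cons.mp h with rfl | h
          · simp
          · simp [List.mem_cons_of_mem, h]
        calc (Finset.univ \ (y₀ :: (l ++ [z])).toFinset).card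
            ≤ ((Finset.univ \ (y₀ :: l).toFinset).erase z).card := Finset.card_le_card hsub
          _ = (Finset.univ \ (y₀ :: l).toFinset).card - 1 := Finset.card_erase_of_mem hz_new
          _ ≤ n := by
              have : 1 ≤ (Finset.univ \ (y₀ :: l).toFinset).card := Finset.card_pos.mpr ⟨z, hz_new⟩
              omega
      exact ihn (l ++ [z]) hcard' hfan'
    · push_neg at hext
      exact ⟨l, hfan, fun z hz hzF γ hCz => hext z hz hzF γ hCz⟩



open scoped Classical in
/-- the α/β subgraph -/
noncomputable def vzH (F : Finset (Sym2 V)) (C : Sym2 V → Option (Fin k)) (α β : Fin k) :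
    SimpleGraph V :=
  SimpleGraph.fromEdgeSet ↑(F.filter (fun e => C e = some α ∨ C e = some β))

open scoped Classical in
/-- edges of the α/β component of `x` -/
noncomputable def vzT (F : Finset (Sym2 V)) (C : Sym2 V → Option (Fin k)) (α β : Fin k)
    (x : V) : Finset (Sym2 V) :=
  F.filter (fun e => (C e = some α ∨ C e = some β) ∧ ∀ v ∈ e, (vzH F C α β).Reachable x v)

/-- Kempe swap of colors α, β on the component of x -/
noncomputable def vzSwap (F : Finset (Sym2 V)) (C : Sym2 V → Option (Fin k)) (α β : Fin k)
    (x : V) : Sym2 V → Option (Fin k) :=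
  fun e => if e ∈ vzT F C α β x then (if C e = some α then some β else some α) else C e

section Swap
variable {F : Finset (Sym2 V)} {C : Sym2 V → Option (Fin k)} {α β : Fin k} {x : V}
  (hND : ∀ e ∈ F, ¬ e.IsDiag) (hG : VzGood F C) (hαβ : α ≠ β)

lemma vzH_adj {a b : V} (hab : a ≠ b) (hF : s(a, b) ∈ F)
    (hc : C s(a, b) = some α ∨ C s(a, b) = some β) : (vzH F C α β).Adj a b := by
  classical
  rw [vzH, SimpleGraph.fromEdgeSet_adj]
  refine ⟨?_, hab⟩
  simp only [Finset.coe_filter, Set.mem_setOf_eq, Finset.mem_coe]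
  exact ⟨hF, hc⟩

lemma vzH_adj_elim {a b : V} (h : (vzH F C α β).Adj a b) :
    s(a, b) ∈ F ∧ (C s(a, b) = some α ∨ C s(a, b) = some β) ∧ a ≠ b := by
  classical
  rw [vzH, SimpleGraph.fromEdgeSet_adj] at h
  obtain ⟨h1, h2⟩ := h
  simp only [Finset.coe_filter, Set.mem_setOf_eq, Finset.mem_coe] at h1
  exact ⟨h1.1, h1.2, h2⟩

include hND in
/-- if one endpoint of an α/β edge is reachable, all endpoints are -/
lemma vzReach_all (e : Sym2 V) (heF : e ∈ F) (hc : C e = some α ∨ C e = some β)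
    (v : V) (hv : v ∈ e) (hr : (vzH F C α β).Reachable x v) :
    ∀ w ∈ e, (vzH F C α β).Reachable x w := by
  induction e with
  | _ a b =>
    have hab : a ≠ b := fun h => hND _ heF (by rw [h] at *; exact Sym2.mk_isDiag_iff.mpr rfl)
    have hadj : (vzH F C α β).Adj a b := vzH_adj hab heF hc
    intro w hw
    rcases Sym2.mem_iff.mp hv with rfl | rfl <;> rcases Sym2.mem_iff.mp hw with rfl | rfl
    · exact hr
    · exact hr.trans hadj.reachable
    · exact hr.trans hadj.symm.reachable
    · exact hr

include hND in
lemma vzT_mem_iff {e : Sym2 V} :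
    e ∈ vzT F C α β x ↔ e ∈ F ∧ (C e = some α ∨ C e = some β) ∧
      ∃ v ∈ e, (vzH F C α β).Reachable x v := by
  classical
  rw [vzT, Finset.mem_filter]
  constructor
  · rintro ⟨h1, h2, h3⟩
    have : ∃ v, v ∈ e := by
      induction e with
      | _ a b => exact ⟨a, by simp⟩
    obtain ⟨v, hv⟩ := this
    exact ⟨h1, h2, v, hv, h3 v hv⟩
  · rintro ⟨h1, h2, v, hv, h3⟩
    exact ⟨h1, h2, vzReach_all hND e h1 h2 v hv h3⟩

lemma vzSwap_not_mem {e : Sym2 V} (h : e ∉ vzT F C α β x) : vzSwap F C α β x e = C e := by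
  rw [vzSwap, if_neg h]

include hαβ in
lemma vzSwap_mem_alpha {e : Sym2 V} (h : e ∈ vzT F C α β x) (hc : C e = some α) :
    vzSwap F C α β x e = some β := by
  rw [vzSwap, if_pos h, if_pos hc]

include hαβ in
lemma vzSwap_mem_beta {e : Sym2 V} (h : e ∈ vzT F C α β x) (hc : C e = some β) :
    vzSwap F C α β x e = some α := by
  have hne : ¬ C e = some α := by
    rw [hc]
    simp only [Option.some.injEq]
    exact fun hh => hαβ hh.symm
  rw [vzSwap, if_pos h, if_neg hne]

include hαβ in
lemma vzSwap_mem_cases {e : Sym2 V} (h : e ∈ vzT F C α β x) :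
    (C e = some α ∧ vzSwap F C α β x e = some β) ∨
    (C e = some β ∧ vzSwap F C α β x e = some α) := by
  classical
  have hc : C e = some α ∨ C e = some β := by
    rw [vzT, Finset.mem_filter] at h
    exact h.2.1
  rcases hc with hc | hc
  · exact Or.inl ⟨hc, vzSwap_mem_alpha hαβ h hc⟩
  · exact Or.inr ⟨hc, vzSwap_mem_beta hαβ h hc⟩

lemma vzT_subset_F : vzT F C α β x ⊆ F := by
  classical
  exact Finset.filter_subset _ _

lemma vzSwap_none_iff (e : Sym2 V) : vzSwap F C α β x e = none ↔ C e = none := by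
  classical
  by_cases h : e ∈ vzT F C α β x
  · rw [vzSwap, if_pos h]
    constructor
    · intro hh
      by_cases hc : C e = some α
      · rw [if_pos hc] at hh; exact absurd hh (by simp)
      · rw [if_neg hc] at hh; exact absurd hh (by simp)
    · intro hh
      exfalso
      rw [vzT, Finset.mem_filter] at h
      rcases h.2.1 with hc | hc <;> rw [hh] at hc <;> exact absurd hc (by simp)
  · rw [vzSwap_not_mem h]

include hND hG hαβ in
lemma vzSwap_good : VzGood F (vzSwap F C α β x) := by
  constructor
  · intro e he
    by_cases h : e ∈ vzT F C α β x
    · exact vzT_subset_F h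
    · rw [vzSwap_not_mem h] at he
      exact hG.dom e he
  · intro e heF f hfF hef v hve hvf γ hCe hCf
    by_cases he : e ∈ vzT F C α β x <;> by_cases hf : f ∈ vzT F C α β x
    · -- both swapped
      rcases vzSwap_mem_cases hαβ he with ⟨h1, h2⟩ | ⟨h1, h2⟩ <;>
        rcases vzSwap_mem_cases hαβ hf with ⟨g1, g2⟩ | ⟨g1, g2⟩
      · exact hG.proper e heF f hfF hef v hve hvf α h1 g1
      · rw [h2] at hCe; rw [g2] at hCf
        exact hαβ (Option.some.inj (hCe.trans hCf.symm)).symm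
      · rw [h2] at hCe; rw [g2] at hCf
        exact hαβ (Option.some.inj (hCe.trans hCf.symm))
      · exact hG.proper e heF f hfF hef v hve hvf β h1 g1
    · -- e swapped, f not: f would have to be in T
      have hvreach : (vzH F C α β).Reachable x v := by
        have := (vzT_mem_iff hND).mp he
        obtain ⟨_, hc, w, hw, hr⟩ := this
        exact vzReach_all hND e heF hc w hw hr v hve
      rw [vzSwap_not_mem hf] at hCf
      rcases vzSwap_mem_cases hαβ he with ⟨h1, h2⟩ | ⟨h1, h2⟩ <;> rw [h2] at hCe
      · -- C' e = some β so γ = β ; C f = some β  → f ∈ T, contradiction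
        have : γ = β := by injection hCe.symm
        subst this
        exact hf ((vzT_mem_iff hND).mpr ⟨hfF, Or.inr hCf, v, hvf, hvreach⟩)
      · have : γ = α := by injection hCe.symm
        subst this
        exact hf ((vzT_mem_iff hND).mpr ⟨hfF, Or.inl hCf, v, hvf, hvreach⟩)
    · have hvreach : (vzH F C α β).Reachable x v := by
        have := (vzT_mem_iff hND).mp hf
        obtain ⟨_, hc, w, hw, hr⟩ := this
        exact vzReach_all hND f hfF hc w hw hr v hvf
      rw [vzSwap_not_mem he] at hCe
      rcases vzSwap_mem_cases hαβ hf with ⟨h1, h2⟩ | ⟨h1, h2⟩ <;> rw [h2] at hCf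
      · have : γ = β := by injection hCf.symm
        subst this
        exact he ((vzT_mem_iff hND).mpr ⟨heF, Or.inr hCe, v, hve, hvreach⟩)
      · have : γ = α := by injection hCf.symm
        subst this
        exact he ((vzT_mem_iff hND).mpr ⟨heF, Or.inl hCe, v, hve, hvreach⟩)
    · rw [vzSwap_not_mem he] at hCe
      rw [vzSwap_not_mem hf] at hCf
      exact hG.proper e heF f hfF hef v hve hvf γ hCe hCf

include hND hαβ in
/-- at a reachable vertex, freeness of α and β swaps -/
lemma vzSwap_free_beta {v : V} (hv : (vzH F C α β).Reachable x v) :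
    vzFree F (vzSwap F C α β x) β v ↔ vzFree F C α v := by
  constructor
  · intro h e heF hve hCe
    have heT : e ∈ vzT F C α β x := (vzT_mem_iff hND).mpr ⟨heF, Or.inl hCe, v, hve, hv⟩
    exact h e heF hve (vzSwap_mem_alpha hαβ heT hCe)
  · intro h e heF hve hCe
    by_cases heT : e ∈ vzT F C α β x
    · rcases vzSwap_mem_cases hαβ heT with ⟨h1, h2⟩ | ⟨h1, h2⟩
      · exact h e heF hve h1
      · rw [h2] at hCe; exact hαβ (by injection hCe)
    · rw [vzSwap_not_mem heT] at hCe
      exact heT ((vzT_mem_iff hND).mpr ⟨heF, Or.inr hCe, v, hve, hv⟩)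

include hND hαβ in
lemma vzSwap_free_alpha {v : V} (hv : (vzH F C α β).Reachable x v) :
    vzFree F (vzSwap F C α β x) α v ↔ vzFree F C β v := by
  constructor
  · intro h e heF hve hCe
    have heT : e ∈ vzT F C α β x := (vzT_mem_iff hND).mpr ⟨heF, Or.inr hCe, v, hve, hv⟩
    exact h e heF hve (vzSwap_mem_beta hαβ heT hCe)
  · intro h e heF hve hCe
    by_cases heT : e ∈ vzT F C α β x
    · rcases vzSwap_mem_cases hαβ heT with ⟨h1, h2⟩ | ⟨h1, h2⟩
      · rw [h2] at hCe; exact hαβ (by injection hCe.symm)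
      · exact h e heF hve h1
    · rw [vzSwap_not_mem heT] at hCe
      exact heT ((vzT_mem_iff hND).mpr ⟨heF, Or.inl hCe, v, hve, hv⟩)

include hND in
/-- at an unreachable vertex, nothing changes -/
lemma vzSwap_free_unreach {v : V} (hv : ¬ (vzH F C α β).Reachable x v) (γ : Fin k) :
    vzFree F (vzSwap F C α β x) γ v ↔ vzFree F C γ v := by
  have key : ∀ e ∈ F, v ∈ e → vzSwap F C α β x e = C e := by
    intro e heF hve
    apply vzSwap_not_mem
    intro heT
    obtain ⟨_, hc, w, hw, hr⟩ := (vzT_mem_iff hND).mp heT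
    exact hv (vzReach_all hND e heF hc w hw hr v hve)
  constructor
  · intro h e heF hve hCe
    exact h e heF hve (key e heF hve ▸ hCe)
  · intro h e heF hve hCe
    rw [key e heF hve] at hCe
    exact h e heF hve hCe

include hαβ in
/-- colors other than α, β are unaffected -/
lemma vzSwap_free_other {v : V} (γ : Fin k) (hγα : γ ≠ α) (hγβ : γ ≠ β) :
    vzFree F (vzSwap F C α β x) γ v ↔ vzFree F C γ v := by
  have key : ∀ e, (vzSwap F C α β x e = some γ ↔ C e = some γ) := by
    intro e
    by_cases heT : e ∈ vzT F C α β x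
    · rcases vzSwap_mem_cases hαβ heT with ⟨h1, h2⟩ | ⟨h1, h2⟩ <;> rw [h1, h2] <;>
        constructor <;> intro hh <;> [exact absurd (by injection hh : β = γ) (Ne.symm hγβ);
          exact absurd (by injection hh : α = γ) (Ne.symm hγα);
          exact absurd (by injection hh : α = γ) (Ne.symm hγα);
          exact absurd (by injection hh : β = γ) (Ne.symm hγβ)]
    · rw [vzSwap_not_mem heT]
  constructor
  · intro h e heF hve hCe
    exact h e heF hve ((key e).mpr hCe)
  · intro h e heF hve hCe
    exact h e heF hve ((key e).mp hCe)

include hαβ in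
lemma vzSwap_value_other {e : Sym2 V} (h1 : C e ≠ some α) (h2 : C e ≠ some β) :
    vzSwap F C α β x e = C e := by
  apply vzSwap_not_mem
  classical
  intro heT
  rw [vzT, Finset.mem_filter] at heT
  rcases heT.2.1 with hc | hc
  · exact h1 hc
  · exact h2 hc

end Swap



open scoped Classical

lemma vzPenult (G : SimpleGraph V) (x v : V) (h : G.Reachable x v) (hne : v ≠ x) :
    ∃ u, G.Adj u v ∧ G.dist x u + 1 = G.dist x v := by
  obtain ⟨p, hp⟩ := h.exists_walk_length_eq_dist
  cases hq : p.reverse with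
  | nil => exact absurd rfl hne
  | @cons _ u' _ hadj q =>
    have hru' : G.Reachable x u' := ⟨q.reverse⟩
    have hlen : q.length + 1 = G.dist x v := by
      have h3 := congrArg (SimpleGraph.Walk.length) hq
      rw [SimpleGraph.Walk.length_reverse] at h3
      rw [hp] at h3
      simpa using h3.symm
    have h1 : G.dist x u' ≤ q.length := by
      have := SimpleGraph.dist_le q.reverse
      rwa [SimpleGraph.Walk.length_reverse] at this
    have h2 : G.dist x v ≤ G.dist x u' + 1 := by
      obtain ⟨r, hr⟩ := hru'.exists_walk_length_eq_dist
      have := SimpleGraph.dist_le (r.concat hadj.symm)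
      rwa [SimpleGraph.Walk.length_concat, hr] at this
    exact ⟨u', hadj.symm, by omega⟩

lemma vzCounting (H : SimpleGraph V) (x w y : V) (hxw : x ≠ w) (hxy : x ≠ y) (hwy : w ≠ y)
    (hrw : H.Reachable x w) (hry : H.Reachable x y)
    (hdeg2 : ∀ v u₁ u₂ u₃, H.Adj v u₁ → H.Adj v u₂ → H.Adj v u₃ →
      u₁ = u₂ ∨ u₁ = u₃ ∨ u₂ = u₃)
    (hx : ∀ u₁ u₂, H.Adj x u₁ → H.Adj x u₂ → u₁ = u₂)
    (hw : ∀ u₁ u₂, H.Adj w u₁ → H.Adj w u₂ → u₁ = u₂)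
    (hy : ∀ u₁ u₂, H.Adj y u₁ → H.Adj y u₂ → u₁ = u₂) : False := by
  -- the induced graph on the component of x
  set H' : SimpleGraph V :=
    { Adj := fun a b => H.Adj a b ∧ H.Reachable x a ∧ H.Reachable x b
      symm := by
        constructor
        intro a b ⟨h1, h2, h3⟩
        exact ⟨h1.symm, h3, h2⟩
      loopless := ⟨fun a ha => H.irrefl ha.1⟩ } with hH'
  have hH'_adj : ∀ a b, H'.Adj a b ↔ H.Adj a b ∧ H.Reachable x a ∧ H.Reachable x b := by
    intro a b; rw [hH']
  -- reachability transfers into H'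
  have hreach' : ∀ v, H.Reachable x v → H'.Reachable x v := by
    intro v hv
    obtain ⟨p⟩ := hv
    clear hrw hry
    have : ∀ (a b : V) (p : H.Walk a b), H.Reachable x a → H'.Reachable a b := by
      intro a b p
      induction p with
      | nil => intro _; exact SimpleGraph.Reachable.refl _
      | @cons c d e hadj q ihq =>
        intro hra
        have hrd : H.Reachable x d := hra.trans hadj.reachable
        have hadj' : H'.Adj c d := ⟨hadj, hra, hrd⟩
        exact hadj'.reachable.trans (ihq hrd)
    exact this x v p (SimpleGraph.Reachable.refl x)
  set S : Finset V := Finset.univ.filter (fun v => H.Reachable x v) with hS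
  have hxS : x ∈ S := Finset.mem_filter.mpr ⟨Finset.mem_univ x, SimpleGraph.Reachable.refl x⟩
  have hwS : w ∈ S := by rw [hS]; simp [hrw]
  have hyS : y ∈ S := by rw [hS]; simp [hry]
  -- degree bounds
  have hdeg'_le : ∀ v (hv2 : ∀ u₁ u₂, H.Adj v u₁ → H.Adj v u₂ → u₁ = u₂), H'.degree v ≤ 1 := by
    intro v hv2
    rw [← SimpleGraph.card_neighborFinset_eq_degree]
    rw [Finset.card_le_one]
    intro a ha b hb
    rw [SimpleGraph.mem_neighborFinset, hH'_adj] at ha hb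
    exact hv2 a b ha.1 hb.1
  have hdeg'2 : ∀ v, H'.degree v ≤ 2 := by
    intro v
    rw [← SimpleGraph.card_neighborFinset_eq_degree]
    by_contra hcon
    push_neg at hcon
    obtain ⟨a, b, c, ha, hb, hc, hab, hac, hbc⟩ := Finset.two_lt_card_iff.mp hcon
    rw [SimpleGraph.mem_neighborFinset, hH'_adj] at ha hb hc
    rcases hdeg2 v a b c ha.1 hb.1 hc.1 with h | h | h
    exacts [hab h, hac h, hbc h]
  have hdeg'0 : ∀ v, v ∉ S → H'.degree v = 0 := by
    intro v hv
    rw [← SimpleGraph.card_neighborFinset_eq_degree, Finset.card_eq_zero]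
    rw [Finset.eq_empty_iff_forall_notMem]
    intro a ha
    rw [SimpleGraph.mem_neighborFinset, hH'_adj] at ha
    exact hv (by rw [hS]; simp [ha.2.1])
  -- lower bound on edges via distance injection
  have hinj : (S.erase x).card ≤ H'.edgeFinset.card := by
    have hmain : ∀ v ∈ S.erase x, ∃ u, H'.Adj u v ∧ H'.dist x u + 1 = H'.dist x v := by
      intro v hv
      rw [Finset.mem_erase, hS] at hv
      obtain ⟨hvx, hv2⟩ := hv
      simp only [Finset.mem_filter, Finset.mem_univ, true_and] at hv2
      exact vzPenult H' x v (hreach' v hv2) hvx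
    classical
    apply Finset.card_le_card_of_injOn (fun v => if hv : v ∈ S.erase x
      then s((hmain v hv).choose, v) else s(v, v))
    · intro v hv
      simp only [Finset.mem_coe] at hv ⊢
      rw [dif_pos hv]
      rw [SimpleGraph.mem_edgeFinset, SimpleGraph.mem_edgeSet]
      exact (hmain v hv).choose_spec.1
    · intro v₁ hv₁ v₂ hv₂ heq
      simp only [Finset.mem_coe] at hv₁ hv₂
      dsimp only at heq
      rw [dif_pos hv₁, dif_pos hv₂] at heq
      rcases Sym2.eq_iff.mp heq with ⟨h1, h2⟩ | ⟨h1, h2⟩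
      · exact h2
      · exfalso
        have d₁ := (hmain v₁ hv₁).choose_spec.2
        have d₂ := (hmain v₂ hv₂).choose_spec.2
        rw [h1] at d₁
        rw [← h2] at d₂
        omega
  -- handshake
  have hhs : ∑ v, H'.degree v = 2 * H'.edgeFinset.card :=
    SimpleGraph.sum_degrees_eq_twice_card_edges H'
  have hsum_eq : ∑ v, H'.degree v = ∑ v ∈ S, H'.degree v := by
    rw [← Finset.sum_subset (Finset.subset_univ S)]
    intro v _ hv
    exact hdeg'0 v hv
  set T3 : Finset V := {x, w, y} with hT3
  have hT3card : T3.card = 3 := by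
    rw [hT3]
    rw [Finset.card_insert_of_notMem (by simp [hxw, hxy]),
      Finset.card_insert_of_notMem (by simp [hwy])]
    simp
  have hT3S : T3 ⊆ S := by
    intro a ha
    rw [hT3] at ha
    simp only [Finset.mem_insert, Finset.mem_singleton] at ha
    rcases ha with rfl | rfl | rfl
    exacts [hxS, hwS, hyS]
  have hsum_le : ∑ v ∈ S, H'.degree v ≤ 2 * S.card - 3 := by
    have hsplit : ∑ v ∈ S \ T3, H'.degree v + ∑ v ∈ T3, H'.degree v = ∑ v ∈ S, H'.degree v :=
      Finset.sum_sdiff hT3S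
    have h1 : ∑ v ∈ T3, H'.degree v ≤ 3 := by
      calc ∑ v ∈ T3, H'.degree v ≤ ∑ _v ∈ T3, 1 := by
            apply Finset.sum_le_sum
            intro v hv
            rw [hT3] at hv
            simp only [Finset.mem_insert, Finset.mem_singleton] at hv
            rcases hv with rfl | rfl | rfl
            exacts [hdeg'_le v hx, hdeg'_le v hw, hdeg'_le v hy]
        _ = 3 := by rw [Finset.sum_const, hT3card]; simp
    have h2 : ∑ v ∈ S \ T3, H'.degree v ≤ 2 * (S.card - 3) := by
      calc ∑ v ∈ S \ T3, H'.degree v ≤ ∑ _v ∈ S \ T3, 2 :=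
            Finset.sum_le_sum (fun v _ => hdeg'2 v)
        _ = (S \ T3).card * 2 := by rw [Finset.sum_const]; simp [Nat.mul_comm]
        _ = (S.card - 3) * 2 := by rw [Finset.card_sdiff_of_subset hT3S, hT3card]
        _ = 2 * (S.card - 3) := Nat.mul_comm _ _
    have hScard : 3 ≤ S.card := hT3card ▸ Finset.card_le_card hT3S
    omega
  have hcard_erase : (S.erase x).card = S.card - 1 := Finset.card_erase_of_mem hxS
  have hScard : 3 ≤ S.card := hT3card ▸ Finset.card_le_card hT3S
  omega



lemma vzFan_split (F : Finset (Sym2 V)) (C : Sym2 V → Option (Fin k)) (x z : V) (m₂ : List V) :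
    ∀ (m₁ : List V) (y : V), vzFan F C x y (m₁ ++ z :: m₂) →
      vzFan F C x y m₁ ∧
      ∃ γ : Fin k, C s(x, z) = some γ ∧ vzFree F C γ ((y :: m₁).getLast (List.cons_ne_nil _ _)) := by
  intro m₁
  induction m₁ with
  | nil =>
    intro y hfan
    obtain ⟨hlink, _⟩ := hfan
    exact ⟨trivial, by simpa using hlink⟩
  | cons a m₁' ihm =>
    intro y hfan
    obtain ⟨hlink, hrest⟩ := hfan
    obtain ⟨h1, h2⟩ := ihm a hrest
    refine ⟨⟨hlink, h1⟩, ?_⟩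
    rwa [List.getLast_cons (List.cons_ne_nil _ _)]

lemma vzFan_glue (F : Finset (Sym2 V)) (C : Sym2 V → Option (Fin k)) (x z : V) (m₂ : List V)
    (hm₂ : vzFan F C x z m₂) :
    ∀ (m₁ : List V) (y : V), vzFan F C x y m₁ →
      (∃ γ : Fin k, C s(x, z) = some γ ∧ vzFree F C γ ((y :: m₁).getLast (List.cons_ne_nil _ _))) →
      vzFan F C x y (m₁ ++ z :: m₂) := by
  intro m₁
  induction m₁ with
  | nil =>
    intro y _ hlink
    simp only [List.getLast_singleton] at hlink
    exact ⟨hlink, hm₂⟩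
  | cons a m₁' ihm =>
    intro y hfan hlink
    obtain ⟨hl, hrest⟩ := hfan
    rw [List.getLast_cons (List.cons_ne_nil _ _)] at hlink
    exact ⟨hl, ihm a hrest hlink⟩

set_option maxHeartbeats 1000000 in
lemma vzExtend (F : Finset (Sym2 V)) (hND : ∀ e ∈ F, ¬ e.IsDiag)
    (hdeg : ∀ v : V, (F.filter (fun e => v ∈ e)).card < k)
    (C : Sym2 V → Option (Fin k)) (hG : VzGood F C)
    (x y₀ : V) (he₀ : s(x, y₀) ∈ F) (hunc : C s(x, y₀) = none)
    (hT : ∀ e ∈ F, e ≠ s(x, y₀) → C e ≠ none) :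
    ∃ C' : Sym2 V → Option (Fin k), VzGood F C' ∧ ∀ e ∈ F, C' e ≠ none := by
  -- maximal fan
  have hfan0 : VzIsFan F C x y₀ [] := by
    refine ⟨?_, by simp, hunc, trivial⟩
    intro y hy
    simp only [List.mem_singleton] at hy
    subst hy; exact he₀
  obtain ⟨l, hfan, hmax⟩ :=
    vzMaxFan F C x y₀ (Finset.univ \ (y₀ :: ([] : List V)).toFinset).card [] le_rfl hfan0
  set ys : List V := y₀ :: l with hys
  set yt : V := ys.getLast (List.cons_ne_nil _ _) with hyt
  have hyt_mem : yt ∈ ys := List.getLast_mem _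
  have hys_memF : ∀ u ∈ ys, s(x, u) ∈ F := hfan.mem
  have hys_ne_x : ∀ u ∈ ys, u ≠ x := by
    intro u hu h
    exact hND _ (hys_memF u hu) (by rw [h]; exact Sym2.mk_isDiag_iff.mpr rfl)
  obtain ⟨β, hβ⟩ := vzExistsFree F C yt (hdeg yt)
  by_cases hβx : vzFree F C β x
  · exact vzRotate F hND x l C y₀ hG hfan hT β hβx hβ
  obtain ⟨α, hα⟩ := vzExistsFree F C x (hdeg x)
  by_cases hαt : vzFree F C α yt
  · exact vzRotate F hND x l C y₀ hG hfan hT α hα hαt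
  have hαβ : α ≠ β := fun h => hβx (h ▸ hα)
  -- the β-edge at x
  have hzex : ∃ z, s(x, z) ∈ F ∧ C s(x, z) = some β ∧ z ≠ x := by
    rw [vzFree] at hβx
    push_neg at hβx
    obtain ⟨e, heF, hxe, hCe⟩ := hβx
    obtain ⟨z, rfl⟩ := Sym2.mem_iff_exists.mp hxe
    refine ⟨z, heF, hCe, ?_⟩
    intro h
    exact hND _ heF (by rw [h]; exact Sym2.mk_isDiag_iff.mpr rfl)
  obtain ⟨z, hzF, hzβ, hzx⟩ := hzex
  have hzys : z ∈ ys := by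
    by_contra hzys
    exact hmax z hzys hzF β hzβ hβ
  have hzy₀ : z ≠ y₀ := by
    intro h
    rw [h, hunc] at hzβ
    exact absurd hzβ (by simp)
  have hzyt : z ≠ yt := by
    intro h
    exact hβ s(x, z) hzF (by rw [Sym2.mem_iff]; right; exact h.symm) hzβ
  have hzl : z ∈ l := by
    rcases List.mem_cons.mp hzys with h | h
    · exact absurd h hzy₀
    · exact h
  -- split the fan list at z
  obtain ⟨p, q, hpq⟩ := List.append_of_mem hzl
  have hys_eq : ys = (y₀ :: p) ++ z :: q := by rw [hys, hpq]; simp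
  -- the prefix fan and the link
  have hsplit := vzFan_split F C x z q p y₀ (by rw [← hpq]; exact hfan.chain)
  obtain ⟨hfanp, γlink, hγlink, hγfree⟩ := hsplit
  have hγβ : γlink = β := by
    rw [hγlink] at hzβ; injection hzβ
  rw [hγβ] at hγfree
  set w : V := (y₀ :: p).getLast (List.cons_ne_nil _ _) with hw
  have hwmem : w ∈ y₀ :: p := List.getLast_mem _
  have hwys : w ∈ ys := by rw [hys_eq]; exact List.mem_append_left _ hwmem
  -- nodup structure
  have hnodup_app : ((y₀ :: p) ++ z :: q).Nodup := by rw [← hys_eq]; exact hfan.nodup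
  have hznotin_p : z ∉ y₀ :: p := by
    rw [List.nodup_append] at hnodup_app
    exact fun h => hnodup_app.2.2 z h z (by simp) rfl
  have hq_ne_z : ∀ u ∈ q, u ≠ z := by
    rw [List.nodup_append] at hnodup_app
    have := hnodup_app.2.1
    rw [List.nodup_cons] at this
    intro u hu h
    exact this.1 (h ▸ hu)
  have hytlast : yt = (z :: q).getLast (List.cons_ne_nil _ _) := by
    rw [hyt]
    have key : ∀ (L : List V) (hL : L ≠ []), L = (y₀ :: p) ++ z :: q →
        L.getLast hL = (z :: q).getLast (List.cons_ne_nil _ _) := by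
      intro L hL hEq
      subst hEq
      exact List.getLast_append_of_ne_nil _ (List.cons_ne_nil _ _)
    exact key ys _ (by rw [hys_eq])
  have hyt_in_q : yt ∈ z :: q := by
    rw [hytlast]
    exact List.getLast_mem _
  have hwyt : w ≠ yt := by
    rw [List.nodup_append] at hnodup_app
    exact fun h => hnodup_app.2.2 w hwmem w (h ▸ hyt_in_q) rfl
  have hmemp : ∀ u ∈ p, s(x, u) ∈ F := by
    intro u hu
    apply hys_memF
    rw [hys_eq]
    exact List.mem_append_left _ (List.mem_cons_of_mem _ hu)
  have hmemq : ∀ u ∈ q, s(x, u) ∈ F := by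
    intro u hu
    apply hys_memF
    rw [hys_eq]
    exact List.mem_append_right _ (List.mem_cons_of_mem _ hu)
  have hwx : w ≠ x := hys_ne_x w hwys
  have hytx : yt ≠ x := hys_ne_x yt hyt_mem
  -- the swap
  set C' : Sym2 V → Option (Fin k) := vzSwap F C α β x with hC'
  have hG' : VzGood F C' := vzSwap_good hND hG hαβ
  have hT' : ∀ e ∈ F, e ≠ s(x, y₀) → C' e ≠ none := by
    intro e heF hne h
    exact hT e heF hne ((vzSwap_none_iff e).mp h)
  have hrx : (vzH F C α β).Reachable x x := SimpleGraph.Reachable.refl x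
  have hβx' : vzFree F C' β x := (vzSwap_free_beta hND hαβ hrx).mpr hα
  -- uniqueness of the β-edge at x in C
  have hβunique : ∀ u, s(x, u) ∈ F → C s(x, u) = some β → u = z := by
    intro u huF hCu
    by_contra hne
    have : s(x, u) ≠ s(x, z) := fun h => hne (Sym2.congr_right.mp h)
    exact hG.proper s(x, u) huF s(x, z) hzF this x (by simp) (by simp) β hCu hzβ
  -- transfer of fan chains avoiding z
  have htransfer : ∀ (m : List V) (y : V), (∀ u ∈ m, u ≠ z) → (∀ u ∈ m, s(x, u) ∈ F) →
      vzFan F C x y m → vzFan F C' x y m := by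
    intro m
    induction m with
    | nil => intro y _ _ _; trivial
    | cons u m' ihm =>
      intro y hmz hmF hfanm
      obtain ⟨⟨γ, hγ, hγf⟩, hrest⟩ := hfanm
      have huF : s(x, u) ∈ F := hmF u (by simp)
      have hγα : γ ≠ α := by
        intro h
        exact hα s(x, u) huF (by simp) (h ▸ hγ)
      have hγβ : γ ≠ β := by
        intro h
        exact hmz u (by simp) (hβunique u huF (h ▸ hγ))
      refine ⟨⟨γ, ?_, ?_⟩, ?_⟩
      · rw [hC', vzSwap_value_other hαβ (by rw [hγ]; simp [hγα]) (by rw [hγ]; simp [hγβ])]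
        exact hγ
      · exact (vzSwap_free_other hαβ γ hγα hγβ).mpr hγf
      · exact ihm u (fun a ha => hmz a (by simp [ha])) (fun a ha => hmF a (by simp [ha])) hrest
  by_cases hwβ' : vzFree F C' β w
  · -- Case A : rotate the prefix fan in C'
    have hfanp' : VzIsFan F C' x y₀ p := by
      constructor
      · intro u hu
        exact hys_memF u (by rw [hys_eq]; exact List.mem_append_left _ hu)
      · rw [List.nodup_append] at hnodup_app
        exact hnodup_app.1
      · rw [hC', vzSwap_none_iff]; exact hunc
      · apply htransfer p y₀
        · intro u hu h
          exact hznotin_p (by rw [← h] at hznotin_p ⊢; exact List.mem_cons_of_mem _ hu)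
        · exact hmemp
        · exact hfanp
    exact vzRotate F hND x p C' y₀ hG' hfanp' hT' β hβx' hwβ'
  · -- Case B
    have hwβC : vzFree F C β w := hγfree
    have hwreach : (vzH F C α β).Reachable x w := by
      by_contra hnr
      exact hwβ' ((vzSwap_free_unreach hND hnr β).mpr hwβC)
    -- yt is not in the component of x
    have hytnr : ¬ (vzH F C α β).Reachable x yt := by
      intro hytr
      set H : SimpleGraph V := vzH F C α β with hH
      have hedge_distinct : ∀ (v a b : V), H.Adj v a → H.Adj v b → a ≠ b →
          s(v, a) ≠ s(v, b) := by
        intro v a b _ _ hab h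
        exact hab (Sym2.congr_right.mp h)
      have pigeon : ∀ (v a b : V), H.Adj v a → H.Adj v b → a ≠ b →
          (C s(v, a) = some α ∧ C s(v, b) = some β) ∨
          (C s(v, a) = some β ∧ C s(v, b) = some α) := by
        intro v a b ha hb hab
        obtain ⟨haF, hac, _⟩ := vzH_adj_elim ha
        obtain ⟨hbF, hbc, _⟩ := vzH_adj_elim hb
        have hne := hedge_distinct v a b ha hb hab
        rcases hac with h1 | h1 <;> rcases hbc with h2 | h2
        · exact absurd (hG.proper _ haF _ hbF hne v (by simp) (by simp) α h1 h2) (by simp)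
        · exact Or.inl ⟨h1, h2⟩
        · exact Or.inr ⟨h1, h2⟩
        · exact absurd (hG.proper _ haF _ hbF hne v (by simp) (by simp) β h1 h2) (by simp)
      apply vzCounting H x w yt (Ne.symm hwx) (Ne.symm hytx) hwyt hwreach hytr
      · -- max degree 2
        intro v u₁ u₂ u₃ h1 h2 h3
        by_contra hcon
        push_neg at hcon
        obtain ⟨h12, h13, h23⟩ := hcon
        rcases pigeon v u₁ u₂ h1 h2 h12 with ⟨a1, a2⟩ | ⟨a1, a2⟩ <;>
          rcases pigeon v u₁ u₃ h1 h3 h13 with ⟨b1, b2⟩ | ⟨b1, b2⟩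
        · exact absurd (hG.proper _ (vzH_adj_elim h2).1 _ (vzH_adj_elim h3).1
            (hedge_distinct v u₂ u₃ h2 h3 h23) v (by simp) (by simp) β a2 b2) (by simp)
        · rw [a1] at b1; exact absurd (by injection b1 : α = β) hαβ
        · rw [a1] at b1; exact absurd (by injection b1 : β = α) (Ne.symm hαβ)
        · exact absurd (hG.proper _ (vzH_adj_elim h2).1 _ (vzH_adj_elim h3).1
            (hedge_distinct v u₂ u₃ h2 h3 h23) v (by simp) (by simp) α a2 b2) (by simp)
      · -- x has degree ≤ 1 (only the β edge, since α is free at x)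
        intro u₁ u₂ h1 h2
        have k1 : C s(x, u₁) = some β := by
          obtain ⟨hF1, hc1, _⟩ := vzH_adj_elim h1
          rcases hc1 with h | h
          · exact absurd h (hα _ hF1 (by simp))
          · exact h
        have k2 : C s(x, u₂) = some β := by
          obtain ⟨hF2, hc2, _⟩ := vzH_adj_elim h2
          rcases hc2 with h | h
          · exact absurd h (hα _ hF2 (by simp))
          · exact h
        rw [hβunique u₁ (vzH_adj_elim h1).1 k1, hβunique u₂ (vzH_adj_elim h2).1 k2]
      · -- w has degree ≤ 1 (no β edge since β free at w)
        intro u₁ u₂ h1 h2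
        have k1 : C s(w, u₁) = some α := by
          obtain ⟨hF1, hc1, _⟩ := vzH_adj_elim h1
          rcases hc1 with h | h
          · exact h
          · exact absurd h (hwβC _ hF1 (by simp))
        have k2 : C s(w, u₂) = some α := by
          obtain ⟨hF2, hc2, _⟩ := vzH_adj_elim h2
          rcases hc2 with h | h
          · exact h
          · exact absurd h (hwβC _ hF2 (by simp))
        by_contra hne
        exact absurd (hG.proper _ (vzH_adj_elim h1).1 _ (vzH_adj_elim h2).1
          (hedge_distinct w u₁ u₂ h1 h2 hne) w (by simp) (by simp) α k1 k2) (by simp)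
      · -- yt has degree ≤ 1 (no β edge since β free at yt)
        intro u₁ u₂ h1 h2
        have k1 : C s(yt, u₁) = some α := by
          obtain ⟨hF1, hc1, _⟩ := vzH_adj_elim h1
          rcases hc1 with h | h
          · exact h
          · exact absurd h (hβ _ hF1 (by simp))
        have k2 : C s(yt, u₂) = some α := by
          obtain ⟨hF2, hc2, _⟩ := vzH_adj_elim h2
          rcases hc2 with h | h
          · exact h
          · exact absurd h (hβ _ hF2 (by simp))
        by_contra hne
        exact absurd (hG.proper _ (vzH_adj_elim h1).1 _ (vzH_adj_elim h2).1
          (hedge_distinct yt u₁ u₂ h1 h2 hne) yt (by simp) (by simp) α k1 k2) (by simp)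
    -- full fan is valid in C'
    have hzT : s(x, z) ∈ vzT F C α β x := by
      refine (vzT_mem_iff hND).mpr ⟨hzF, Or.inr hzβ, x, by simp, hrx⟩
    have hlink' : C' s(x, z) = some α := by
      rw [hC']; exact vzSwap_mem_beta hαβ hzT hzβ
    have hwα' : vzFree F C' α w := (vzSwap_free_alpha hND hαβ hwreach).mpr hwβC
    have hfanl' : VzIsFan F C' x y₀ l := by
      constructor
      · exact hfan.mem
      · exact hfan.nodup
      · rw [hC', vzSwap_none_iff]; exact hunc
      · -- glue: prefix (transferred), link at z (swapped to α), suffix (transferred)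
        rw [hpq]
        apply vzFan_glue F C' x z q
        · -- suffix fan in C'
          have hsuffix : vzFan F C x z q := by
            have := hfan.chain
            rw [hpq] at this
            -- extract the fan from position after z
            clear hγfree hγlink
            revert this
            have extract : ∀ (m₁ : List V) (y : V), vzFan F C x y (m₁ ++ z :: q) →
                vzFan F C x z q := by
              intro m₁
              induction m₁ with
              | nil => intro y h; exact h.2
              | cons a m₁' ihm => intro y h; exact ihm a h.2
            exact extract p y₀
          exact htransfer q z hq_ne_z hmemq hsuffix
        · -- prefix fan in C'
          apply htransfer p y₀
          · intro u hu h
            exact hznotin_p (h ▸ List.mem_cons_of_mem _ hu)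
          · exact hmemp
          · exact hfanp
        · exact ⟨α, hlink', hwα'⟩
    have hytβ' : vzFree F C' β yt := (vzSwap_free_unreach hND hytnr β).mpr hβ
    have : vzFree F C' β ((y₀ :: l).getLast (List.cons_ne_nil _ _)) := hytβ'
    exact vzRotate F hND x l C' y₀ hG' hfanl' hT' β hβx' this



theorem vzVizing (F : Finset (Sym2 V)) (hND : ∀ e ∈ F, ¬ e.IsDiag)
    (hdeg : ∀ v : V, (F.filter (fun e => v ∈ e)).card < k) :
    ∃ C : Sym2 V → Option (Fin k), VzGood F C ∧ ∀ e ∈ F, C e ≠ none := by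
  induction F using Finset.strongInduction with
  | _ F ih =>
    rcases Finset.eq_empty_or_nonempty F with rfl | ⟨e₀, he₀⟩
    · exact ⟨fun _ => none, ⟨fun e he => absurd rfl he, fun e he => absurd he (by simp)⟩,
        fun e he => absurd he (by simp)⟩
    · obtain ⟨⟨x, y₀⟩, rfl⟩ := Quot.exists_rep e₀
      have hsub : F.erase s(x, y₀) ⊂ F := Finset.erase_ssubset he₀
      have hND' : ∀ e ∈ F.erase s(x, y₀), ¬ e.IsDiag :=
        fun e he => hND e (Finset.mem_of_mem_erase he)
      have hdeg' : ∀ v : V, ((F.erase s(x, y₀)).filter (fun e => v ∈ e)).card < k := by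
        intro v
        calc ((F.erase s(x, y₀)).filter (fun e => v ∈ e)).card
            ≤ (F.filter (fun e => v ∈ e)).card :=
              Finset.card_le_card (Finset.filter_subset_filter _ (Finset.erase_subset _ _))
          _ < k := hdeg v
      obtain ⟨C, hG, htot⟩ := ih (F.erase s(x, y₀)) hsub hND' hdeg'
      have hGF : VzGood F C := by
        constructor
        · exact fun e he => Finset.mem_of_mem_erase (hG.dom e he)
        · intro e heF f hfF hef v hve hvf γ hCe hCf
          exact hG.proper e (hG.dom e (by rw [hCe]; simp)) f (hG.dom f (by rw [hCf]; simp))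
            hef v hve hvf γ hCe hCf
      have hunc : C s(x, y₀) = none := by
        by_contra h
        exact absurd (hG.dom _ h) (Finset.notMem_erase _ _)
      have hT : ∀ e ∈ F, e ≠ s(x, y₀) → C e ≠ none :=
        fun e heF hne => htot e (Finset.mem_erase.mpr ⟨hne, heF⟩)
      exact vzExtend F hND hdeg C hGF x y₀ he₀ hunc hT

/-- Existence of a heavy matching in classes of a proper edge coloring. -/
theorem vzHeavyMatching (E : Finset (V × V))
    (hsimple : ∀ e ∈ E, e.1 ≠ e.2)
    (hnodup : ∀ e ∈ E, (e.2, e.1) ∉ E)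
    (δ : V × V → ℝ)
    (D : ℕ)
    (hdeg : ∀ v : V, (E.filter (fun e => e.1 = v ∨ e.2 = v)).card ≤ D) :
    ∃ M : Finset (V × V), M ⊆ E ∧
      (∀ e ∈ M, ∀ f ∈ M, e ≠ f → e.1 ≠ f.1 ∧ e.1 ≠ f.2 ∧ e.2 ≠ f.1 ∧ e.2 ≠ f.2) ∧
      (∑ e ∈ E, δ e) / ((D : ℝ) + 1) ≤ ∑ e ∈ M, δ e := by
  classical
  set mk : V × V → Sym2 V := fun e => s(e.1, e.2) with hmk
  have hinj : Set.InjOn mk ↑E := by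
    intro e he f hf heq
    simp only [Finset.mem_coe] at he hf
    rcases Sym2.eq_iff.mp heq with ⟨h1, h2⟩ | ⟨h1, h2⟩
    · exact Prod.ext h1 h2
    · exfalso
      have : e = (f.2, f.1) := Prod.ext h1 h2
      rw [this] at he
      exact hnodup f hf he
  set F : Finset (Sym2 V) := E.image mk with hF
  have hND : ∀ e ∈ F, ¬ e.IsDiag := by
    intro e he
    rw [hF, Finset.mem_image] at he
    obtain ⟨f, hf, rfl⟩ := he
    rw [hmk]
    exact fun h => hsimple f hf (Sym2.mk_isDiag_iff.mp h)
  have hdegF : ∀ v : V, (F.filter (fun e => v ∈ e)).card < D + 1 := by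
    intro v
    have heq : F.filter (fun e => v ∈ e) = (E.filter (fun e => v ∈ mk e)).image mk := by
      rw [hF, Finset.filter_image]
    have hpred : E.filter (fun e => v ∈ mk e) = E.filter (fun e => e.1 = v ∨ e.2 = v) := by
      apply Finset.filter_congr
      intro e _
      rw [hmk]
      simp only [Sym2.mem_iff, eq_comm]
    have hsubset : (↑(E.filter (fun e => v ∈ mk e)) : Set (V × V)) ⊆ ↑E := by
      intro a ha
      simp only [Finset.coe_filter, Set.mem_setOf_eq] at ha
      exact ha.1
    have hcard : ((E.filter (fun e => v ∈ mk e)).image mk).card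
        = (E.filter (fun e => v ∈ mk e)).card :=
      Finset.card_image_of_injOn (hinj.mono hsubset)
    rw [heq, hcard, hpred]
    exact Nat.lt_succ_of_le (hdeg v)
  obtain ⟨C, hG, htot⟩ := vzVizing (k := D + 1) F hND hdegF
  set col : V × V → Fin (D + 1) := fun e => (C (mk e)).getD ⟨0, Nat.succ_pos D⟩ with hcol
  have hCcol : ∀ e ∈ E, C (mk e) = some (col e) := by
    intro e he
    have hmem : mk e ∈ F := Finset.mem_image_of_mem mk he
    have := htot (mk e) hmem
    rw [hcol]
    cases hC : C (mk e) with
    | none => exact absurd hC this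
    | some c =>
      dsimp only
      rw [hC]
      simp
  -- color classes
  set Mi : Fin (D + 1) → Finset (V × V) := fun i => E.filter (fun e => col e = i) with hMi
  have hmatch : ∀ i, ∀ e ∈ Mi i, ∀ f ∈ Mi i, e ≠ f →
      e.1 ≠ f.1 ∧ e.1 ≠ f.2 ∧ e.2 ≠ f.1 ∧ e.2 ≠ f.2 := by
    intro i e he f hf hef
    rw [hMi, Finset.mem_filter] at he hf
    obtain ⟨heE, hei⟩ := he
    obtain ⟨hfE, hfi⟩ := hf
    have hmkef : mk e ≠ mk f := fun h => hef (hinj (Finset.mem_coe.mpr heE)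
      (Finset.mem_coe.mpr hfE) h)
    have hnoshare : ∀ v : V, v ∈ mk e → v ∈ mk f → False := by
      intro v hv1 hv2
      exact hG.proper (mk e) (Finset.mem_image_of_mem mk heE) (mk f)
        (Finset.mem_image_of_mem mk hfE) hmkef v hv1 hv2 i
        (by rw [hCcol e heE, hei]) (by rw [hCcol f hfE, hfi])
    refine ⟨?_, ?_, ?_, ?_⟩ <;> intro h
    · exact hnoshare e.1 (Sym2.mem_mk_left e.1 e.2) (h ▸ Sym2.mem_mk_left f.1 f.2)
    · exact hnoshare e.1 (Sym2.mem_mk_left e.1 e.2) (h ▸ Sym2.mem_mk_right f.1 f.2)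
    · exact hnoshare e.2 (Sym2.mem_mk_right e.1 e.2) (h ▸ Sym2.mem_mk_left f.1 f.2)
    · exact hnoshare e.2 (Sym2.mem_mk_right e.1 e.2) (h ▸ Sym2.mem_mk_right f.1 f.2)
  -- fiberwise sum
  have hfib : ∑ i : Fin (D + 1), ∑ e ∈ Mi i, δ e = ∑ e ∈ E, δ e := by
    rw [hMi]
    exact Finset.sum_fiberwise_of_maps_to (fun e _ => Finset.mem_univ (col e)) δ
  -- some class is heavy
  have havg : ∃ i : Fin (D + 1), (∑ e ∈ E, δ e) / ((D : ℝ) + 1) ≤ ∑ e ∈ Mi i, δ e := by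
    have hne : (Finset.univ : Finset (Fin (D + 1))).Nonempty := ⟨⟨0, Nat.succ_pos D⟩,
      Finset.mem_univ _⟩
    have hsum : ∑ _i : Fin (D + 1), (∑ e ∈ E, δ e) / ((D : ℝ) + 1)
        ≤ ∑ i : Fin (D + 1), ∑ e ∈ Mi i, δ e := by
      rw [hfib, Finset.sum_const, Finset.card_univ, Fintype.card_fin]
      have hD : ((D : ℝ) + 1) ≠ 0 := by positivity
      rw [nsmul_eq_mul]
      push_cast
      rw [mul_comm, div_mul_cancel₀ _ hD]
    obtain ⟨i, _, hi⟩ := Finset.exists_le_of_sum_le hne hsum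
    exact ⟨i, hi⟩
  obtain ⟨i, hi⟩ := havg
  exact ⟨Mi i, Finset.filter_subset _ _, hmatch i, hi⟩

end Vizing

/-- For a pairwise MRF with nonnegative potentials on a finite
simple graph of maximum degree `dstar`,
`log Z ≥ (1/(dstar+1)) ∑_{(i,j)∈E} (ψ_{ij}^U − ψ_{ij}^L)`. -/
theorem log_partition_ge {V S : Type*} [Fintype V] [DecidableEq V]
    [Fintype S] [Nonempty S]
    (E : Finset (V × V))
    (hsimple : ∀ e ∈ E, e.1 ≠ e.2)
    (hnodup : ∀ e ∈ E, (e.2, e.1) ∉ E)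
    (φ : V → S → ℝ) (ψ : V × V → S → S → ℝ)
    (hφ : ∀ v s, 0 ≤ φ v s) (hψ : ∀ e a b, 0 ≤ ψ e a b)
    (dstar : ℕ)
    (hdeg : ∀ v : V, (E.filter (fun e => e.1 = v ∨ e.2 = v)).card ≤ dstar) :
    (1 / ((dstar : ℝ) + 1)) * ∑ e ∈ E, (psiU ψ e - psiL ψ e)
      ≤ Real.log (mrfZ E φ ψ) := by
  classical
  have hmax : ∀ e : V × V, ∃ p : S × S, ∀ q : S × S, ψ e q.1 q.2 ≤ ψ e p.1 p.2 :=
    fun e => Finite.exists_max (fun p : S × S => ψ e p.1 p.2)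
  set pm : (V × V) → S × S := fun e => (hmax e).choose with hpm
  have hpsiU : ∀ e, psiU ψ e = ψ e (pm e).1 (pm e).2 := by
    intro e
    rw [psiU]
    apply le_antisymm
    · exact ciSup_le (f := fun q : S × S => ψ e q.1 q.2) (fun q => (hmax e).choose_spec q)
    · exact le_ciSup (f := fun q : S × S => ψ e q.1 q.2) (Finite.bddAbove_range _) (pm e)
  have hpsiL_le : ∀ (e : V × V) (a b : S), psiL ψ e ≤ ψ e a b := by
    intro e a b
    rw [psiL]
    exact ciInf_le (f := fun q : S × S => ψ e q.1 q.2) (Finite.bddBelow_range _) (a, b)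
  have hpsiL_nonneg : ∀ e, 0 ≤ psiL ψ e := by
    intro e
    rw [psiL]
    exact le_ciInf (f := fun q : S × S => ψ e q.1 q.2) (fun p => hψ e p.1 p.2)
  obtain ⟨M, hME, hmatch, hheavy⟩ := vzHeavyMatching E hsimple hnodup
    (fun e => psiU ψ e - psiL ψ e) dstar hdeg
  -- the assignment realizing the maxima on the matching M
  set x₀ : V → S := fun v =>
    if h1 : ∃ e, e ∈ M ∧ e.1 = v then (pm h1.choose).1
    else if h2 : ∃ e, e ∈ M ∧ e.2 = v then (pm h2.choose).2
    else Classical.arbitrary S with hx₀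
  have hx₀e : ∀ e ∈ M, x₀ e.1 = (pm e).1 ∧ x₀ e.2 = (pm e).2 := by
    intro e heM
    have heE := hME heM
    constructor
    · have h1 : ∃ f, f ∈ M ∧ f.1 = e.1 := ⟨e, heM, rfl⟩
      rw [hx₀]
      dsimp only
      rw [dif_pos h1]
      obtain ⟨hfM, hf1⟩ := h1.choose_spec
      by_cases hfe : h1.choose = e
      · rw [hfe]
      · exact absurd hf1 (hmatch _ hfM _ heM hfe).1
    · have h1 : ¬ ∃ f, f ∈ M ∧ f.1 = e.2 := by
        rintro ⟨f, hfM, hf1⟩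
        by_cases hfe : f = e
        · exact hsimple e heE (hfe ▸ hf1)
        · exact (hmatch f hfM e heM hfe).2.1 hf1
      have h2 : ∃ f, f ∈ M ∧ f.2 = e.2 := ⟨e, heM, rfl⟩
      rw [hx₀]
      dsimp only
      rw [dif_neg h1, dif_pos h2]
      obtain ⟨hfM, hf2⟩ := h2.choose_spec
      by_cases hfe : h2.choose = e
      · rw [hfe]
      · exact absurd hf2 (hmatch _ hfM _ heM hfe).2.2.2
  have hψx₀M : ∀ e ∈ M, ψ e (x₀ e.1) (x₀ e.2) = psiU ψ e := by
    intro e heM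
    obtain ⟨h1, h2⟩ := hx₀e e heM
    rw [h1, h2, hpsiU e]
  have hsumM : ∑ e ∈ M, (psiU ψ e - psiL ψ e) ≤ ∑ e ∈ E, ψ e (x₀ e.1) (x₀ e.2) := by
    have hsplit : ∑ e ∈ E \ M, ψ e (x₀ e.1) (x₀ e.2) + ∑ e ∈ M, ψ e (x₀ e.1) (x₀ e.2)
        = ∑ e ∈ E, ψ e (x₀ e.1) (x₀ e.2) := Finset.sum_sdiff hME
    calc ∑ e ∈ M, (psiU ψ e - psiL ψ e) ≤ ∑ e ∈ M, psiU ψ e := by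
          apply Finset.sum_le_sum
          intro e _
          have := hpsiL_nonneg e
          linarith
      _ = ∑ e ∈ M, ψ e (x₀ e.1) (x₀ e.2) :=
          Finset.sum_congr rfl (fun e he => (hψx₀M e he).symm)
      _ ≤ ∑ e ∈ E \ M, ψ e (x₀ e.1) (x₀ e.2) + ∑ e ∈ M, ψ e (x₀ e.1) (x₀ e.2) := by
          have h0 : (0:ℝ) ≤ ∑ e ∈ E \ M, ψ e (x₀ e.1) (x₀ e.2) :=
            Finset.sum_nonneg (fun e _ => hψ e _ _)
          linarith
      _ = _ := hsplit
  have henergy : ∑ e ∈ M, (psiU ψ e - psiL ψ e) ≤ mrfEnergy E φ ψ x₀ := by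
    rw [mrfEnergy]
    have h0 : (0:ℝ) ≤ ∑ v, φ v (x₀ v) := Finset.sum_nonneg (fun v _ => hφ v _)
    linarith
  have hZ : Real.exp (mrfEnergy E φ ψ x₀) ≤ mrfZ E φ ψ := by
    rw [mrfZ]
    exact Finset.single_le_sum (fun y _ => (Real.exp_pos _).le) (Finset.mem_univ x₀)
  have hlog : mrfEnergy E φ ψ x₀ ≤ Real.log (mrfZ E φ ψ) := by
    have h := Real.log_le_log (Real.exp_pos _) hZ
    rwa [Real.log_exp] at h
  calc (1 / ((dstar : ℝ) + 1)) * ∑ e ∈ E, (psiU ψ e - psiL ψ e)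
      = (∑ e ∈ E, (psiU ψ e - psiL ψ e)) / ((dstar : ℝ) + 1) := by
        rw [one_div, inv_mul_eq_div]
    _ ≤ ∑ e ∈ M, (psiU ψ e - psiL ψ e) := hheavy
    _ ≤ mrfEnergy E φ ψ x₀ := henergy
    _ ≤ Real.log (mrfZ E φ ψ) := hlog
end

section
/- Consider a pairwise MRF on a finite graph G = (V, E) with nonnegative potentials as above, and let B ⊆ E be any set of removed edges so that G' = (V, E \ B) decomposes into connected components S_1, …, S_K with component partition functions Z_j (restricted to potentials within S_j). Define log Ẑ_LB = ∑_j log Z_j + ∑_{(i,j)∈B} ψ_{ij}^L and log Ẑ_UB = ∑_j log Z_j + ∑_{(i,j)∈B} ψ_{ij}^U. Then log Ẑ_LB ≤ log Z ≤ log Ẑ_UB, and log Ẑ_UB − log Ẑ_LB = ∑_{(i,j)∈B} (ψ_{ij}^U − ψ_{ij}^L). -/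
open scoped BigOperators

section Aux
variable {V S ι : Type*} [Fintype V] [DecidableEq V] [Fintype S] [DecidableEq S] [Nonempty S]
  [Fintype ι]

set_option linter.unusedSectionVars false

lemma psiL_le' (ψ : V × V → S → S → ℝ) (e : V × V) (a b : S) : psiL ψ e ≤ ψ e a b :=
  ciInf_le (f := fun p : S × S => ψ e p.1 p.2) (Set.Finite.bddBelow (Set.finite_range _)) (a, b)

lemma le_psiU' (ψ : V × V → S → S → ℝ) (e : V × V) (a b : S) : ψ e a b ≤ psiU ψ e :=
  le_ciSup (f := fun p : S × S => ψ e p.1 p.2) (Set.Finite.bddAbove (Set.finite_range _)) (a, b)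

lemma compZ_pos' (E' : Finset (V × V)) (φ : V → S → ℝ) (ψ : V × V → S → S → ℝ)
    (A : Finset V) (σ0 : S) : 0 < compZ E' φ ψ A σ0 := by
  apply Finset.sum_pos (fun _ _ => Real.exp_pos _)
  exact ⟨fun _ => σ0, by simp⟩

lemma compEnergy_congr' (E' : Finset (V × V)) (φ : V → S → ℝ) (ψ : V × V → S → S → ℝ)
    (A : Finset V) (h2 : ∀ e ∈ E', e.1 ∈ A → e.2 ∈ A) {x y : V → S}
    (hxy : ∀ v ∈ A, x v = y v) :
    compEnergy E' φ ψ A x = compEnergy E' φ ψ A y := by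
  unfold compEnergy
  congr 1
  · exact Finset.sum_congr rfl fun v hv => by rw [hxy v hv]
  · refine Finset.sum_congr rfl fun e he => ?_
    rw [Finset.mem_filter] at he
    rw [hxy _ he.2, hxy _ (h2 e he.1 he.2)]

lemma energy_split' (E' : Finset (V × V)) (φ : V → S → ℝ) (ψ : V × V → S → S → ℝ)
    (C : ι → Finset V) (hpart : ∀ v : V, ∃! j, v ∈ C j) (x : V → S) :
    mrfEnergy E' φ ψ x = ∑ j, compEnergy E' φ ψ (C j) x := by
  have key : ∀ {α : Type _} (g : α → V) (f : α → ℝ) (s : Finset α),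
      ∑ j, ∑ a ∈ s.filter (fun a => g a ∈ C j), f a = ∑ a ∈ s, f a := by
    intro α g f s
    simp_rw [Finset.sum_filter]
    rw [Finset.sum_comm]
    refine Finset.sum_congr rfl fun a _ => ?_
    obtain ⟨j0, hj0, huniq⟩ := hpart (g a)
    rw [Finset.sum_eq_single_of_mem j0 (Finset.mem_univ _)]
    · simp [hj0]
    · intro k _ hk
      simp only [ite_eq_right_iff]
      intro hmem
      exact absurd (huniq k hmem) hk
  unfold mrfEnergy compEnergy
  rw [Finset.sum_add_distrib]
  congr 1
  · have := key (fun v : V => v) (fun v => φ v (x v)) Finset.univ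
    simpa [Finset.filter_mem_eq_inter] using this.symm
  · exact (key (fun e : V × V => e.1) (fun e => ψ e (x e.1) (x e.2)) E').symm

lemma factorization' (E' : Finset (V × V)) (φ : V → S → ℝ) (ψ : V × V → S → S → ℝ)
    (C : ι → Finset V) (hpart : ∀ v : V, ∃! j, v ∈ C j)
    (hedge : ∀ e ∈ E', ∀ j, e.1 ∈ C j → e.2 ∈ C j) (σ0 : S) :
    mrfZ E' φ ψ = ∏ j, compZ E' φ ψ (C j) σ0 := by
  classical
  set J : V → ι := fun v => (hpart v).choose with hJ
  have hJmem : ∀ v, v ∈ C (J v) := fun v => (hpart v).choose_spec.1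
  have hJuniq : ∀ v k, v ∈ C k → k = J v := fun v k hk => (hpart v).choose_spec.2 k hk
  unfold compZ
  rw [Finset.prod_sum]
  unfold mrfZ
  refine (Finset.sum_nbij' (i := fun p => fun v => p (J v) (Finset.mem_univ _) v)
    (j := fun x => fun k _ => fun v => if v ∈ C k then x v else σ0)
    ?_ ?_ ?_ ?_ ?_).symm
  · intro p hp
    exact Finset.mem_univ _
  · intro x hx
    rw [Finset.mem_pi]
    intro k _
    simp only [Finset.mem_filter, Finset.mem_univ, true_and]
    intro v hv
    simp [hv]
  · intro p hp
    rw [Finset.mem_pi] at hp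
    funext k hk v
    by_cases hv : v ∈ C k
    · have : k = J v := hJuniq v k hv
      subst this
      simp [hv]
    · have := hp k hk
      simp only [Finset.mem_filter, Finset.mem_univ, true_and] at this
      simp [hv, this v hv]
  · intro x hx
    funext v
    simp [hJmem v]
  · intro p hp
    rw [Finset.mem_pi] at hp
    set x : V → S := fun v => p (J v) (Finset.mem_univ _) v with hx
    rw [← Real.exp_sum]
    congr 1
    rw [energy_split' E' φ ψ C hpart x, ← Finset.sum_attach Finset.univ
      (fun j => compEnergy E' φ ψ (C j) x)]
    refine Finset.sum_congr rfl fun k _ => ?_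
    refine compEnergy_congr' E' φ ψ (C k.1) (fun e he h1 => hedge e he k.1 h1) ?_
    intro v hv
    have : k.1 = J v := hJuniq v k.1 hv
    simp [hx, ← this]

end Aux

/-- Removing an edge set `B` decomposes the MRF graph into
components `C j` (formalized: a partition of `V` such that every remaining edge
lies inside one part). With `log Ẑ_LB = ∑_j log Z_j + ∑_{e∈B} ψ_e^L` and
`log Ẑ_UB = ∑_j log Z_j + ∑_{e∈B} ψ_e^U`, we get
`log Ẑ_LB ≤ log Z ≤ log Ẑ_UB` and the gap equals `∑_{e∈B} (ψ_e^U − ψ_e^L)`. -/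
theorem log_partition_decomposition_bounds {V S ι : Type*} [Fintype V] [DecidableEq V]
    [Fintype S] [DecidableEq S] [Nonempty S] [Fintype ι]
    (E B : Finset (V × V)) (hBE : B ⊆ E)
    (hsimple : ∀ e ∈ E, e.1 ≠ e.2)
    (hnodup : ∀ e ∈ E, (e.2, e.1) ∉ E)
    (φ : V → S → ℝ) (ψ : V × V → S → S → ℝ)
    (hφ : ∀ v s, 0 ≤ φ v s) (hψ : ∀ e a b, 0 ≤ ψ e a b)
    (C : ι → Finset V)
    (hpart : ∀ v : V, ∃! j, v ∈ C j)
    (hedge : ∀ e ∈ E \ B, ∀ j, e.1 ∈ C j → e.2 ∈ C j)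
    (σ0 : S) :
    (∑ j, Real.log (compZ (E \ B) φ ψ (C j) σ0) + ∑ e ∈ B, psiL ψ e
        ≤ Real.log (mrfZ E φ ψ)) ∧
    (Real.log (mrfZ E φ ψ)
        ≤ ∑ j, Real.log (compZ (E \ B) φ ψ (C j) σ0) + ∑ e ∈ B, psiU ψ e) ∧
    ((∑ j, Real.log (compZ (E \ B) φ ψ (C j) σ0) + ∑ e ∈ B, psiU ψ e) -
        (∑ j, Real.log (compZ (E \ B) φ ψ (C j) σ0) + ∑ e ∈ B, psiL ψ e)
      = ∑ e ∈ B, (psiU ψ e - psiL ψ e)) := by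
  classical
  have hZcomp : ∀ j, (0:ℝ) < compZ (E \ B) φ ψ (C j) σ0 := fun j => compZ_pos' _ _ _ _ _
  have hfac : mrfZ (E \ B) φ ψ = ∏ j, compZ (E \ B) φ ψ (C j) σ0 :=
    factorization' _ φ ψ C hpart (fun e he => hedge e he) σ0
  have hZc : (0:ℝ) < mrfZ (E \ B) φ ψ := hfac ▸ Finset.prod_pos (fun j _ => hZcomp j)
  have hZ : (0:ℝ) < mrfZ E φ ψ :=
    Finset.sum_pos (fun _ _ => Real.exp_pos _) Finset.univ_nonempty
  have hsumlog : ∑ j, Real.log (compZ (E \ B) φ ψ (C j) σ0) = Real.log (mrfZ (E \ B) φ ψ) := by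
    rw [hfac, Real.log_prod]
    exact fun j _ => (hZcomp j).ne'
  have hEsplit : ∀ x : V → S,
      mrfEnergy E φ ψ x = mrfEnergy (E \ B) φ ψ x + ∑ e ∈ B, ψ e (x e.1) (x e.2) := by
    intro x
    unfold mrfEnergy
    rw [add_assoc]
    congr 1
    exact (Finset.sum_sdiff hBE).symm
  have hlow : Real.exp (∑ e ∈ B, psiL ψ e) * mrfZ (E \ B) φ ψ ≤ mrfZ E φ ψ := by
    unfold mrfZ
    rw [Finset.mul_sum]
    refine Finset.sum_le_sum fun x _ => ?_
    rw [← Real.exp_add]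
    apply Real.exp_le_exp.2
    rw [hEsplit x]
    have h := Finset.sum_le_sum (s := B) (fun e _ => psiL_le' ψ e (x e.1) (x e.2))
    linarith
  have hup : mrfZ E φ ψ ≤ Real.exp (∑ e ∈ B, psiU ψ e) * mrfZ (E \ B) φ ψ := by
    unfold mrfZ
    rw [Finset.mul_sum]
    refine Finset.sum_le_sum fun x _ => ?_
    rw [← Real.exp_add]
    apply Real.exp_le_exp.2
    rw [hEsplit x]
    have h := Finset.sum_le_sum (s := B) (fun e _ => le_psiU' ψ e (x e.1) (x e.2))
    linarith
  have hlogmul : ∀ c : ℝ, Real.log (Real.exp c * mrfZ (E \ B) φ ψ) = c + Real.log (mrfZ (E \ B) φ ψ) := by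
    intro c
    rw [Real.log_mul (Real.exp_ne_zero c) hZc.ne', Real.log_exp]
  refine ⟨?_, ?_, ?_⟩
  · calc ∑ j, Real.log (compZ (E \ B) φ ψ (C j) σ0) + ∑ e ∈ B, psiL ψ e
        = Real.log (Real.exp (∑ e ∈ B, psiL ψ e) * mrfZ (E \ B) φ ψ) := by
          rw [hlogmul, hsumlog]; ring
      _ ≤ Real.log (mrfZ E φ ψ) :=
          Real.log_le_log (by positivity) hlow
  · calc Real.log (mrfZ E φ ψ)
        ≤ Real.log (Real.exp (∑ e ∈ B, psiU ψ e) * mrfZ (E \ B) φ ψ) :=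
          Real.log_le_log hZ hup
      _ = ∑ j, Real.log (compZ (E \ B) φ ψ (C j) σ0) + ∑ e ∈ B, psiU ψ e := by
          rw [hlogmul, hsumlog]; ring
  · rw [Finset.sum_sub_distrib]; ring
end

section
/- Consider a pairwise MRF on finite graph G = (V, E) with nonnegative potentials and energy H(x) = ∑_v φ_v(x_v) + ∑_{(u,v)∈E} ψ_{uv}(x_u, x_v). Let x* maximize H. Let B ⊆ E be removed so that (V, E \ B) has connected components S_1,…,S_K; let x̂ be the assignment obtained by gluing the (componentwise) maximizers of H restricted to each S_j. Then H(x*) − ∑_{(i,j)∈B} (ψ_{ij}^U − ψ_{ij}^L) ≤ H(x̂) ≤ H(x*). -/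
open scoped BigOperators

lemma sum_part_aux {α ι : Type*} [Fintype ι] (T : Finset α) (p : ι → α → Prop)
    [∀ j, DecidablePred (p j)] (h : ∀ a ∈ T, ∃! j, p j a) (g : α → ℝ) :
    ∑ j, ∑ a ∈ T.filter (p j), g a = ∑ a ∈ T, g a := by
  have : ∀ j, ∑ a ∈ T.filter (p j), g a = ∑ a ∈ T, if p j a then g a else 0 := by
    intro j; rw [Finset.sum_filter]
  simp_rw [this]
  rw [Finset.sum_comm]
  apply Finset.sum_congr rfl
  intro a ha
  obtain ⟨j0, hj0, huniq⟩ := h a ha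
  rw [Finset.sum_eq_single j0]
  · simp [hj0]
  · intro b _ hb
    simp only [ite_eq_right_iff]
    intro hpb; exact absurd (huniq b hpb) hb
  · simp

/-- If `x*` maximizes the energy `H` and `x̂` is glued from
componentwise maximizers after removing the edge set `B`, then
`H(x*) − ∑_{e∈B}(ψ_e^U − ψ_e^L) ≤ H(x̂) ≤ H(x*)`. -/
theorem map_decomposition_bounds {V S ι : Type*} [Fintype V] [DecidableEq V]
    [Fintype S] [Nonempty S] [Fintype ι]
    (E B : Finset (V × V)) (hBE : B ⊆ E)
    (hsimple : ∀ e ∈ E, e.1 ≠ e.2)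
    (hnodup : ∀ e ∈ E, (e.2, e.1) ∉ E)
    (φ : V → S → ℝ) (ψ : V × V → S → S → ℝ)
    (hφ : ∀ v s, 0 ≤ φ v s) (hψ : ∀ e a b, 0 ≤ ψ e a b)
    (C : ι → Finset V)
    (hpart : ∀ v : V, ∃! j, v ∈ C j)
    (hedge : ∀ e ∈ E \ B, ∀ j, e.1 ∈ C j → e.2 ∈ C j)
    (xstar xhat : V → S)
    (hstar : ∀ x : V → S, mrfEnergy E φ ψ x ≤ mrfEnergy E φ ψ xstar)
    (hhat : ∀ j, ∀ y : V → S,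
      compEnergy (E \ B) φ ψ (C j) y ≤ compEnergy (E \ B) φ ψ (C j) xhat) :
    mrfEnergy E φ ψ xstar - ∑ e ∈ B, (psiU ψ e - psiL ψ e)
        ≤ mrfEnergy E φ ψ xhat ∧
      mrfEnergy E φ ψ xhat ≤ mrfEnergy E φ ψ xstar := by
  classical
  have decomp : ∀ x : V → S, mrfEnergy E φ ψ x =
      (∑ j, compEnergy (E \ B) φ ψ (C j) x) + ∑ e ∈ B, ψ e (x e.1) (x e.2) := by
    intro x
    unfold mrfEnergy compEnergy
    rw [Finset.sum_add_distrib]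
    have h1 : ∑ j, ∑ v ∈ C j, φ v (x v) = ∑ v, φ v (x v) := by
      have := sum_part_aux (Finset.univ : Finset V) (fun j v => v ∈ C j)
        (fun v _ => hpart v) (fun v => φ v (x v))
      simpa using this
    have h2 : ∑ j, ∑ e ∈ (E \ B).filter (fun e => e.1 ∈ C j), ψ e (x e.1) (x e.2)
        = ∑ e ∈ E \ B, ψ e (x e.1) (x e.2) :=
      sum_part_aux (E \ B) (fun j e => e.1 ∈ C j) (fun e _ => hpart e.1) _
    rw [h1, h2]
    have h3 : ∑ e ∈ E \ B, ψ e (x e.1) (x e.2) + ∑ e ∈ B, ψ e (x e.1) (x e.2)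
        = ∑ e ∈ E, ψ e (x e.1) (x e.2) := Finset.sum_sdiff hBE
    linarith
  have hL : ∀ (e : V × V) (a b : S), psiL ψ e ≤ ψ e a b := by
    intro e a b; unfold psiL
    exact ciInf_le (Set.Finite.bddBelow (Set.finite_range (fun p : S × S => ψ e p.1 p.2))) (a, b)
  have hU : ∀ (e : V × V) (a b : S), ψ e a b ≤ psiU ψ e := by
    intro e a b; unfold psiU
    exact le_ciSup (Set.Finite.bddAbove (Set.finite_range (fun p : S × S => ψ e p.1 p.2))) (a, b)
  constructor
  · have hcomp : ∑ j, compEnergy (E \ B) φ ψ (C j) xstar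
        ≤ ∑ j, compEnergy (E \ B) φ ψ (C j) xhat :=
      Finset.sum_le_sum fun j _ => hhat j xstar
    have hB1 : ∑ e ∈ B, ψ e (xstar e.1) (xstar e.2) ≤ ∑ e ∈ B, psiU ψ e :=
      Finset.sum_le_sum fun e _ => hU e _ _
    have hB2 : ∑ e ∈ B, psiL ψ e ≤ ∑ e ∈ B, ψ e (xhat e.1) (xhat e.2) :=
      Finset.sum_le_sum fun e _ => hL e _ _
    rw [decomp xstar, decomp xhat, Finset.sum_sub_distrib]
    linarith
  · exact hstar xhat
end

section
/- Consider a pairwise MRF on finite graph G = (V, E) with maximum vertex degree d* and nonnegative potentials. Let H(x) be the energy and x* a MAP (energy-maximizing) assignment. Then H(x*) ≥ (1/(d*+1)) ∑_{(i,j)∈E} ψ_{ij}^U ≥ (1/(d*+1)) ∑_{(i,j)∈E} (ψ_{ij}^U − ψ_{ij}^L). -/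
open scoped BigOperators

open scoped Classical

set_option linter.unusedSectionVars false

namespace MRFVizing
open SimpleGraph

variable {V : Type*} [Fintype V] [DecidableEq V] {n d : ℕ}

def Proper (H : SimpleGraph V) (c : Sym2 V → Fin n) : Prop :=
  ∀ ⦃a b b' : V⦄, H.Adj a b → H.Adj a b' → b ≠ b' → c s(a, b) ≠ c s(a, b')

def MissingAt (H : SimpleGraph V) (c : Sym2 V → Fin n) (v : V) (γ : Fin n) : Prop :=
  ∀ u, H.Adj v u → c s(v, u) ≠ γ

noncomputable def deg (H : SimpleGraph V) (v : V) : ℕ :=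
  (Finset.univ.filter (fun u => H.Adj v u)).card

lemma deg_le_of_le {H H' : SimpleGraph V} (h : H ≤ H') (v : V) : deg H v ≤ deg H' v := by
  apply Finset.card_le_card
  intro u hu
  simp only [Finset.mem_filter, Finset.mem_univ, true_and] at *
  exact h hu

lemma exists_missingAt (H : SimpleGraph V) (c : Sym2 V → Fin (d+1))
    (v : V) (hdeg : deg H v ≤ d) : ∃ γ, MissingAt H c v γ := by
  by_contra h
  push_neg at h
  simp only [MissingAt, not_forall] at h
  have hsub : (Finset.univ : Finset (Fin (d+1))) ⊆
      (Finset.univ.filter (fun u => H.Adj v u)).image (fun u => c s(v, u)) := by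
    intro γ _
    obtain ⟨u, hu, hc⟩ := h γ
    rw [not_not] at hc
    exact Finset.mem_image.2 ⟨u, by simp [hu], hc⟩
  have h1 := Finset.card_le_card hsub
  have h2 := Finset.card_image_le (s := Finset.univ.filter (fun u => H.Adj v u))
      (f := fun u => c s(v, u))
  simp only [Finset.card_univ, Fintype.card_fin] at h1
  unfold deg at hdeg
  omega

lemma walk_closed {K : SimpleGraph V} {S : Set V}
    (hS : ∀ a b, K.Adj a b → a ∈ S → b ∈ S) :
    ∀ {x u : V}, K.Walk x u → x ∈ S → u ∈ S
  | _, _, SimpleGraph.Walk.nil, hx => hx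
  | _, _, SimpleGraph.Walk.cons h p, hx => walk_closed hS p (hS _ _ h hx)

lemma reachable_closed {K : SimpleGraph V} {S : Set V}
    (hS : ∀ a b, K.Adj a b → a ∈ S → b ∈ S) {x u : V}
    (h : K.Reachable x u) (hx : x ∈ S) : u ∈ S := by
  obtain ⟨w⟩ := h
  exact walk_closed hS w hx

lemma exists_parent {K : SimpleGraph V} {x v : V} (h : K.Reachable x v) (hne : v ≠ x) :
    ∃ u, K.Adj v u ∧ K.dist x u + 1 = K.dist x v := by
  obtain ⟨w, hw⟩ := h.exists_walk_length_eq_dist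
  obtain ⟨u, hadj, p, hp⟩ := SimpleGraph.Walk.exists_eq_cons_of_ne hne w.reverse
  have hlen : w.reverse.length = K.dist x v := by rw [SimpleGraph.Walk.length_reverse, hw]
  rw [hp] at hlen
  simp only [SimpleGraph.Walk.length_cons] at hlen
  have h1 : K.dist x u ≤ p.length := by
    have := SimpleGraph.dist_le p.reverse
    rwa [SimpleGraph.Walk.length_reverse] at this
  -- dist x v ≤ dist x u + 1
  have hru : K.Reachable x u := ⟨p.reverse⟩
  obtain ⟨q, hq⟩ := hru.exists_walk_length_eq_dist
  have h2 : K.dist x v ≤ K.dist x u + 1 := by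
    have := SimpleGraph.dist_le (q.concat hadj.symm)
    rwa [SimpleGraph.Walk.length_concat, hq] at this
  exact ⟨u, hadj, by omega⟩

/-- In a graph of max degree ≤ 2, three distinct vertices of degree ≤ 1 cannot all
lie in one connected component. -/
lemma not_reachable_pair (K : SimpleGraph V)
    (hdeg : ∀ v, deg K v ≤ 2)
    {x a b : V} (hx : deg K x ≤ 1) (ha : deg K a ≤ 1) (hb : deg K b ≤ 1)
    (hxa : x ≠ a) (hxb : x ≠ b) (hab : a ≠ b)
    (hra : K.Reachable x a) (hrb : K.Reachable x b) : False := by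
  set S : Finset V := Finset.univ.filter (fun v => K.Reachable x v) with hS
  have hmemS : ∀ v, v ∈ S ↔ K.Reachable x v := by
    intro v; simp [hS]
  have hclosed : ∀ u v, K.Adj u v → u ∈ S → v ∈ S := by
    intro u v huv hu
    rw [hmemS] at *
    exact hu.trans huv.reachable
  have hxS : x ∈ S := (hmemS x).2 (Reachable.refl x)
  have haS : a ∈ S := (hmemS a).2 hra
  have hbS : b ∈ S := (hmemS b).2 hrb
  -- parent function
  have hpar : ∀ v : V, ∃ u, (K.Reachable x v ∧ v ≠ x) →
      (K.Adj v u ∧ K.dist x u + 1 = K.dist x v) := by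
    intro v
    by_cases h : K.Reachable x v ∧ v ≠ x
    · obtain ⟨u, hu⟩ := exists_parent h.1 h.2
      exact ⟨u, fun _ => hu⟩
    · exact ⟨x, fun hc => absurd hc h⟩
  choose par hparspec using hpar
  -- the D finset of oriented edges with source in S
  set D : Finset (V × V) := S.biUnion
      (fun u => (Finset.univ.filter (fun w => K.Adj u w)).image (fun w => (u, w))) with hD
  have hmemD : ∀ p : V × V, p ∈ D ↔ p.1 ∈ S ∧ K.Adj p.1 p.2 := by
    intro p
    simp only [hD, Finset.mem_biUnion, Finset.mem_image, Finset.mem_filter,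
      Finset.mem_univ, true_and]
    constructor
    · rintro ⟨u, hu, w, hw, rfl⟩; exact ⟨hu, hw⟩
    · rintro ⟨h1, h2⟩; exact ⟨p.1, h1, p.2, h2, rfl⟩
  have hcardD : D.card = ∑ u ∈ S, deg K u := by
    rw [hD]
    rw [Finset.card_biUnion]
    · apply Finset.sum_congr rfl
      intro u _
      rw [Finset.card_image_of_injective _ (fun w w' h => (Prod.ext_iff.1 h).2)]
      rfl
    · intro u hu v hv huv
      simp only [Finset.disjoint_left, Finset.mem_image, Finset.mem_filter]
      rintro p ⟨w, hw, rfl⟩ ⟨w', hw', h⟩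
      exact huv ((Prod.ext_iff.1 h).1).symm
  -- upper bound
  have hfilter : S.filter (fun u => u ∈ ({x, a, b} : Finset V)) = {x, a, b} := by
    apply Finset.ext
    intro v
    simp only [Finset.mem_filter]
    constructor
    · exact fun h => h.2
    · intro h
      refine ⟨?_, h⟩
      simp only [Finset.mem_insert, Finset.mem_singleton] at h
      rcases h with rfl | rfl | rfl <;> assumption
  have hTcard : ({x, a, b} : Finset V).card = 3 := by
    rw [Finset.card_insert_of_notMem (by simp [hxa, hxb]),
      Finset.card_insert_of_notMem (by simp [hab]), Finset.card_singleton]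
  have hScard3 : 3 ≤ S.card := by
    calc 3 = ({x, a, b} : Finset V).card := hTcard.symm
      _ ≤ S.card := Finset.card_le_card (by rw [← hfilter]; exact Finset.filter_subset _ _)
  have hub : ∑ u ∈ S, deg K u ≤ 2 * S.card - 3 := by
    have hsplit := Finset.sum_filter_add_sum_filter_not S
        (fun u => u ∈ ({x, a, b} : Finset V)) (fun u => deg K u)
    have h1 : ∑ u ∈ S.filter (fun u => u ∈ ({x, a, b} : Finset V)), deg K u ≤ 3 := by
      rw [hfilter]
      calc ∑ u ∈ ({x,a,b} : Finset V), deg K u ≤ ∑ _u ∈ ({x,a,b} : Finset V), 1 := by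
            apply Finset.sum_le_sum
            intro i hi
            simp only [Finset.mem_insert, Finset.mem_singleton] at hi
            rcases hi with rfl | rfl | rfl <;> assumption
        _ = 3 := by rw [Finset.sum_const, hTcard]; simp
    have hcardnot : (S.filter (fun u => ¬(u ∈ ({x, a, b} : Finset V)))).card = S.card - 3 := by
      have := Finset.card_filter_add_card_filter_not
          (s := S) (p := fun u => u ∈ ({x, a, b} : Finset V))
      rw [hfilter, hTcard] at this
      omega
    have h2 : ∑ u ∈ S.filter (fun u => ¬(u ∈ ({x, a, b} : Finset V))), deg K u
        ≤ 2 * (S.card - 3) := by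
      calc ∑ u ∈ S.filter (fun u => ¬(u ∈ ({x, a, b} : Finset V))), deg K u
          ≤ ∑ _u ∈ S.filter (fun u => ¬(u ∈ ({x, a, b} : Finset V))), 2 :=
            Finset.sum_le_sum (fun i _ => hdeg i)
        _ = 2 * (S.card - 3) := by rw [Finset.sum_const, hcardnot]; ring
    omega
  -- lower bound via parent injection
  have hlb : 2 * (S.card - 1) ≤ D.card := by
    have hinj : ((S.erase x) ×ˢ (Finset.univ : Finset Bool)).card ≤ D.card := by
      apply Finset.card_le_card_of_injOn
          (fun p => if p.2 then (p.1, par p.1) else (par p.1, p.1))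
      · rintro ⟨v, s⟩ hv
        simp only [Finset.mem_coe] at hv ⊢
        simp only [Finset.mem_product, Finset.mem_erase, Finset.mem_univ, and_true] at hv
        obtain ⟨hvx, hvS⟩ := hv
        have hspec := hparspec v ⟨(hmemS v).1 hvS, hvx⟩
        cases s
        · simp only [if_neg Bool.false_ne_true]
          rw [hmemD]
          exact ⟨hclosed v (par v) hspec.1 hvS, hspec.1.symm⟩
        · simp only [if_pos rfl]
          rw [hmemD]
          exact ⟨hvS, hspec.1⟩
      · rintro ⟨v, s⟩ hv ⟨w, t⟩ hw heq
        simp only [Finset.coe_product, Set.mem_prod, Finset.mem_coe, Finset.mem_erase,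
          Finset.mem_univ, and_true] at hv hw
        obtain ⟨hvx, hvS⟩ := hv
        obtain ⟨hwx, hwS⟩ := hw
        obtain ⟨hv1, hv2⟩ := hparspec v ⟨(hmemS v).1 hvS, hvx⟩
        obtain ⟨hw1, hw2⟩ := hparspec w ⟨(hmemS w).1 hwS, hwx⟩
        cases s <;> cases t
        · simp only [if_neg Bool.false_ne_true, Bool.false_eq_true, if_false,
            Prod.mk.injEq] at heq
          simp [heq.2]
        · simp only [Bool.false_eq_true, if_false, if_true, Prod.mk.injEq] at heq
          exfalso
          rw [heq.1] at hv2
          rw [← heq.2] at hw2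
          omega
        · simp only [Bool.false_eq_true, if_false, if_true, Prod.mk.injEq] at heq
          exfalso
          rw [heq.2] at hv2
          rw [← heq.1] at hw2
          omega
        · simp only [if_true, Prod.mk.injEq] at heq
          simp [heq.1]
    have : ((S.erase x) ×ˢ (Finset.univ : Finset Bool)).card = 2 * (S.card - 1) := by
      rw [Finset.card_product, Finset.card_erase_of_mem hxS]
      simp [Fintype.card_bool]
      ring
    omega
  rw [hcardD] at hlb
  omega



section Flip
variable (H : SimpleGraph V) (c : Sym2 V → Fin n) (α β : Fin n) (v₀ : V)

/-- The subgraph of `H` consisting of edges colored `α` or `β`. -/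
def Kg : SimpleGraph V where
  Adj u v := H.Adj u v ∧ (c s(u, v) = α ∨ c s(u, v) = β)
  symm := by
    constructor
    intro u v ⟨h1, h2⟩
    refine ⟨h1.symm, ?_⟩
    rwa [Sym2.eq_swap] at h2
  loopless := ⟨fun v h => H.irrefl h.1⟩

/-- Swap colors `α` and `β` on the connected component of `v₀` in the
`α`/`β`-subgraph. -/
noncomputable def kflip : Sym2 V → Fin n :=
  fun e => if ∃ u ∈ e, (Kg H c α β).Reachable v₀ u then Equiv.swap α β (c e) else c e

variable {H c α β v₀}

lemma kflip_eval_reached {a : V} (b : V) (h : (Kg H c α β).Reachable v₀ a) :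
    kflip H c α β v₀ s(a, b) = Equiv.swap α β (c s(a, b)) := by
  unfold kflip
  rw [if_pos ⟨a, Sym2.mem_mk_left a b, h⟩]

lemma kflip_eval_unreached {a b : V} (hab : H.Adj a b)
    (h : ¬ (Kg H c α β).Reachable v₀ a) :
    kflip H c α β v₀ s(a, b) = c s(a, b) := by
  unfold kflip
  split_ifs with hc
  · obtain ⟨u, hu, hru⟩ := hc
    rw [Sym2.mem_iff] at hu
    have hnab : ¬(c s(a,b) = α ∨ c s(a,b) = β) := by
      rcases hu with rfl | rfl
      · exact absurd hru h
      · intro hcol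
        have : (Kg H c α β).Adj u a := ⟨hab.symm, by rwa [Sym2.eq_swap]⟩
        exact h (hru.trans this.reachable)
    push_neg at hnab
    exact Equiv.swap_apply_of_ne_of_ne hnab.1 hnab.2
  · rfl

lemma proper_kflip (hc : Proper H c) : Proper H (kflip H c α β v₀) := by
  intro a b b' hab hab' hbb'
  by_cases hr : (Kg H c α β).Reachable v₀ a
  · rw [kflip_eval_reached b hr, kflip_eval_reached b' hr]
    intro h
    exact hc hab hab' hbb' ((Equiv.swap α β).injective h)
  · rw [kflip_eval_unreached hab hr, kflip_eval_unreached hab' hr]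
    exact hc hab hab' hbb'

lemma kflip_missingAt_reached (hv : (Kg H c α β).Reachable v₀ v)
    (hm : MissingAt H c v β) : MissingAt H (kflip H c α β v₀) v α := by
  intro u hu
  rw [kflip_eval_reached u hv]
  intro h
  have : c s(v, u) = β := by
    have := (Equiv.swap α β).injective (a₁ := c s(v,u)) (a₂ := β)
    apply this
    rw [h, Equiv.swap_apply_right]
  exact hm u hu this

lemma kflip_missingAt_unreached {v : V} (hv : ¬ (Kg H c α β).Reachable v₀ v)
    {γ : Fin n} (hm : MissingAt H c v γ) : MissingAt H (kflip H c α β v₀) v γ := by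
  intro u hu
  rw [kflip_eval_unreached hu hv]
  exact hm u hu

end Flip

/-- Adding an edge colored with a color missing at both endpoints keeps the
coloring proper. -/
lemma proper_update_final (G : SimpleGraph V) {x y : V} (hadj : G.Adj x y)
    (c : Sym2 V → Fin n) (γ : Fin n)
    (hc : Proper (G.deleteEdges {s(x, y)}) c)
    (hx : MissingAt (G.deleteEdges {s(x, y)}) c x γ)
    (hy : MissingAt (G.deleteEdges {s(x, y)}) c y γ) :
    Proper G (Function.update c s(x, y) γ) := by
  have key : ∀ ⦃a b b' : V⦄, G.Adj a b → G.Adj a b' → b ≠ b' →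
      s(a, b) = s(x, y) → s(a, b') ≠ s(x, y) →
      Function.update c s(x, y) γ s(a, b) ≠ Function.update c s(x, y) γ s(a, b') := by
    intro a b b' hab hab' hbb' h1 h2
    rw [h1, Function.update_self, Function.update_of_ne h2]
    have hH : (G.deleteEdges {s(x, y)}).Adj a b' := by
      rw [SimpleGraph.deleteEdges_adj]
      exact ⟨hab', by simpa using h2⟩
    rcases Sym2.eq_iff.1 h1 with ⟨rfl, rfl⟩ | ⟨rfl, rfl⟩
    · exact fun h => hx b' hH h.symm
    · exact fun h => hy b' hH h.symm
  intro a b b' hab hab' hbb'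
  by_cases h1 : s(a, b) = s(x, y) <;> by_cases h2 : s(a, b') = s(x, y)
  · exact absurd (h1.trans h2.symm) (fun h => hbb' (Sym2.congr_right.1 h))
  · exact key hab hab' hbb' h1 h2
  · exact (key hab' hab hbb'.symm h2 h1).symm
  · rw [Function.update_of_ne h1, Function.update_of_ne h2]
    have hHb : (G.deleteEdges {s(x, y)}).Adj a b := by
      rw [SimpleGraph.deleteEdges_adj]; exact ⟨hab, by simpa using h1⟩
    have hHb' : (G.deleteEdges {s(x, y)}).Adj a b' := by
      rw [SimpleGraph.deleteEdges_adj]; exact ⟨hab', by simpa using h2⟩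
    exact hc hHb hHb' hbb'


/-- Shifting: recolor the uncolored edge `x‒yi` with `γ`, uncoloring `x‒yi1`. -/
lemma proper_update_shift (G : SimpleGraph V) {x yi yi1 : V}
    (hadjyi : G.Adj x yi) (c' : Sym2 V → Fin n) (γ : Fin n)
    (hc' : Proper (G.deleteEdges {s(x, yi)}) c')
    (hγx : ∀ u, G.Adj x u → u ≠ yi → u ≠ yi1 → c' s(x, u) ≠ γ)
    (hγyi : ∀ u, G.Adj yi u → u ≠ x → c' s(yi, u) ≠ γ) :
    Proper (G.deleteEdges {s(x, yi1)}) (Function.update c' s(x, yi) γ) := by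
  have key : ∀ ⦃a b b' : V⦄, (G.deleteEdges {s(x, yi1)}).Adj a b →
      (G.deleteEdges {s(x, yi1)}).Adj a b' → b ≠ b' →
      s(a, b) = s(x, yi) → s(a, b') ≠ s(x, yi) →
      Function.update c' s(x, yi) γ s(a, b) ≠ Function.update c' s(x, yi) γ s(a, b') := by
    intro a b b' hab hab' hbb' h1 h2
    rw [h1, Function.update_self, Function.update_of_ne h2]
    rw [SimpleGraph.deleteEdges_adj] at hab hab'
    have hab'G := hab'.1
    have hab'ne : s(a, b') ≠ s(x, yi1) := by simpa using hab'.2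
    rcases Sym2.eq_iff.1 h1 with ⟨rfl, rfl⟩ | ⟨rfl, rfl⟩
    · -- a = x, b = yi
      exact fun h => hγx b' hab'G hbb'.symm (fun hh => hab'ne (by rw [hh])) h.symm
    · -- a = yi, b = x
      exact fun h => hγyi b' hab'G hbb'.symm h.symm
  intro a b b' hab hab' hbb'
  by_cases h1 : s(a, b) = s(x, yi) <;> by_cases h2 : s(a, b') = s(x, yi)
  · exact absurd (h1.trans h2.symm) (fun h => hbb' (Sym2.congr_right.1 h))
  · exact key hab hab' hbb' h1 h2
  · exact (key hab' hab hbb'.symm h2 h1).symm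
  · rw [Function.update_of_ne h1, Function.update_of_ne h2]
    rw [SimpleGraph.deleteEdges_adj] at hab hab'
    have hHb : (G.deleteEdges {s(x, yi)}).Adj a b := by
      rw [SimpleGraph.deleteEdges_adj]; exact ⟨hab.1, by simpa using h1⟩
    have hHb' : (G.deleteEdges {s(x, yi)}).Adj a b' := by
      rw [SimpleGraph.deleteEdges_adj]; exact ⟨hab'.1, by simpa using h2⟩
    exact hc' hHb hHb' hbb'

lemma deg_Kg_le {H : SimpleGraph V} {c : Sym2 V → Fin n} {α β : Fin n}
    (hc : Proper H c) (v : V) (T : Finset (Fin n))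
    (hT : ∀ u, (Kg H c α β).Adj v u → c s(v, u) ∈ T) :
    deg (Kg H c α β) v ≤ T.card := by
  unfold deg
  apply Finset.card_le_card_of_injOn (fun u => c s(v, u))
  · intro u hu
    simp only [Finset.mem_coe] at hu ⊢
    simp only [Finset.mem_filter, Finset.mem_univ, true_and] at hu
    exact hT u hu
  · intro u hu u' hu' h
    simp only [Finset.coe_filter, Finset.mem_univ, true_and, Set.mem_setOf_eq] at hu hu'
    by_contra hne
    exact hc hu.1 hu'.1 hne h


/-- Fan rotation: `rot c x y i` recolors edge `x‒y j` with `c s(x, y (j+1))` for `j < i`. -/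
noncomputable def rot (c : Sym2 V → Fin n) (x : V) (y : ℕ → V) : ℕ → Sym2 V → Fin n
  | 0 => c
  | (i+1) => Function.update (rot c x y i) s(x, y i) (c s(x, y (i+1)))

/-- The key extension step of Vizing's theorem: a proper `(d+1)`-coloring of `G`
minus one edge extends to a proper coloring of `G`. -/
lemma extend_coloring (G : SimpleGraph V) (d : ℕ) (hdeg : ∀ v, deg G v ≤ d)
    {x y₀ : V} (hadj : G.Adj x y₀)
    (c : Sym2 V → Fin (d+1)) (hc : Proper (G.deleteEdges {s(x, y₀)}) c) :
    ∃ c' : Sym2 V → Fin (d+1), Proper G c' := by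
  set H := G.deleteEdges {s(x, y₀)} with hH
  have hHle : H ≤ G := SimpleGraph.deleteEdges_le _
  have hHdeg : ∀ v, deg H v ≤ d := fun v => le_trans (deg_le_of_le hHle v) (hdeg v)
  -- maximal fan
  set P : ℕ → Prop := fun k => ∃ y : ℕ → V, y 0 = y₀ ∧
    (∀ i ≤ k, G.Adj x (y i)) ∧ (∀ i ≤ k, ∀ j ≤ k, y i = y j → i = j) ∧
    (∀ i, i < k → MissingAt H c (y i) (c s(x, y (i+1)))) with hPdef
  have hP0 : P 0 := by
    refine ⟨fun _ => y₀, rfl, fun i _ => hadj, fun i hi j hj _ => by omega,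
      fun i hi => by omega⟩
  have hPbound : ∀ k, P k → k < Fintype.card V := by
    rintro k ⟨y, hy0, hadjy, hinj, -⟩
    have hinjon : Set.InjOn y (Finset.range (k+1)) := by
      intro i hi j hj hij
      simp only [Finset.coe_range, Set.mem_Iio] at hi hj
      exact hinj i (by omega) j (by omega) hij
    have h1 : (Finset.range (k+1)).card ≤ (Finset.univ : Finset V).card :=
      Finset.card_le_card_of_injOn y (fun a _ => Finset.mem_univ _) hinjon
    simp only [Finset.card_range, Finset.card_univ] at h1
    omega
  set K := Nat.findGreatest P (Fintype.card V) with hKdef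
  have hPK : P K := Nat.findGreatest_spec (Nat.zero_le _) hP0
  have hKmax : ¬ P (K+1) := by
    by_cases h : K + 1 ≤ Fintype.card V
    · exact Nat.findGreatest_is_greatest (Nat.lt_succ_self K) h
    · exact fun hPk => h (le_of_lt (hPbound (K+1) hPk))
  obtain ⟨y, hy0, hyadj, hyinj, hyfan⟩ := hPK
  have hH0 : H = G.deleteEdges {s(x, y 0)} := by rw [hy0]
  have hxy : ∀ m, m ≤ K → x ≠ y m := fun m hm => (hyadj m hm).ne
  have hHadjfan : ∀ m, m ≤ K → m ≠ 0 → H.Adj x (y m) := by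
    intro m hm hm0
    rw [hH0, SimpleGraph.deleteEdges_adj]
    refine ⟨hyadj m hm, ?_⟩
    simp only [Set.mem_singleton_iff, Sym2.congr_right]
    exact fun h => hm0 (hyinj m hm 0 (by omega) h)
  -- rotation facts
  have rot_off : ∀ i, ∀ e, (∀ j, j < i → e ≠ s(x, y j)) → rot c x y i e = c e := by
    intro i
    induction i with
    | zero => intro e _; rfl
    | succ i ih =>
      intro e he
      show Function.update (rot c x y i) s(x, y i) (c s(x, y (i+1))) e = c e
      rw [Function.update_of_ne (he i (Nat.lt_succ_self i))]
      exact ih e (fun j hj => he j (by omega))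
  have rot_fan : ∀ i, i ≤ K → ∀ j, j < i → rot c x y i s(x, y j) = c s(x, y (j+1)) := by
    intro i
    induction i with
    | zero => intro _ j hj; omega
    | succ i ih =>
      intro hi j hj
      show Function.update (rot c x y i) s(x, y i) (c s(x, y (i+1))) s(x, y j)
          = c s(x, y (j+1))
      by_cases hji : j = i
      · subst hji; rw [Function.update_self]
      · have hj' : j < i := by omega
        rw [Function.update_of_ne
          (fun h => hji (hyinj j (by omega) i (by omega) (Sym2.congr_right.1 h))),
          ih (by omega) j hj']
  have rot_proper : ∀ i, i ≤ K →
      Proper (G.deleteEdges {s(x, y i)}) (rot c x y i) := by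
    intro i
    induction i with
    | zero =>
      intro _
      show Proper (G.deleteEdges {s(x, y 0)}) c
      rw [← hH0]; exact hc
    | succ i ih =>
      intro hi1
      have hiK : i ≤ K := by omega
      show Proper (G.deleteEdges {s(x, y (i+1))})
        (Function.update (rot c x y i) s(x, y i) (c s(x, y (i+1))))
      apply proper_update_shift G (hyadj i hiK) (rot c x y i) _ (ih hiK)
      · -- at x
        intro u hu hui hui1
        by_cases hfan : ∃ l, l < i ∧ u = y l
        · obtain ⟨l, hl, rfl⟩ := hfan
          rw [rot_fan i hiK l hl]
          exact hc (hHadjfan (l+1) (by omega) (by omega))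
            (hHadjfan (i+1) (by omega) (by omega))
            (fun h => by have := hyinj (l+1) (by omega) (i+1) (by omega) h; omega)
        · push_neg at hfan
          rw [rot_off i _ (fun l hl h => hfan l hl (Sym2.congr_right.1 h))]
          have huy0 : u ≠ y 0 := by
            rcases Nat.eq_zero_or_pos i with h0 | h0
            · rw [← h0]; exact hui
            · exact hfan 0 h0
          have hHxu : H.Adj x u := by
            rw [hH0, SimpleGraph.deleteEdges_adj]
            refine ⟨hu, ?_⟩
            simp only [Set.mem_singleton_iff]
            intro h
            rcases Sym2.eq_iff.1 h with ⟨h1, h2⟩ | ⟨h1, h2⟩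
            · exact huy0 h2
            · exact (hxy 0 (by omega)) h1
          exact hc hHxu (hHadjfan (i+1) (by omega) (by omega)) hui1
      · -- at y i
        intro u hu hux
        have hyix : y i ≠ x := (hxy i hiK).symm
        rw [rot_off i _ ?_]
        · refine hyfan i (by omega) u ?_
          rw [hH0, SimpleGraph.deleteEdges_adj]
          refine ⟨hu, ?_⟩
          simp only [Set.mem_singleton_iff]
          intro h
          rcases Sym2.eq_iff.1 h with ⟨h1, h2⟩ | ⟨h1, h2⟩
          · exact hyix h1
          · exact hux h2
        · intro l hl h
          rcases Sym2.eq_iff.1 h with ⟨h1, h2⟩ | ⟨h1, h2⟩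
          · exact hyix h1
          · exact hux h2
  -- missing color transfer
  have M1 : ∀ i, i ≤ K → ∀ γ, MissingAt H c x γ →
      MissingAt (G.deleteEdges {s(x, y i)}) (rot c x y i) x γ := by
    intro i hi γ hγ u hu
    rw [SimpleGraph.deleteEdges_adj] at hu
    have hui : u ≠ y i := by
      intro h
      exact hu.2 (by simp [h])
    by_cases hfan : ∃ l, l < i ∧ u = y l
    · obtain ⟨l, hl, rfl⟩ := hfan
      rw [rot_fan i hi l hl]
      exact hγ (y (l+1)) (hHadjfan (l+1) (by omega) (by omega))
    · push_neg at hfan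
      rw [rot_off i _ (fun l hl h => hfan l hl (Sym2.congr_right.1 h))]
      have huy0 : u ≠ y 0 := by
        rcases Nat.eq_zero_or_pos i with h0 | h0
        · rw [← h0]; exact hui
        · exact hfan 0 h0
      refine hγ u ?_
      rw [hH0, SimpleGraph.deleteEdges_adj]
      refine ⟨hu.1, ?_⟩
      simp only [Set.mem_singleton_iff]
      intro h
      rcases Sym2.eq_iff.1 h with ⟨h1, h2⟩ | ⟨h1, h2⟩
      · exact huy0 h2
      · exact (hxy 0 (by omega)) h1
  have M2 : ∀ i, i ≤ K → ∀ γ, MissingAt H c (y i) γ →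
      MissingAt (G.deleteEdges {s(x, y i)}) (rot c x y i) (y i) γ := by
    intro i hi γ hγ u hu
    rw [SimpleGraph.deleteEdges_adj] at hu
    have hyix : y i ≠ x := (hxy i hi).symm
    have hux : u ≠ x := by
      intro h
      exact hu.2 (by rw [h]; simp [Sym2.eq_swap])
    rw [rot_off i _ ?_]
    · refine hγ u ?_
      rw [hH0, SimpleGraph.deleteEdges_adj]
      refine ⟨hu.1, ?_⟩
      simp only [Set.mem_singleton_iff]
      intro h
      rcases Sym2.eq_iff.1 h with ⟨h1, h2⟩ | ⟨h1, h2⟩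
      · exact hyix h1
      · exact hux h2
    · intro l hl h
      rcases Sym2.eq_iff.1 h with ⟨h1, h2⟩ | ⟨h1, h2⟩
      · exact hyix h1
      · exact hux h2
  -- the two colors
  obtain ⟨α, hα⟩ := exists_missingAt H c x (hHdeg x)
  obtain ⟨β, hβ⟩ := exists_missingAt H c (y K) (hHdeg (y K))
  by_cases hβx : MissingAt H c x β
  · -- Case 1 : β missing at x : rotate the whole fan and color x‒y K with β
    exact ⟨Function.update (rot c x y K) s(x, y K) β,
      proper_update_final G (hyadj K le_rfl) _ β (rot_proper K le_rfl)
        (M1 K le_rfl β hβx) (M2 K le_rfl β hβ)⟩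
  -- Case 2 : β appears at x
  have hv : ∃ u, H.Adj x u ∧ c s(x, u) = β := by
    unfold MissingAt at hβx
    push_neg at hβx
    obtain ⟨u, h1, h2⟩ := hβx
    exact ⟨u, h1, h2⟩
  obtain ⟨v, hvH, hvβ⟩ := hv
  have hvfan : ∃ j, j ≤ K ∧ v = y j := by
    by_contra hno
    push_neg at hno
    apply hKmax
    refine ⟨fun m => if m = K+1 then v else y m, ?_, ?_, ?_, ?_⟩
    · simp [(by omega : ¬ (0 = K+1)), hy0]
    · intro i hi
      by_cases h : i = K+1
      · simpa [h] using hHle hvH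
      · simpa [h] using hyadj i (by omega)
    · intro i hi j hj heq
      by_cases h1 : i = K+1 <;> by_cases h2 : j = K+1
      · omega
      · simp only [h1, if_pos, if_neg h2] at heq
        exact absurd heq (hno j (by omega))
      · simp only [h2, if_pos, if_neg h1] at heq
        exact absurd heq.symm (hno i (by omega))
      · simp only [if_neg h1, if_neg h2] at heq
        exact hyinj i (by omega) j (by omega) heq
    · intro i hi
      by_cases h : i = K
      · subst h
        simp only [if_neg (show ¬ (K = K+1) by omega), if_pos rfl, if_true]
        rw [hvβ]
        exact hβ
      · have hiK : i < K := by omega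
        simp only [if_neg (show ¬ (i = K+1) by omega), if_neg (show ¬ (i+1 = K+1) by omega)]
        exact hyfan i hiK
  obtain ⟨j, hjK, rfl⟩ := hvfan
  have hj0 : j ≠ 0 := by
    intro h
    rw [h, hy0, hH, SimpleGraph.deleteEdges_adj] at hvH
    exact hvH.2 (Set.mem_singleton _)
  have hjK' : j ≠ K := by
    intro h
    rw [h] at hvβ
    refine hβ x ?_ ?_
    · exact (hHadjfan K le_rfl (by omega)).symm
    · rw [Sym2.eq_swap]
      exact hvβ
  have hαβ : α ≠ β := fun h => hβx (h ▸ hα)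
  set i0 := j - 1 with hi0def
  have hi0K : i0 < K := by omega
  have hi0j : i0 + 1 = j := by omega
  have hβmiss_yi : MissingAt H c (y i0) β := by
    have h := hyfan i0 (by omega)
    rwa [hi0j, hvβ] at h
  -- degree bounds in the α/β subgraph
  have hdeg2 : ∀ w, deg (Kg H c α β) w ≤ 2 := by
    intro w
    refine le_trans (deg_Kg_le hc w {α, β} ?_) ?_
    · intro u hu
      rcases hu.2 with h | h <;> simp [h]
    · exact le_trans (Finset.card_insert_le _ _) (by simp)
  have hdegx : deg (Kg H c α β) x ≤ 1 := by
    refine le_trans (deg_Kg_le hc x {β} ?_) (by simp)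
    intro u hu
    rcases hu.2 with h | h
    · exact absurd h (hα u hu.1)
    · simp [h]
  have hdegyi : deg (Kg H c α β) (y i0) ≤ 1 := by
    refine le_trans (deg_Kg_le hc (y i0) {α} ?_) (by simp)
    intro u hu
    rcases hu.2 with h | h
    · simp [h]
    · exact absurd h (hβmiss_yi u hu.1)
  have hdegyk : deg (Kg H c α β) (y K) ≤ 1 := by
    refine le_trans (deg_Kg_le hc (y K) {α} ?_) (by simp)
    intro u hu
    rcases hu.2 with h | h
    · simp [h]
    · exact absurd h (hβ u hu.1)
  have hxyi : x ≠ y i0 := hxy i0 (by omega)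
  have hxyk : x ≠ y K := hxy K le_rfl
  have hyiyk : y i0 ≠ y K := fun h => by
    have := hyinj i0 (by omega) K le_rfl h
    omega
  by_cases hreach : (Kg H c α β).Reachable x (y i0)
  · -- Plan K : flip the α/β component of y K in the rotated-to-K coloring
    have hreachk : ¬ (Kg H c α β).Reachable x (y K) := fun h =>
      not_reachable_pair (Kg H c α β) hdeg2 hdegx hdegyi hdegyk hxyi hxyk hyiyk hreach h
    set Hk := G.deleteEdges {s(x, y K)} with hHk
    have hckp : Proper Hk (rot c x y K) := rot_proper K le_rfl
    have hsubk : ∀ a b, (Kg Hk (rot c x y K) α β).Adj a b →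
        (Kg H c α β).Adj a b ∨ s(a, b) = s(x, y i0) := by
      intro a b hab
      obtain ⟨habH, habc⟩ := hab
      by_cases hfan : ∃ l, l < K ∧ s(a, b) = s(x, y l)
      · obtain ⟨l, hl, he⟩ := hfan
        rw [he, rot_fan K le_rfl l hl] at habc
        rcases habc with h | h
        · exact absurd h (hα (y (l+1)) (hHadjfan (l+1) (by omega) (by omega)))
        · right
          have hyl : y (l+1) = y j := by
            by_contra hne
            exact hc (hHadjfan (l+1) (by omega) (by omega)) hvH hne (h.trans hvβ.symm)
          have hlj := hyinj (l+1) (by omega) j (by omega) hyl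
          rw [he]
          have : l = i0 := by omega
          rw [this]
      · push_neg at hfan
        rw [rot_off K _ hfan] at habc
        rw [SimpleGraph.deleteEdges_adj] at habH
        left
        refine ⟨?_, habc⟩
        rw [hH0, SimpleGraph.deleteEdges_adj]
        refine ⟨habH.1, ?_⟩
        simp only [Set.mem_singleton_iff]
        intro h
        exact hfan 0 (by omega) h
    have hclosed : ∀ a b, (Kg Hk (rot c x y K) α β).Adj a b →
        (Kg H c α β).Reachable x a → (Kg H c α β).Reachable x b := by
      intro a b hab hra
      rcases hsubk a b hab with h | h
      · exact hra.trans h.reachable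
      · rcases Sym2.eq_iff.1 h with ⟨h1, h2⟩ | ⟨h1, h2⟩
        · subst h2; exact hreach
        · subst h2; exact SimpleGraph.Reachable.refl _
    have hnrk : ¬ (Kg Hk (rot c x y K) α β).Reachable (y K) x := by
      intro h
      apply hreachk
      obtain ⟨w⟩ := h.symm
      exact walk_closed (S := {u | (Kg H c α β).Reachable x u}) hclosed w
        (show (Kg H c α β).Reachable x x from SimpleGraph.Reachable.refl _)
    have hmyk : MissingAt Hk (kflip Hk (rot c x y K) α β (y K)) (y K) α :=
      kflip_missingAt_reached (SimpleGraph.Reachable.refl _)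
        (M2 K le_rfl β hβ)
    have hmxk : MissingAt Hk (kflip Hk (rot c x y K) α β (y K)) x α :=
      kflip_missingAt_unreached hnrk (M1 K le_rfl α hα)
    exact ⟨Function.update (kflip Hk (rot c x y K) α β (y K)) s(x, y K) α,
      proper_update_final G (hyadj K le_rfl) _ α (proper_kflip hckp) hmxk hmyk⟩
  · -- Plan i0 : flip the α/β component of y i0 in the rotated-to-i0 coloring
    set Hi := G.deleteEdges {s(x, y i0)} with hHi
    have hcip : Proper Hi (rot c x y i0) := rot_proper i0 (by omega)
    have hsub : ∀ a b, (Kg Hi (rot c x y i0) α β).Adj a b → (Kg H c α β).Adj a b := by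
      intro a b hab
      obtain ⟨habH, habc⟩ := hab
      by_cases hfan : ∃ l, l < i0 ∧ s(a, b) = s(x, y l)
      · exfalso
        obtain ⟨l, hl, he⟩ := hfan
        rw [he, rot_fan i0 (by omega) l hl] at habc
        rcases habc with h | h
        · exact hα (y (l+1)) (hHadjfan (l+1) (by omega) (by omega)) h
        · have hyl : y (l+1) = y j := by
            by_contra hne
            exact hc (hHadjfan (l+1) (by omega) (by omega)) hvH hne (h.trans hvβ.symm)
          have := hyinj (l+1) (by omega) j (by omega) hyl
          omega
      · push_neg at hfan
        rw [rot_off i0 _ hfan] at habc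
        rw [SimpleGraph.deleteEdges_adj] at habH
        refine ⟨?_, habc⟩
        rw [hH0, SimpleGraph.deleteEdges_adj]
        refine ⟨habH.1, ?_⟩
        simp only [Set.mem_singleton_iff]
        intro h
        rcases Nat.eq_zero_or_pos i0 with h0 | h0
        · rw [← h0] at h
          exact habH.2 (by simpa using h)
        · exact hfan 0 h0 h
    have hnr : ¬ (Kg Hi (rot c x y i0) α β).Reachable (y i0) x := by
      intro h
      apply hreach
      refine SimpleGraph.Reachable.symm ?_
      obtain ⟨w⟩ := h
      exact walk_closed (S := {u | (Kg H c α β).Reachable (y i0) u})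
        (fun a b hab ha => ha.trans (hsub a b hab).reachable) w
        (show (Kg H c α β).Reachable (y i0) (y i0) from SimpleGraph.Reachable.refl _)
    have hmyi : MissingAt Hi (kflip Hi (rot c x y i0) α β (y i0)) (y i0) α :=
      kflip_missingAt_reached (SimpleGraph.Reachable.refl _)
        (M2 i0 (by omega) β hβmiss_yi)
    have hmx : MissingAt Hi (kflip Hi (rot c x y i0) α β (y i0)) x α :=
      kflip_missingAt_unreached hnr (M1 i0 (by omega) α hα)
    exact ⟨Function.update (kflip Hi (rot c x y i0) α β (y i0)) s(x, y i0) α,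
      proper_update_final G (hyadj i0 (by omega)) _ α (proper_kflip hcip) hmx hmyi⟩

/-- **Vizing's theorem**: a simple graph with maximum degree at most `d` has a
proper edge coloring with `d+1` colors. -/
theorem vizing (G : SimpleGraph V) (d : ℕ) (hdeg : ∀ v, deg G v ≤ d) :
    ∃ c : Sym2 V → Fin (d+1), Proper G c := by
  suffices h : ∀ m (G : SimpleGraph V),
      (Finset.univ.filter (fun p : V × V => G.Adj p.1 p.2)).card ≤ m →
      (∀ v, deg G v ≤ d) → ∃ c : Sym2 V → Fin (d+1), Proper G c from
    h _ G le_rfl hdeg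
  intro m
  induction m with
  | zero =>
    intro G hcard _
    refine ⟨fun _ => 0, ?_⟩
    intro a b b' hab _ _
    exfalso
    have hmem : (a, b) ∈ Finset.univ.filter (fun p : V × V => G.Adj p.1 p.2) := by
      simp [hab]
    have := Finset.card_pos.2 ⟨_, hmem⟩
    omega
  | succ m ih =>
    intro G hcard hdegG
    by_cases hE : ∃ a b, G.Adj a b
    · obtain ⟨a, b, hab⟩ := hE
      set G' := G.deleteEdges {s(a, b)} with hG'
      have hle : G' ≤ G := SimpleGraph.deleteEdges_le _
      have hsub : Finset.univ.filter (fun p : V × V => G'.Adj p.1 p.2) ⊆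
          Finset.univ.filter (fun p : V × V => G.Adj p.1 p.2) := by
        intro p hp
        simp only [Finset.mem_filter, Finset.mem_univ, true_and] at hp ⊢
        exact hle hp
      have hmem : (a, b) ∈ Finset.univ.filter (fun p : V × V => G.Adj p.1 p.2) := by
        simp [hab]
      have hnot : (a, b) ∉ Finset.univ.filter (fun p : V × V => G'.Adj p.1 p.2) := by
        simp only [Finset.mem_filter, Finset.mem_univ, true_and, hG',
          SimpleGraph.deleteEdges_adj]
        intro h
        exact h.2 rfl
      have hlt : (Finset.univ.filter (fun p : V × V => G'.Adj p.1 p.2)).card <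
          (Finset.univ.filter (fun p : V × V => G.Adj p.1 p.2)).card :=
        Finset.card_lt_card ⟨hsub, fun h => hnot (h hmem)⟩
      obtain ⟨c, hc⟩ := ih G' (by convert Nat.le_of_lt_succ (lt_of_lt_of_le hlt hcard)) (fun v => le_trans (deg_le_of_le hle v) (hdegG v))
      exact extend_coloring G d hdegG hab c hc
    · push_neg at hE
      exact ⟨fun _ => 0, fun a b b' hab _ _ => absurd hab (hE a b)⟩

end MRFVizing

/-- From a proper edge coloring, pick the best color class (a matching) and build an
assignment realizing `ψ_e^U` on every edge of that matching. -/
lemma exists_matching_assignment {V S : Type*} [Fintype V] [DecidableEq V]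
    [Fintype S] [Nonempty S]
    (E : Finset (V × V))
    (hsimple : ∀ e ∈ E, e.1 ≠ e.2)
    (hnodup : ∀ e ∈ E, (e.2, e.1) ∉ E)
    (ψ : V × V → S → S → ℝ) (hψ : ∀ e a b, 0 ≤ ψ e a b)
    (dstar : ℕ)
    (hdeg : ∀ v : V, (E.filter (fun e => e.1 = v ∨ e.2 = v)).card ≤ dstar) :
    ∃ x : V → S, (1 / ((dstar : ℝ) + 1)) * ∑ e ∈ E, psiU ψ e
      ≤ ∑ e ∈ E, ψ e (x e.1) (x e.2) := by
  classical
  set G := SimpleGraph.fromRel (fun u v => (u, v) ∈ E) with hG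
  have hGadj : ∀ e ∈ E, G.Adj e.1 e.2 := by
    intro e he
    rw [hG, SimpleGraph.fromRel_adj]
    exact ⟨hsimple e he, Or.inl (by simpa using he)⟩
  have hdegG : ∀ v, MRFVizing.deg G v ≤ dstar := by
    intro v
    refine le_trans ?_ (hdeg v)
    apply Finset.card_le_card_of_injOn (fun u => if (v, u) ∈ E then (v, u) else (u, v))
    · intro u hu
      simp only [Finset.mem_coe] at hu ⊢
      simp only [Finset.mem_filter, Finset.mem_univ, true_and] at hu
      rw [hG, SimpleGraph.fromRel_adj] at hu
      rcases hu.2 with h | h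
      · rw [if_pos h]; exact Finset.mem_filter.2 ⟨h, Or.inl rfl⟩
      · by_cases h' : (v, u) ∈ E
        · rw [if_pos h']; exact Finset.mem_filter.2 ⟨h', Or.inl rfl⟩
        · rw [if_neg h']; exact Finset.mem_filter.2 ⟨h, Or.inr rfl⟩
    · intro u hu u' hu' h
      simp only [Finset.coe_filter, Finset.mem_univ, true_and, Set.mem_setOf_eq] at hu hu'
      rw [hG, SimpleGraph.fromRel_adj] at hu hu'
      have hvu : v ≠ u := hu.1
      have hvu' : v ≠ u' := hu'.1
      by_cases h1 : (v, u) ∈ E <;> by_cases h2 : (v, u') ∈ E <;>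
        simp only [if_pos, if_neg, h1, h2, if_true, if_false, Prod.mk.injEq] at h
      · exact h.2
      · exact absurd h.2.symm hvu
      · exact absurd h.1 (Ne.symm hvu)
      · exact h.1
  obtain ⟨c, hcp⟩ := MRFVizing.vizing G dstar hdegG
  -- maximizing pairs for each edge potential
  have hex : ∀ e : V × V, ∃ p : S × S, ∀ q : S × S, ψ e q.1 q.2 ≤ ψ e p.1 p.2 := by
    intro e
    obtain ⟨p, hp⟩ := Finite.exists_max (fun p : S × S => ψ e p.1 p.2)
    exact ⟨p, hp⟩
  choose pm hpm using hex
  have hpsiU : ∀ e, psiU ψ e = ψ e (pm e).1 (pm e).2 := by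
    intro e
    unfold psiU
    apply le_antisymm
    · exact ciSup_le (fun q => hpm e q)
    · exact le_ciSup (f := fun p : S × S => ψ e p.1 p.2)
        (Set.finite_range _).bddAbove (pm e)
  have hpsiU_nonneg : ∀ e, 0 ≤ psiU ψ e := by
    intro e
    rw [hpsiU]
    exact hψ _ _ _
  set W := ∑ e ∈ E, psiU ψ e with hW
  have hdpos : (0:ℝ) < (dstar:ℝ) + 1 := by positivity
  have hfib : ∑ t : Fin (dstar+1),
      ∑ e ∈ E.filter (fun e => c s(e.1, e.2) = t), psiU ψ e = W :=
    Finset.sum_fiberwise_of_maps_to (fun e _ => Finset.mem_univ _) _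
  have hex_t : ∃ t : Fin (dstar+1), W ≤ ((dstar:ℝ)+1) *
      ∑ e ∈ E.filter (fun e => c s(e.1, e.2) = t), psiU ψ e := by
    by_contra hno
    push_neg at hno
    have hlt : ∀ t : Fin (dstar+1),
        ∑ e ∈ E.filter (fun e => c s(e.1, e.2) = t), psiU ψ e < W / ((dstar:ℝ)+1) := by
      intro t
      have h := hno t
      rw [mul_comm] at h
      exact (lt_div_iff₀ hdpos).2 h
    have hsum := Finset.sum_lt_sum_of_nonempty
      (Finset.univ_nonempty (α := Fin (dstar+1))) (fun t _ => hlt t)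
    rw [hfib, Finset.sum_const, Finset.card_univ, Fintype.card_fin,
      nsmul_eq_mul] at hsum
    have : ((dstar:ℝ)+1) * (W / ((dstar:ℝ)+1)) = W := by field_simp
    rw [show ((dstar+1 : ℕ) : ℝ) = (dstar:ℝ)+1 by push_cast; ring, this] at hsum
    exact lt_irrefl _ hsum
  obtain ⟨t, ht⟩ := hex_t
  set M := E.filter (fun e => c s(e.1, e.2) = t) with hM
  have hMsub : M ⊆ E := Finset.filter_subset _ _
  -- color classes are matchings
  have hmatch : ∀ e ∈ M, ∀ f ∈ M, e ≠ f →
      e.1 ≠ f.1 ∧ e.1 ≠ f.2 ∧ e.2 ≠ f.1 ∧ e.2 ≠ f.2 := by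
    intro e he f hf hef
    obtain ⟨heE, hec⟩ := Finset.mem_filter.1 he
    obtain ⟨hfE, hfc⟩ := Finset.mem_filter.1 hf
    have hadje := hGadj e heE
    have hadjf := hGadj f hfE
    have hcc : c s(e.1, e.2) = c s(f.1, f.2) := by rw [hec, hfc]
    have hnoswap : e ≠ (f.2, f.1) := by
      intro h
      rw [h] at heE
      exact hnodup f hfE heE
    refine ⟨?_, ?_, ?_, ?_⟩
    · intro h
      have h2 : e.2 ≠ f.2 := fun h2 => hef (Prod.ext_iff.2 ⟨h, h2⟩)
      refine hcp hadje (by rw [h]; exact hadjf) h2 ?_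
      rw [hcc, h]
    · intro h
      have h2 : e.2 ≠ f.1 := fun h2 => hnoswap (Prod.ext_iff.2 ⟨h, h2⟩)
      refine hcp hadje (by rw [h]; exact hadjf.symm) h2 ?_
      rw [hcc, h, Sym2.eq_swap]
    · intro h
      have h2 : e.1 ≠ f.2 := fun h2 => hnoswap (Prod.ext_iff.2 ⟨h2, h⟩)
      refine hcp hadje.symm (by rw [h]; exact hadjf) h2 ?_
      rw [Sym2.eq_swap, hcc, h]
    · intro h
      have h2 : e.1 ≠ f.1 := fun h2 => hef (Prod.ext_iff.2 ⟨h2, h⟩)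
      refine hcp hadje.symm (by rw [h]; exact hadjf.symm) h2 ?_
      rw [Sym2.eq_swap, hcc, h, Sym2.eq_swap]
  -- the assignment
  set x : V → S := fun v =>
    if h1 : ∃ e, e ∈ M ∧ e.1 = v then (pm h1.choose).1
    else if h2 : ∃ e, e ∈ M ∧ e.2 = v then (pm h2.choose).2
    else Classical.arbitrary S with hx
  have hx1 : ∀ e ∈ M, x e.1 = (pm e).1 := by
    intro e he
    have h1 : ∃ f, f ∈ M ∧ f.1 = e.1 := ⟨e, he, rfl⟩
    have hch := h1.choose_spec
    have : h1.choose = e := by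
      by_contra hne
      exact (hmatch h1.choose hch.1 e he hne).1 hch.2
    simp only [hx]
    rw [dif_pos h1, this]
  have hx2 : ∀ e ∈ M, x e.2 = (pm e).2 := by
    intro e he
    have heE := hMsub he
    have hno1 : ¬ ∃ f, f ∈ M ∧ f.1 = e.2 := by
      rintro ⟨f, hf, hfe⟩
      by_cases hfe' : f = e
      · rw [hfe'] at hfe
        exact hsimple e heE hfe
      · exact (hmatch f hf e he hfe').2.1 hfe
    have h2 : ∃ f, f ∈ M ∧ f.2 = e.2 := ⟨e, he, rfl⟩
    have hch := h2.choose_spec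
    have : h2.choose = e := by
      by_contra hne
      exact (hmatch h2.choose hch.1 e he hne).2.2.2 hch.2
    simp only [hx]
    rw [dif_neg hno1, dif_pos h2, this]
  refine ⟨x, ?_⟩
  calc (1/((dstar:ℝ)+1)) * W
      ≤ (1/((dstar:ℝ)+1)) * (((dstar:ℝ)+1) * ∑ e ∈ M, psiU ψ e) :=
        mul_le_mul_of_nonneg_left ht (by positivity)
    _ = ∑ e ∈ M, psiU ψ e := by field_simp
    _ = ∑ e ∈ M, ψ e (x e.1) (x e.2) := by
        apply Finset.sum_congr rfl
        intro e he
        rw [hpsiU, hx1 e he, hx2 e he]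
    _ ≤ ∑ e ∈ E, ψ e (x e.1) (x e.2) :=
        Finset.sum_le_sum_of_subset_of_nonneg hMsub (fun e _ _ => hψ e _ _)

/-- For a pairwise MRF with nonnegative potentials on a graph of
maximum degree `dstar`, a MAP assignment `x*` satisfies
`H(x*) ≥ (1/(dstar+1)) ∑_E ψ_e^U ≥ (1/(dstar+1)) ∑_E (ψ_e^U − ψ_e^L)`. -/
theorem map_energy_ge {V S : Type*} [Fintype V] [DecidableEq V]
    [Fintype S] [Nonempty S]
    (E : Finset (V × V))
    (hsimple : ∀ e ∈ E, e.1 ≠ e.2)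
    (hnodup : ∀ e ∈ E, (e.2, e.1) ∉ E)
    (φ : V → S → ℝ) (ψ : V × V → S → S → ℝ)
    (hφ : ∀ v s, 0 ≤ φ v s) (hψ : ∀ e a b, 0 ≤ ψ e a b)
    (dstar : ℕ)
    (hdeg : ∀ v : V, (E.filter (fun e => e.1 = v ∨ e.2 = v)).card ≤ dstar)
    (xstar : V → S)
    (hstar : ∀ x : V → S, mrfEnergy E φ ψ x ≤ mrfEnergy E φ ψ xstar) :
    (1 / ((dstar : ℝ) + 1)) * ∑ e ∈ E, psiU ψ e ≤ mrfEnergy E φ ψ xstar ∧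
    (1 / ((dstar : ℝ) + 1)) * ∑ e ∈ E, (psiU ψ e - psiL ψ e)
        ≤ (1 / ((dstar : ℝ) + 1)) * ∑ e ∈ E, psiU ψ e := by
  have hpsiL : ∀ e ∈ E, 0 ≤ psiL ψ e := fun e _ => le_ciInf (fun p => hψ e p.1 p.2)
  constructor
  · obtain ⟨x, hx⟩ := exists_matching_assignment E hsimple hnodup ψ hψ dstar hdeg
    refine le_trans ?_ (hstar x)
    unfold mrfEnergy
    have hφsum : 0 ≤ ∑ v, φ v (x v) :=
      Finset.sum_nonneg (fun v _ => hφ v (x v))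
    linarith [hx]
  · apply mul_le_mul_of_nonneg_left ?_ (by positivity)
    apply Finset.sum_le_sum
    intro e he
    linarith [hpsiL e he]
end
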